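/- arXiv:2302.04182 — 10 statements merged into one kernel-verified Lean document; each statement's English description precedes it below -/
import Mathlib

section
/- Let T, K, d be positive integers, let q_1, …, q_T be positive real numbers, let r ∈ ℝ^K, let c ∈ ℝ^{d×K}, and let B ≥ 0. Then the supremum of Σ_{t=1}^T q_t (r^⊤ x_t) over all families (x_1, …, x_T) with each x_t in the probability simplex Δ_K satisfying Σ_{t=1}^T q_t (c x_t) ≤ B·1_d componentwise equals the supremum of (Σ_{t=1}^T q_t)(r^⊤ u) over all u ∈ Δ_K satisfying (Σ_{t=1}^T q_t)(c u) ≤ B·1_d componentwise. -/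
/-!
The two sets of attainable objective values coincide, so their suprema do. A feasible family
`x₁, …, x_T` is replaced by its `q`-weighted average `u`, which lies in the simplex by convexity;
since the constraint and the objective are linear, `(∑ q) (c u) = ∑ q_t (c x_t)` and likewise for
`r`. Conversely the constant family `x_t = u` realises the value of any feasible `u`.
-/

open Finset

theorem Finset.sum_mul_dotProduct_centerMass {R ι κ : Type*} [Field R] [Fintype κ]
    (s : Finset ι) {w : ι → R} (hw : ∑ i ∈ s, w i ≠ 0) (f : κ → R) (x : ι → κ → R) :
    (∑ i ∈ s, w i) * (f ⬝ᵥ s.centerMass w x) = ∑ i ∈ s, w i * (f ⬝ᵥ x i) := by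
  simp only [centerMass, dotProduct_smul, dotProduct_sum, smul_eq_mul]
  rw [← mul_assoc, mul_inv_cancel₀ hw, one_mul]

theorem lp_equivalence_general (T K d : ℕ) (hT : 0 < T)
    (q : Fin T → ℝ) (hq : ∀ t, 0 < q t)
    (r : Fin K → ℝ) (c : Fin d → Fin K → ℝ) (B : ℝ) :
    sSup {y : ℝ | ∃ x : Fin T → Fin K → ℝ,
        (∀ t k, 0 ≤ x t k ∧ x t k ≤ 1) ∧ (∀ t, ∑ k, x t k = 1) ∧
        (∀ i, ∑ t, q t * ∑ k, c i k * x t k ≤ B) ∧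
        y = ∑ t, q t * ∑ k, r k * x t k} =
    sSup {y : ℝ | ∃ u : Fin K → ℝ,
        (∀ k, 0 ≤ u k ∧ u k ≤ 1) ∧ (∑ k, u k = 1) ∧
        (∀ i, (∑ t, q t) * ∑ k, c i k * u k ≤ B) ∧
        y = (∑ t, q t) * ∑ k, r k * u k} := by
  have hQ : 0 < ∑ t, q t := sum_pos (fun t _ => hq t) (univ_nonempty_iff.2 ⟨⟨0, hT⟩⟩)
  have average := univ.sum_mul_dotProduct_centerMass (κ := Fin K) hQ.ne'
  congr 1
  ext y
  constructor
  · rintro ⟨x, hx01, hxsum, hxc, rfl⟩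
    have hu : univ.centerMass q x ∈ stdSimplex ℝ (Fin K) :=
      (convex_stdSimplex ℝ _).centerMass_mem (fun t _ => (hq t).le) hQ
        fun t _ => ⟨fun k => (hx01 t k).1, hxsum t⟩
    exact ⟨univ.centerMass q x, mem_Icc_of_mem_stdSimplex hu, hu.2,
      fun i => (average (c i) x).trans_le (hxc i), (average r x).symm⟩
  · rintro ⟨u, hu01, husum, huc, rfl⟩
    exact ⟨fun _ => u, fun _ => hu01, fun _ => husum,
      fun i => (sum_mul ..).symm.trans_le (huc i), sum_mul ..⟩

/-- The time-indexed LP and its aggregated single-variable relaxation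
have the same optimal value (supremum). -/
theorem lp_equivalence (T K d : ℕ) (hT : 0 < T) (hK : 0 < K) (hd : 0 < d)
    (q : Fin T → ℝ) (hq : ∀ t, 0 < q t)
    (r : Fin K → ℝ) (c : Fin d → Fin K → ℝ) (B : ℝ) (hB : 0 ≤ B) :
    sSup {y : ℝ | ∃ x : Fin T → Fin K → ℝ,
        (∀ t k, 0 ≤ x t k ∧ x t k ≤ 1) ∧ (∀ t, ∑ k, x t k = 1) ∧
        (∀ i, ∑ t, q t * ∑ k, c i k * x t k ≤ B) ∧
        y = ∑ t, q t * ∑ k, r k * x t k} =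
    sSup {y : ℝ | ∃ u : Fin K → ℝ,
        (∀ k, 0 ≤ u k ∧ u k ≤ 1) ∧ (∑ k, u k = 1) ∧
        (∀ i, (∑ t, q t) * ∑ k, c i k * u k ≤ B) ∧
        y = (∑ t, q t) * ∑ k, r k * u k} :=
  lp_equivalence_general T K d hT q hq r c B
end

section
/- Let δ ∈ (0,1), let N be a positive integer, and let V_1, …, V_N be independent random variables with values in [0,1]. Let V̂ = (1/N) Σ_{i=1}^N V_i. Then with probability at least 1 − 3δ, both |V̂ − E[V̂]| ≤ rad(V̂, N, δ) and rad(V̂, N, δ) ≤ 3 rad(E[V̂], N, δ) hold. -/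
open MeasureTheory Finset

/-- The confidence radius function rad(v, N, δ) = √(2 v log(1/δ)/N) + 4 log(1/δ)/N. -/
noncomputable def rad (v : ℝ) (N : ℕ) (δ : ℝ) : ℝ :=
  Real.sqrt (2 * v * Real.log (1 / δ) / N) + 4 * Real.log (1 / δ) / N

section Aux

lemma exp_upper_aux {x : ℝ} (h0 : 0 ≤ x) (h2 : x < 2) :
    Real.exp x ≤ 1 + x + x ^ 2 / (2 - x) := by
  have hd : (0:ℝ) < 2 - x := by linarith
  rw [← sub_le_iff_le_add', le_div_iff₀ hd]
  rcases le_or_gt x 1 with hx1 | hx1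
  · have hb := Real.exp_bound' h0 hx1 (n := 3) (by norm_num)
    have hnn : 0 ≤ Real.exp x - 1 - x := by nlinarith [Real.add_one_le_exp x]
    have h1 : Real.exp x - 1 - x ≤ x ^ 2 / 2 + 2 / 9 * x ^ 3 := by
      have hs : (∑ m ∈ Finset.range 3, x ^ m / m.factorial) = 1 + x + x ^ 2 / 2 := by
        norm_num [Finset.sum_range_succ]
      rw [hs] at hb
      norm_num [Nat.factorial] at hb
      linarith
    nlinarith [h1, hnn, sq_nonneg x, pow_nonneg h0 3, pow_nonneg h0 4]
  · set y := x - 1 with hy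
    have hy0 : 0 ≤ y := by simp only [hy]; linarith
    have hy1 : y < 1 := by simp only [hy]; linarith
    have hb := Real.exp_bound' hy0 hy1.le (n := 3) (by norm_num)
    have hsum : (∑ m ∈ Finset.range 3, y ^ m / m.factorial) = 1 + y + y ^ 2 / 2 := by
      norm_num [Finset.sum_range_succ]
    rw [hsum] at hb
    norm_num [Nat.factorial] at hb
    have hex : Real.exp x = Real.exp 1 * Real.exp y := by
      rw [← Real.exp_add]; congr 1; simp [hy]
    have he : Real.exp 1 < 2.7182818286 := Real.exp_one_lt_d9
    have he0 : 0 < Real.exp 1 := Real.exp_pos 1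
    have hq : Real.exp y ≤ 1 + y + y ^ 2 / 2 + 2 / 9 * y ^ 3 := by linarith
    have hx1y : x = 1 + y := by simp only [hy]; ring
    have hqy : (1 + y + y ^ 2 / 2 + 2 / 9 * y ^ 3) * (1 - y) ≤ 1 := by nlinarith
    have key : Real.exp x * (1 - y) ≤ Real.exp 1 := by
      calc Real.exp x * (1 - y) = Real.exp 1 * (Real.exp y * (1 - y)) := by rw [hex]; ring
        _ ≤ Real.exp 1 * 1 := by
            refine mul_le_mul_of_nonneg_left ?_ he0.le
            calc Real.exp y * (1 - y) ≤ (1 + y + y ^ 2 / 2 + 2 / 9 * y ^ 3) * (1 - y) :=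
                  mul_le_mul_of_nonneg_right hq (by linarith)
              _ ≤ 1 := hqy
        _ = Real.exp 1 := mul_one _
    nlinarith [key]

lemma exp_lower_aux {x : ℝ} (h0 : 0 ≤ x) (h2 : x < 2) :
    Real.exp (-x) ≤ 1 - x + x ^ 2 / (2 - x) := by
  have hd : (0:ℝ) < 2 - x := by linarith
  rw [← sub_le_iff_le_add', le_div_iff₀ hd]
  rcases le_or_gt x 1 with hx1 | hx1
  · have hb := Real.exp_bound (x := -x) (by rw [abs_neg, abs_of_nonneg h0]; exact hx1)
      (n := 3) (by norm_num)
    have hs : (∑ m ∈ Finset.range 3, (-x) ^ m / m.factorial) = 1 - x + x ^ 2 / 2 := by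
      norm_num [Finset.sum_range_succ]; ring
    rw [hs, abs_neg, abs_of_nonneg h0] at hb
    have h1 : Real.exp (-x) ≤ 1 - x + x ^ 2 / 2 + x ^ 3 * (4 / (6 * 3)) := by
      have := (abs_sub_le_iff.1 hb).1
      norm_num [Nat.factorial] at this ⊢
      linarith
    have hnn : 0 ≤ Real.exp (-x) - 1 + x := by nlinarith [Real.add_one_le_exp (-x)]
    nlinarith [h1, hnn, sq_nonneg x, pow_nonneg h0 3, pow_nonneg h0 4]
  · have hE : Real.exp (-x) * (1 + x) ≤ 1 := by
      have h := Real.add_one_le_exp x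
      have := Real.exp_pos x
      rw [Real.exp_neg]
      rw [inv_mul_le_iff₀ (by positivity), mul_one]
      linarith
    have hE0 : 0 < Real.exp (-x) := Real.exp_pos _
    nlinarith [mul_le_mul_of_nonneg_right hE (by linarith : (0:ℝ) ≤ 2 - x), hE0.le,
      mul_nonneg (mul_nonneg hE0.le (by linarith : (0:ℝ) ≤ 2 - x)) h0]

lemma sqrt2mul (x c : ℝ) (hx : 0 ≤ x) (_hc : 0 ≤ c) :
    Real.sqrt (2 * x * c) = Real.sqrt 2 * Real.sqrt x * Real.sqrt c := by
  rw [Real.sqrt_mul (by positivity), Real.sqrt_mul (by norm_num)]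

lemma det_lemma {v μ c : ℝ} (hv : 0 ≤ v) (hμ : 0 ≤ μ) (hc : 0 ≤ c)
    (h : |v - μ| ≤ Real.sqrt (2 * μ * c) + c) :
    |v - μ| ≤ Real.sqrt (2 * v * c) + 4 * c ∧
      Real.sqrt (2 * v * c) + 4 * c ≤ 3 * (Real.sqrt (2 * μ * c) + 4 * c) := by
  rw [sqrt2mul v c hv hc, sqrt2mul μ c hμ hc] at *
  set a := Real.sqrt v with ha'
  set mm := Real.sqrt μ with hm'
  set b := Real.sqrt c with hb'
  set r := Real.sqrt 2 with hr'
  have ha : 0 ≤ a := Real.sqrt_nonneg v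
  have hm : 0 ≤ mm := Real.sqrt_nonneg μ
  have hb : 0 ≤ b := Real.sqrt_nonneg c
  have hr0 : 0 ≤ r := Real.sqrt_nonneg 2
  have hr2 : r ^ 2 = 2 := Real.sq_sqrt (by norm_num)
  have hr15 : r ≤ 3 / 2 := by nlinarith
  have hva : v = a ^ 2 := (Real.sq_sqrt hv).symm
  have hmb : μ = mm ^ 2 := (Real.sq_sqrt hμ).symm
  have hcb : c = b ^ 2 := (Real.sq_sqrt hc).symm
  rw [hva, hmb, hcb] at h ⊢
  rw [abs_le] at h
  have claim1 : mm ≤ a + 2 * b := by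
    nlinarith [h.1, sq_nonneg (mm - a - 2*b), mul_nonneg ha hb, mul_nonneg hm hb,
      mul_nonneg ha hm, sq_nonneg (a + b), mul_nonneg (mul_nonneg hr0 hm) hb]
  have claim2 : a ≤ mm + b := by
    nlinarith [h.2, sq_nonneg (a - mm - b), mul_nonneg hm hb,
      mul_nonneg (mul_nonneg hr0 hm) hb]
  constructor
  · rw [abs_le]
    constructor
    · nlinarith [h.1, mul_le_mul_of_nonneg_left claim1 (mul_nonneg hr0 hb),
        mul_nonneg (mul_nonneg hr0 hb) hb]
    · nlinarith [h.2, mul_le_mul_of_nonneg_left claim1 (mul_nonneg hr0 hb),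
        mul_nonneg (mul_nonneg hr0 hb) hb]
  · nlinarith [mul_le_mul_of_nonneg_left claim2 (mul_nonneg hr0 hb),
      mul_nonneg (mul_nonneg hr0 hm) hb, mul_nonneg (mul_nonneg hr0 hb) hb, sq_nonneg b]

end Aux

/-- With probability at least 1 − 3δ, the empirical mean V̂ of N independent
[0,1]-valued random variables satisfies |V̂ − E[V̂]| ≤ rad(V̂, N, δ) ≤ 3 rad(E[V̂], N, δ). -/
theorem confidence_radius {Ω : Type*} [MeasurableSpace Ω] (P : Measure Ω)
    [IsProbabilityMeasure P]
    (δ : ℝ) (hδ : δ ∈ Set.Ioo (0 : ℝ) 1) (N : ℕ) (hN : 0 < N)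
    (V : Fin N → Ω → ℝ) (hmeas : ∀ i, Measurable (V i))
    (hrange : ∀ i, ∀ᵐ ω ∂P, V i ω ∈ Set.Icc (0 : ℝ) 1)
    (hindep : ProbabilityTheory.iIndepFun V P) :
    ENNReal.ofReal (1 - 3 * δ) ≤
      P {ω | |(1 / (N : ℝ)) * ∑ i, V i ω - ∫ ω', (1 / (N : ℝ)) * ∑ i, V i ω' ∂P| ≤
              rad ((1 / (N : ℝ)) * ∑ i, V i ω) N δ ∧
            rad ((1 / (N : ℝ)) * ∑ i, V i ω) N δ ≤
              3 * rad (∫ ω', (1 / (N : ℝ)) * ∑ i, V i ω' ∂P) N δ} := by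
  obtain ⟨hδ0, hδ1⟩ := hδ
  rcases le_or_gt (1 - 3 * δ) 0 with htriv | h3δ
  · rw [ENNReal.ofReal_eq_zero.2 htriv]; exact zero_le
  set L := Real.log (1 / δ) with hL'
  have hL : 0 < L := Real.log_pos (by rw [lt_div_iff₀ hδ0]; linarith)
  have hNR : (0:ℝ) < N := Nat.cast_pos.2 hN
  have hVint : ∀ i, Integrable (V i) P := by
    intro i
    refine (integrable_const (1:ℝ)).mono' (hmeas i).aestronglyMeasurable ?_
    filter_upwards [hrange i] with ω hω
    rw [Real.norm_eq_abs, abs_le]; exact ⟨by linarith [hω.1], hω.2⟩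
  have hμi0 : ∀ i, 0 ≤ ∫ ω, V i ω ∂P := fun i =>
    integral_nonneg_of_ae ((hrange i).mono fun ω hω => hω.1)
  set m := ∑ i, ∫ ω, V i ω ∂P with hm'
  have hm0 : 0 ≤ m := Finset.sum_nonneg fun i _ => hμi0 i
  set S := fun ω => ∑ i, V i ω with hS'
  have hSmeas : Measurable S := Finset.measurable_sum univ (fun i _ => hmeas i)
  have hae : ∀ᵐ ω ∂P, ∀ i, V i ω ∈ Set.Icc (0:ℝ) 1 := ae_all_iff.2 hrange
  have hIμ : (∫ ω', (1 / (N:ℝ)) * ∑ i, V i ω' ∂P) = m / N := by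
    rw [integral_const_mul, integral_finset_sum _ (fun i _ => hVint i), hm']
    ring
  rw [hIμ]
  have hradeq : ∀ v : ℝ, rad v N δ = Real.sqrt (2 * v * (L/N)) + 4 * (L/N) := by
    intro v
    rw [rad, ← hL']
    congr 1
    · congr 1; ring
    · ring
  -- a.e. implication from the concentration event to the target event
  have hdet : ∀ ω, (∀ i, V i ω ∈ Set.Icc (0:ℝ) 1) → |S ω - m| ≤ Real.sqrt (2*m*L) + L →
      ω ∈ {ω | |(1 / (N : ℝ)) * ∑ i, V i ω - m / N| ≤
              rad ((1 / (N : ℝ)) * ∑ i, V i ω) N δ ∧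
            rad ((1 / (N : ℝ)) * ∑ i, V i ω) N δ ≤ 3 * rad (m / N) N δ} := by
    intro ω hω hA
    have hv0 : 0 ≤ (1/(N:ℝ)) * ∑ i, V i ω :=
      mul_nonneg (by positivity) (Finset.sum_nonneg fun i _ => (hω i).1)
    have hcc : 0 ≤ L/(N:ℝ) := by positivity
    have hmN : 0 ≤ m/(N:ℝ) := by positivity
    have hhyp : |(1/(N:ℝ)) * ∑ i, V i ω - m/N| ≤ Real.sqrt (2*(m/N)*(L/N)) + L/N := by
      have h1 : (1/(N:ℝ)) * ∑ i, V i ω - m/N = (S ω - m)/N := by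
        simp only [hS']; ring
      rw [h1, abs_div, abs_of_pos hNR]
      have h3 : Real.sqrt (2*(m/(N:ℝ))*(L/N)) = Real.sqrt (2*m*L) / N := by
        rw [show 2*(m/(N:ℝ))*(L/N) = (2*m*L) * (1/N)^2 by ring,
          Real.sqrt_mul (by positivity), Real.sqrt_sq (by positivity)]
        ring
      rw [h3, ← add_div]
      exact (div_le_div_iff_of_pos_right hNR).2 hA
    obtain ⟨hc1, hc2⟩ := det_lemma hv0 hmN hcc hhyp
    simp only [Set.mem_setOf_eq]
    constructor
    · rw [hradeq]; exact hc1
    · rw [hradeq, hradeq ((m:ℝ)/N)]; exact hc2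
  rcases eq_or_lt_of_le hm0 with hmz | hmpos
  · -- m = 0 : all variables vanish a.e., the event is almost sure
    have hVz : ∀ i : Fin N, V i =ᵐ[P] 0 := by
      intro i
      have hz : ∫ ω, V i ω ∂P = 0 := by
        have := (Finset.sum_eq_zero_iff_of_nonneg (fun i _ => hμi0 i)).1 hmz.symm i (mem_univ i)
        exact this
      exact (integral_eq_zero_iff_of_nonneg_ae ((hrange i).mono fun ω hω => hω.1)
        (hVint i)).1 hz
    have hz : ∀ᵐ ω ∂P, ∀ i, V i ω = 0 := ae_all_iff.2 fun i => hVz i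
    have hfull : ∀ᵐ ω ∂P, |S ω - m| ≤ Real.sqrt (2*m*L) + L := by
      filter_upwards [hz] with ω hω
      have : S ω = 0 := by simp only [hS']; exact Finset.sum_eq_zero fun i _ => hω i
      rw [this, ← hmz]
      simp only [sub_zero, abs_zero]
      positivity
    calc ENNReal.ofReal (1 - 3 * δ) ≤ 1 := ENNReal.ofReal_le_one.2 (by linarith)
      _ = P Set.univ := (measure_univ).symm
      _ ≤ _ := by
          refine measure_mono_ae ?_
          filter_upwards [hae, hfull] with ω h1 h2
          intro _
          exact hdet ω h1 h2
  · -- m > 0 : Bernstein-type concentration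
    set q := Real.sqrt (2*m*L) with hq'
    have hq0 : 0 ≤ q := Real.sqrt_nonneg _
    have hq2 : q ^ 2 = 2*m*L := Real.sq_sqrt (by positivity)
    set s := q + L with hs'
    have hs0 : 0 < s := by positivity
    have hD : 0 < m + s/2 := by linarith
    set lam := s / (m + s/2) with hlam'
    have hlam0 : 0 < lam := div_pos hs0 hD
    have hlam2 : lam < 2 := by rw [hlam', div_lt_iff₀ hD]; linarith
    have hlamD : lam * (m + s/2) = s := div_mul_cancel₀ _ hD.ne'
    clear_value L m q s lam
    have hls : 2 * L ≤ lam * s := by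
      have h1 : lam * s * (m + s/2) = s * s := by
        rw [show lam * s * (m + s/2) = (lam * (m + s/2)) * s by ring, hlamD]
      rw [← mul_le_mul_iff_of_pos_right hD, h1]
      nlinarith [hq2, mul_nonneg hq0 hL.le]
    have hkey : m * lam ^ 2 * 2 = lam * s * (2 - lam) := by
      linear_combination (2*lam) * hlamD
    have h2l : 0 < 2 - lam := by linarith
    have hmlam : m * (lam ^ 2 / (2 - lam)) = lam * s / 2 := by
      rw [mul_div_assoc']
      rw [div_eq_div_iff h2l.ne' (two_ne_zero)]
      linear_combination hkey
    have hgap_up : -lam * (m + s) + m * (Real.exp lam - 1) ≤ -L := by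
      have hexp := exp_upper_aux hlam0.le hlam2
      have h1 : m * (Real.exp lam - 1) ≤ m * (lam + lam ^ 2 / (2 - lam)) :=
        mul_le_mul_of_nonneg_left (by linarith) hm0
      have h2 : m * (lam + lam ^ 2 / (2 - lam)) = m * lam + lam * s / 2 := by
        rw [mul_add, hmlam]
      have h3 : lam * (m + s) = m * lam + lam * s := by ring
      linarith [h1, h2, hls, h3]
    have hgap_lo : lam * (m - s) + m * (Real.exp (-lam) - 1) ≤ -L := by
      have hexp := exp_lower_aux hlam0.le hlam2
      have h1 : m * (Real.exp (-lam) - 1) ≤ m * (-lam + lam ^ 2 / (2 - lam)) :=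
        mul_le_mul_of_nonneg_left (by linarith) hm0
      have h2 : m * (-lam + lam ^ 2 / (2 - lam)) = -(m * lam) + lam * s / 2 := by
        rw [mul_add, hmlam]; ring
      have h3 : lam * (m - s) = m * lam - lam * s := by ring
      linarith [h1, h2, hls, h3]
    -- mgf bounds
    have hintexp : ∀ (t : ℝ) (i : Fin N), Integrable (fun ω => Real.exp (t * V i ω)) P := by
      intro t i
      refine (integrable_const (Real.exp |t|)).mono'
        (((hmeas i).const_mul t).exp).aestronglyMeasurable ?_
      filter_upwards [hrange i] with ω hω
      rw [Real.norm_eq_abs, abs_of_pos (Real.exp_pos _), Real.exp_le_exp]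
      calc t * V i ω ≤ |t| * V i ω := mul_le_mul_of_nonneg_right (le_abs_self t) hω.1
        _ ≤ |t| * 1 := mul_le_mul_of_nonneg_left hω.2 (abs_nonneg t)
        _ = |t| := mul_one _
    have hintS : ∀ t : ℝ, Integrable (fun ω => Real.exp (t * S ω)) P := by
      intro t
      refine (integrable_const (Real.exp (|t| * N))).mono'
        ((hSmeas.const_mul t).exp).aestronglyMeasurable ?_
      filter_upwards [hae] with ω hω
      rw [Real.norm_eq_abs, abs_of_pos (Real.exp_pos _), Real.exp_le_exp]
      have h1 : S ω ≤ N := by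
        calc S ω ≤ ∑ _i : Fin N, (1:ℝ) := Finset.sum_le_sum fun i _ => (hω i).2
          _ = N := by simp
      have h2 : 0 ≤ S ω := Finset.sum_nonneg fun i _ => (hω i).1
      calc t * S ω ≤ |t| * S ω := mul_le_mul_of_nonneg_right (le_abs_self t) h2
        _ ≤ |t| * N := mul_le_mul_of_nonneg_left h1 (abs_nonneg t)
    have hmgf : ∀ t : ℝ, ProbabilityTheory.mgf S P t ≤ Real.exp (m * (Real.exp t - 1)) := by
      intro t
      have hsum : ProbabilityTheory.mgf S P t = ∏ i, ProbabilityTheory.mgf (V i) P t := by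
        have h := hindep.mgf_sum hmeas univ (t := t)
        rw [← h]
        congr 1
        ext ω
        simp [hS', Finset.sum_apply]
      rw [hsum]
      calc ∏ i, ProbabilityTheory.mgf (V i) P t
          ≤ ∏ i, Real.exp ((∫ ω, V i ω ∂P) * (Real.exp t - 1)) := by
            refine Finset.prod_le_prod (fun i _ => ProbabilityTheory.mgf_nonneg) (fun i _ => ?_)
            have hb : ∀ᵐ ω ∂P, Real.exp (t * V i ω) ≤ 1 + V i ω * (Real.exp t - 1) := by
              filter_upwards [hrange i] with ω hω
              have := convexOn_exp.2 (Set.mem_univ (0:ℝ)) (Set.mem_univ t)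
                (by linarith [hω.2] : 0 ≤ 1 - V i ω) hω.1 (by ring)
              simp only [smul_eq_mul, mul_zero, zero_add, Real.exp_zero, mul_one] at this
              calc Real.exp (t * V i ω) = Real.exp (V i ω * t) := by rw [mul_comm]
                _ ≤ (1 - V i ω) * 1 + V i ω * Real.exp t := by
                    simpa using this
                _ = 1 + V i ω * (Real.exp t - 1) := by ring
            have hint2 : Integrable (fun ω => 1 + V i ω * (Real.exp t - 1)) P :=
              (integrable_const 1).add ((hVint i).mul_const _)
            calc ProbabilityTheory.mgf (V i) P t
                ≤ ∫ ω, (1 + V i ω * (Real.exp t - 1)) ∂P :=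
                  integral_mono_ae (hintexp t i) hint2 hb
              _ = 1 + (∫ ω, V i ω ∂P) * (Real.exp t - 1) := by
                  rw [integral_add (integrable_const 1) ((hVint i).mul_const _),
                    integral_const, integral_mul_const]
                  simp
              _ ≤ Real.exp ((∫ ω, V i ω ∂P) * (Real.exp t - 1)) := by
                  linarith [Real.add_one_le_exp ((∫ ω, V i ω ∂P) * (Real.exp t - 1))]
        _ = Real.exp (∑ i, (∫ ω, V i ω ∂P) * (Real.exp t - 1)) := (Real.exp_sum _ _).symm
        _ = Real.exp (m * (Real.exp t - 1)) := by rw [← Finset.sum_mul, ← hm']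
    have hexpδ : ∀ x : ℝ, x ≤ -L → Real.exp x ≤ δ := by
      intro x hx
      calc Real.exp x ≤ Real.exp (-L) := Real.exp_le_exp.2 hx
        _ = δ := by
            rw [hL', one_div, Real.log_inv, neg_neg, Real.exp_log hδ0]
    have hup : P {ω | m + s ≤ S ω} ≤ ENNReal.ofReal δ := by
      rw [ENNReal.le_ofReal_iff_toReal_le (measure_ne_top _ _) hδ0.le]
      calc (P {ω | m + s ≤ S ω}).toReal
          ≤ Real.exp (-lam * (m+s)) * ProbabilityTheory.mgf S P lam :=
            ProbabilityTheory.measure_ge_le_exp_mul_mgf (m+s) hlam0.le (hintS lam)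
        _ ≤ Real.exp (-lam * (m+s)) * Real.exp (m * (Real.exp lam - 1)) :=
            mul_le_mul_of_nonneg_left (hmgf lam) (Real.exp_pos _).le
        _ = Real.exp (-lam * (m+s) + m * (Real.exp lam - 1)) := (Real.exp_add _ _).symm
        _ ≤ δ := hexpδ _ hgap_up
    have hlo : P {ω | S ω ≤ m - s} ≤ ENNReal.ofReal δ := by
      rw [ENNReal.le_ofReal_iff_toReal_le (measure_ne_top _ _) hδ0.le]
      calc (P {ω | S ω ≤ m - s}).toReal
          ≤ Real.exp (-(-lam) * (m-s)) * ProbabilityTheory.mgf S P (-lam) :=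
            ProbabilityTheory.measure_le_le_exp_mul_mgf (m-s) (by linarith) (hintS (-lam))
        _ ≤ Real.exp (-(-lam) * (m-s)) * Real.exp (m * (Real.exp (-lam) - 1)) :=
            mul_le_mul_of_nonneg_left (hmgf (-lam)) (Real.exp_pos _).le
        _ = Real.exp (lam * (m-s) + m * (Real.exp (-lam) - 1)) := by
            rw [← Real.exp_add, neg_neg]
        _ ≤ δ := hexpδ _ hgap_lo
    set A := {ω | |S ω - m| ≤ s} with hA'
    have hAmeas : MeasurableSet A := by
      rw [hA']
      exact measurableSet_le ((hSmeas.sub measurable_const).abs) measurable_const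
    have hcompl : P Aᶜ ≤ ENNReal.ofReal δ + ENNReal.ofReal δ := by
      have hsub : Aᶜ ⊆ {ω | m + s ≤ S ω} ∪ {ω | S ω ≤ m - s} := by
        intro ω hω
        simp only [hA', Set.mem_compl_iff, Set.mem_setOf_eq, not_le] at hω
        rcases lt_abs.1 hω with h | h
        · left; simp only [Set.mem_setOf_eq]; linarith
        · right; simp only [Set.mem_setOf_eq]; linarith
      calc P Aᶜ ≤ P ({ω | m + s ≤ S ω} ∪ {ω | S ω ≤ m - s}) := measure_mono hsub
        _ ≤ P {ω | m + s ≤ S ω} + P {ω | S ω ≤ m - s} := measure_union_le _ _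
        _ ≤ _ := add_le_add hup hlo
    have hPA : ENNReal.ofReal (1 - 3*δ) ≤ P A := by
      have h1 : P A + P Aᶜ = 1 := by
        rw [measure_add_measure_compl hAmeas]
        exact measure_univ
      have h2 : ENNReal.ofReal (1-3*δ) + P Aᶜ ≤ P A + P Aᶜ := by
        rw [h1]
        calc ENNReal.ofReal (1-3*δ) + P Aᶜ
            ≤ ENNReal.ofReal (1-3*δ) + (ENNReal.ofReal δ + ENNReal.ofReal δ) :=
              add_le_add_right hcompl _
          _ = ENNReal.ofReal (1-3*δ + (δ + δ)) := by
              rw [← ENNReal.ofReal_add hδ0.le hδ0.le,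
                ← ENNReal.ofReal_add (by linarith) (by linarith)]
          _ ≤ 1 := by
              rw [← ENNReal.ofReal_one]
              exact ENNReal.ofReal_le_ofReal (by linarith)
      exact (ENNReal.add_le_add_iff_right (measure_ne_top P Aᶜ)).1 h2
    refine hPA.trans (measure_mono_ae ?_)
    filter_upwards [hae] with ω hω
    intro hmemA
    exact hdet ω hω hmemA
end

section
/- Let x ≥ 0 and let X_1, …, X_n be independent random variables with values in [0,1]. Set X = Σ_{i=1}^n X_i, Var(X) = Σ_{i=1}^n Var(X_i), and let V_n = Σ_{i=1}^n (X_i − E[X_i])² (a random variable). Then with probability at least 1 − 3e^{−x}, √(Var(X)) ≤ √(V_n) + 2√x. -/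
open MeasureTheory Finset


lemma aux_exp_neg_le {u : ℝ} (hu : 0 ≤ u) : Real.exp (-u) ≤ 1 - u + u ^ 2 / 2 := by
  have key : MonotoneOn (fun y : ℝ => 1 - y + y ^ 2 / 2 - Real.exp (-y)) (Set.Ici 0) := by
    have hd : ∀ y : ℝ, HasDerivAt (fun y : ℝ => 1 - y + y ^ 2 / 2 - Real.exp (-y))
        (-1 + y + Real.exp (-y)) y := by
      intro y
      have h1 : HasDerivAt (fun y : ℝ => Real.exp (-y)) (-Real.exp (-y)) y := by
        simpa using (hasDerivAt_neg y).exp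
      have h2 : HasDerivAt (fun y : ℝ => 1 - y + y ^ 2 / 2) (-1 + y) y := by
        have := ((hasDerivAt_id y).const_sub 1).add ((hasDerivAt_pow 2 y).div_const 2)
        exact this.congr_deriv (by ring)
      have := h2.sub h1
      exact this.congr_deriv (by ring)
    apply monotoneOn_of_deriv_nonneg (convex_Ici 0)
    · exact (Continuous.continuousOn (by continuity))
    · intro y _; exact (hd y).differentiableAt.differentiableWithinAt
    · intro y hy
      rw [(hd y).deriv]
      have := Real.add_one_le_exp (-y)
      linarith
  have h0 : (0:ℝ) ∈ Set.Ici (0:ℝ) := Set.mem_Ici.2 (le_refl 0)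
  have := key h0 (Set.mem_Ici.2 hu) hu
  simp at this
  linarith [this]

lemma aux_mgf_le {Ω : Type*} [MeasurableSpace Ω] (P : Measure Ω) [IsProbabilityMeasure P]
    (Y : Ω → ℝ) (hY : Measurable Y) (hb : ∀ᵐ ω ∂P, Y ω ∈ Set.Icc (0:ℝ) 1)
    (l : ℝ) (hl : 0 ≤ l) :
    ProbabilityTheory.mgf Y P (-l) ≤
      Real.exp (l ^ 2 * (∫ ω, Y ω ∂P) / 2 - l * ∫ ω, Y ω ∂P) := by
  set m := ∫ ω, Y ω ∂P with hm
  have hYint : Integrable Y P := by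
    refine (integrable_const (1:ℝ)).mono' hY.aestronglyMeasurable ?_
    filter_upwards [hb] with ω hω
    rw [Real.norm_eq_abs, abs_le]; constructor <;> linarith [hω.1, hω.2]
  have hY2int : Integrable (fun ω => Y ω ^ 2) P := by
    refine (integrable_const (1:ℝ)).mono' (hY.pow_const 2).aestronglyMeasurable ?_
    filter_upwards [hb] with ω hω
    rw [Real.norm_eq_abs, abs_le]
    constructor <;> nlinarith [hω.1, hω.2]
  have hquadint : Integrable (fun ω => 1 - l * Y ω + l ^ 2 / 2 * Y ω ^ 2) P :=
    ((integrable_const 1).sub (hYint.const_mul l)).add (hY2int.const_mul (l ^ 2 / 2))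
  have hexpint : Integrable (fun ω => Real.exp (-l * Y ω)) P := by
    refine (integrable_const (1:ℝ)).mono'
      ((hY.const_mul (-l)).exp).aestronglyMeasurable ?_
    filter_upwards [hb] with ω hω
    rw [Real.norm_eq_abs, abs_of_pos (Real.exp_pos _)]
    refine Real.exp_le_one_iff.2 ?_
    have : 0 ≤ l * Y ω := mul_nonneg hl hω.1
    linarith
  have step1 : ProbabilityTheory.mgf Y P (-l) ≤
      ∫ ω, (1 - l * Y ω + l ^ 2 / 2 * Y ω ^ 2) ∂P := by
    rw [ProbabilityTheory.mgf]
    refine integral_mono_ae (by simpa [neg_mul] using hexpint) hquadint ?_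
    filter_upwards [hb] with ω hω
    have h := aux_exp_neg_le (mul_nonneg hl hω.1)
    calc Real.exp (-l * Y ω) = Real.exp (-(l * Y ω)) := by ring_nf
      _ ≤ 1 - l * Y ω + (l * Y ω) ^ 2 / 2 := h
      _ = 1 - l * Y ω + l ^ 2 / 2 * Y ω ^ 2 := by ring
  have step2 : ∫ ω, (1 - l * Y ω + l ^ 2 / 2 * Y ω ^ 2) ∂P =
      1 - l * m + l ^ 2 / 2 * ∫ ω, Y ω ^ 2 ∂P := by
    have e1 : ∫ ω, (1 - l * Y ω + l ^ 2 / 2 * Y ω ^ 2) ∂P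
        = (∫ ω, (1 - l * Y ω) ∂P) + ∫ ω, l ^ 2 / 2 * Y ω ^ 2 ∂P :=
      integral_add ((integrable_const 1).sub (hYint.const_mul l))
        (hY2int.const_mul (l ^ 2 / 2))
    have e2 : ∫ ω, (1 - l * Y ω) ∂P = (∫ _, (1:ℝ) ∂P) - ∫ ω, l * Y ω ∂P :=
      integral_sub (integrable_const 1) (hYint.const_mul l)
    rw [e1, e2, integral_const_mul, integral_const_mul, integral_const]
    simp [hm]
  have step3 : ∫ ω, Y ω ^ 2 ∂P ≤ m := by
    refine integral_mono_ae hY2int hYint ?_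
    filter_upwards [hb] with ω hω
    nlinarith [hω.1, hω.2]
  have step4 : 1 - l * m + l ^ 2 / 2 * ∫ ω, Y ω ^ 2 ∂P ≤ 1 + (l ^ 2 * m / 2 - l * m) := by
    have := mul_le_mul_of_nonneg_left step3 (by positivity : (0:ℝ) ≤ l ^ 2 / 2)
    linarith
  calc ProbabilityTheory.mgf Y P (-l) ≤ 1 + (l ^ 2 * m / 2 - l * m) := by
        refine step1.trans (step2.le.trans step4)
    _ ≤ Real.exp (l ^ 2 * m / 2 - l * m) := by linarith [Real.add_one_le_exp (l ^ 2 * m / 2 - l * m)]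

/-- For independent [0,1]-valued random variables X_1, …, X_n, with probability
at least 1 − 3e^{−x}, √(Var(X)) ≤ √(V_n) + 2√x, where Var(X) = Σ Var(X_i) and
V_n = Σ (X_i − E[X_i])² is the (random) empirical sum of squared deviations. -/
theorem variance_estimate {Ω : Type*} [MeasurableSpace Ω] (P : Measure Ω)
    [IsProbabilityMeasure P]
    (x : ℝ) (hx : 0 ≤ x) (n : ℕ)
    (X : Fin n → Ω → ℝ) (hmeas : ∀ i, Measurable (X i))
    (hrange : ∀ i, ∀ᵐ ω ∂P, X i ω ∈ Set.Icc (0 : ℝ) 1)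
    (hindep : ProbabilityTheory.iIndepFun X P) :
    ENNReal.ofReal (1 - 3 * Real.exp (-x)) ≤
      P {ω | Real.sqrt (∑ i, ProbabilityTheory.variance (X i) P) ≤
              Real.sqrt (∑ i, (X i ω - ∫ ω', X i ω' ∂P) ^ 2) + 2 * Real.sqrt x} := by
  classical
  by_cases htriv : 1 - 3 * Real.exp (-x) ≤ 0
  · rw [ENNReal.ofReal_of_nonpos htriv]; exact zero_le
  push_neg at htriv
  have hxpos : 0 < x := by
    rcases lt_or_eq_of_le hx with h | h
    · exact h
    · exfalso; rw [← h] at htriv; rw [neg_zero, Real.exp_zero] at htriv; linarith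
  -- notation
  set Yf : Fin n → Ω → ℝ := fun i ω => (X i ω - ∫ ω', X i ω' ∂P) ^ 2 with hYf
  set V : Ω → ℝ := fun ω => ∑ i, Yf i ω with hVdef
  have hmi : ∀ i, Measurable (Yf i) := fun i => ((hmeas i).sub_const _).pow_const 2
  have hXint : ∀ i, Integrable (X i) P := by
    intro i
    refine (integrable_const (1:ℝ)).mono' (hmeas i).aestronglyMeasurable ?_
    filter_upwards [hrange i] with ω hω
    rw [Real.norm_eq_abs, abs_le]; exact ⟨by linarith [hω.1], hω.2⟩
  have hm01 : ∀ i, (∫ ω', X i ω' ∂P) ∈ Set.Icc (0:ℝ) 1 := by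
    intro i
    constructor
    · exact integral_nonneg_of_ae ((hrange i).mono fun ω hω => hω.1)
    · calc (∫ ω', X i ω' ∂P) ≤ ∫ _, (1:ℝ) ∂P :=
            integral_mono_ae (hXint i) (integrable_const 1) ((hrange i).mono fun ω hω => hω.2)
        _ = 1 := by simp
  have hYrange : ∀ i, ∀ᵐ ω ∂P, Yf i ω ∈ Set.Icc (0:ℝ) 1 := by
    intro i
    filter_upwards [hrange i] with ω hω
    refine ⟨sq_nonneg _, ?_⟩
    have h1 := (hm01 i).1; have h2 := (hm01 i).2
    show (X i ω - ∫ ω', X i ω' ∂P) ^ 2 ≤ 1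
    nlinarith [hω.1, hω.2]
  have hvar : ∀ i, ProbabilityTheory.variance (X i) P = ∫ ω, Yf i ω ∂P := by
    intro i
    have hmem : MemLp (X i) 2 P :=
      memLp_of_bounded (hrange i) (hmeas i).aestronglyMeasurable 2
    refine (ProbabilityTheory.variance_eq_integral (hmeas i).aemeasurable).trans ?_
    apply integral_congr_ae
    filter_upwards with ω
    simp [hYf]
  set S : ℝ := ∑ i, ProbabilityTheory.variance (X i) P with hSdef
  have hS0 : 0 ≤ S := Finset.sum_nonneg fun i _ => ProbabilityTheory.variance_nonneg _ _
  show ENNReal.ofReal (1 - 3 * Real.exp (-x)) ≤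
      P {ω | Real.sqrt S ≤ Real.sqrt (V ω) + 2 * Real.sqrt x}
  have hsqrt2x : Real.sqrt (2 * x) ≤ 2 * Real.sqrt x := by
    rw [Real.sqrt_mul (by norm_num : (0:ℝ) ≤ 2)]
    have h2 : Real.sqrt 2 ≤ 2 := by
      nlinarith [Real.sq_sqrt (by norm_num : (0:ℝ) ≤ 2), Real.sqrt_nonneg 2]
    exact mul_le_mul_of_nonneg_right h2 (Real.sqrt_nonneg x)
  by_cases hcase : S ≤ 2 * x
  · have huniv : {ω | Real.sqrt S ≤ Real.sqrt (V ω) + 2 * Real.sqrt x} = Set.univ := by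
      apply Set.eq_univ_of_forall
      intro ω
      have h1 : Real.sqrt S ≤ Real.sqrt (2 * x) := Real.sqrt_le_sqrt hcase
      have h2 : (0:ℝ) ≤ Real.sqrt (V ω) := Real.sqrt_nonneg _
      simp only [Set.mem_setOf_eq]
      linarith [hsqrt2x]
    rw [huniv, measure_univ]
    exact ENNReal.ofReal_le_one.2 (by linarith [Real.exp_pos (-x)])
  push_neg at hcase
  have hSpos : 0 < S := lt_trans (by linarith) hcase
  set t := Real.sqrt (2 * S * x) with htdef
  have ht0 : 0 ≤ t := Real.sqrt_nonneg _
  have htsq : t ^ 2 = 2 * S * x := Real.sq_sqrt (by positivity)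
  have htS : t ≤ S := by
    nlinarith [htsq, hcase, hSpos]
  set l := t / S with hldef
  have hl0 : 0 ≤ l := div_nonneg ht0 hS0
  have hVmeas : Measurable V := Finset.measurable_sum _ fun i _ => hmi i
  have hVnonneg : ∀ ω, 0 ≤ V ω := fun ω => Finset.sum_nonneg fun i _ => sq_nonneg _
  have hA : MeasurableSet {ω | V ω ≤ S - t} := measurableSet_le hVmeas measurable_const
  have hint : Integrable (fun ω => Real.exp (-l * V ω)) P := by
    refine (integrable_const (1:ℝ)).mono' ((hVmeas.const_mul (-l)).exp).aestronglyMeasurable ?_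
    filter_upwards with ω
    rw [Real.norm_eq_abs, abs_of_pos (Real.exp_pos _)]
    refine Real.exp_le_one_iff.2 ?_
    have := mul_nonneg hl0 (hVnonneg ω)
    linarith
  -- Chernoff bound
  have chern : (P {ω | V ω ≤ S - t}).toReal ≤ Real.exp (-x) := by
    have h1 := ProbabilityTheory.measure_le_le_exp_mul_mgf (X := V) (μ := P) (t := -l)
      (S - t) (neg_nonpos.2 hl0) hint
    have hYindep : ProbabilityTheory.iIndepFun Yf P := by
      have := hindep.comp (fun i => fun y => (y - ∫ ω', X i ω' ∂P) ^ 2)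
        (fun i => (measurable_id.sub_const _).pow_const 2)
      exact this
    have hVeq : V = ∑ i, Yf i := by ext ω; simp [hVdef, Finset.sum_apply]
    have hmgf : ProbabilityTheory.mgf V P (-l) = ∏ i, ProbabilityTheory.mgf (Yf i) P (-l) := by
      rw [hVeq]; exact hYindep.mgf_sum hmi Finset.univ
    have hprod : ∏ i, ProbabilityTheory.mgf (Yf i) P (-l) ≤
        ∏ i, Real.exp (l ^ 2 * (∫ ω, Yf i ω ∂P) / 2 - l * ∫ ω, Yf i ω ∂P) :=
      Finset.prod_le_prod (fun i _ => ProbabilityTheory.mgf_nonneg)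
        (fun i _ => aux_mgf_le P (Yf i) (hmi i) (hYrange i) l hl0)
    have hsum : ∑ i, (l ^ 2 * (∫ ω, Yf i ω ∂P) / 2 - l * ∫ ω, Yf i ω ∂P)
        = l ^ 2 * S / 2 - l * S := by
      simp_rw [← hvar]
      rw [Finset.sum_sub_distrib, ← Finset.sum_div, ← Finset.mul_sum, ← Finset.mul_sum, ← hSdef]
    have hexp : Real.exp (-(-l) * (S - t)) * Real.exp (l ^ 2 * S / 2 - l * S)
        = Real.exp (-x) := by
      rw [← Real.exp_add]
      congr 1
      have hSne : S ≠ 0 := ne_of_gt hSpos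
      rw [hldef]
      field_simp
      nlinarith [htsq]
    calc (P {ω | V ω ≤ S - t}).toReal
        ≤ Real.exp (-(-l) * (S - t)) * ProbabilityTheory.mgf V P (-l) := h1
      _ ≤ Real.exp (-(-l) * (S - t)) * Real.exp (l ^ 2 * S / 2 - l * S) := by
          refine mul_le_mul_of_nonneg_left ?_ (Real.exp_pos _).le
          rw [hmgf]
          exact hprod.trans_eq (by rw [← Real.exp_sum, hsum])
      _ = Real.exp (-x) := hexp
  -- deterministic inclusion
  have hsub : {ω | V ω ≤ S - t}ᶜ ⊆
      {ω | Real.sqrt S ≤ Real.sqrt (V ω) + 2 * Real.sqrt x} := by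
    intro ω hω
    simp only [Set.mem_compl_iff, Set.mem_setOf_eq, not_le] at hω ⊢
    have hVω : S - t ≤ V ω := hω.le
    set u := Real.sqrt S with hu
    set w := Real.sqrt (2 * x) with hw
    have hu2 : u ^ 2 = S := Real.sq_sqrt hS0
    have hw2 : w ^ 2 = 2 * x := Real.sq_sqrt (by positivity)
    have hwu : w ≤ u := Real.sqrt_le_sqrt hcase.le
    have htuw : t = u * w := by
      rw [htdef, hu, hw, show 2 * S * x = S * (2 * x) by ring, Real.sqrt_mul hS0]
    have hSt0 : 0 ≤ S - t := by linarith
    have hs0 : Real.sqrt (S - t) ^ 2 = S - t := Real.sq_sqrt hSt0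
    have hkey : u - w ≤ Real.sqrt (S - t) := by
      have h1 : (u - w) ^ 2 ≤ Real.sqrt (S - t) ^ 2 := by
        rw [hs0, htuw, ← hu2]
        nlinarith [Real.sqrt_nonneg (2 * x), Real.sqrt_nonneg S]
      calc u - w = Real.sqrt ((u - w) ^ 2) :=
            (Real.sqrt_sq (by linarith)).symm
        _ ≤ Real.sqrt (Real.sqrt (S - t) ^ 2) := Real.sqrt_le_sqrt h1
        _ = Real.sqrt (S - t) := Real.sqrt_sq (Real.sqrt_nonneg _)
    have hmono : Real.sqrt (S - t) ≤ Real.sqrt (V ω) := Real.sqrt_le_sqrt hVω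
    have : u ≤ Real.sqrt (V ω) + w := by linarith
    linarith [hsqrt2x]
  -- measure algebra
  have hPA : P {ω | V ω ≤ S - t} ≤ ENNReal.ofReal (Real.exp (-x)) := by
    rw [← ENNReal.ofReal_toReal (measure_ne_top P _)]
    exact ENNReal.ofReal_le_ofReal chern
  calc ENNReal.ofReal (1 - 3 * Real.exp (-x))
      ≤ ENNReal.ofReal (1 - Real.exp (-x)) :=
        ENNReal.ofReal_le_ofReal (by linarith [Real.exp_pos (-x)])
    _ = 1 - ENNReal.ofReal (Real.exp (-x)) := by
        rw [ENNReal.ofReal_sub _ (Real.exp_pos (-x)).le, ENNReal.ofReal_one]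
    _ ≤ 1 - P {ω | V ω ≤ S - t} := tsub_le_tsub_left hPA 1
    _ = P {ω | V ω ≤ S - t}ᶜ := (prob_compl_eq_one_sub hA).symm
    _ ≤ P {ω | Real.sqrt S ≤ Real.sqrt (V ω) + 2 * Real.sqrt x} := measure_mono hsub
end

section
/- Let x ≥ 0 and let X_1, …, X_n be independent random variables with values in [0,1]. Set X = Σ_{i=1}^n X_i. Then with probability at least 1 − 3e^{−x}, |X − E[X]| ≤ √(2 X x) + 4x, where the X inside the square root is the random sum itself. -/
open MeasureTheory Finset ProbabilityTheory Real

lemma aux_exp_neg_quad {s : ℝ} (hs : 0 ≤ s) : Real.exp (-s) ≤ 1 - s + s^2/2 := by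
  have h1 : 1 + s + s^2/2 ≤ Real.exp s := by
    have := Real.sum_le_exp_of_nonneg hs 3
    simp [Finset.sum_range_succ] at this
    nlinarith [this]
  have h2 : Real.exp (-s) * Real.exp s = 1 := by
    rw [← Real.exp_add]; simp
  have h3 : (0:ℝ) < Real.exp s := Real.exp_pos s
  nlinarith [sq_nonneg (s^2), Real.exp_pos (-s)]

lemma aux_two_sub_exp {s : ℝ} (hs : 0 ≤ s) : (2 - s) * Real.exp s ≤ 2 + s := by
  have key : MonotoneOn (fun t : ℝ => (2 + t) * Real.exp (-t) - (2 - t)) (Set.Ici 0) := by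
    have hd : ∀ t : ℝ, HasDerivAt (fun t : ℝ => (2 + t) * Real.exp (-t) - (2 - t))
        (1 * Real.exp (-t) + (2 + t) * (Real.exp (-t) * (-1)) - (-1)) t := by
      intro t
      have hexp : HasDerivAt (fun t : ℝ => Real.exp (-t)) (Real.exp (-t) * (-1)) t :=
        (Real.hasDerivAt_exp (-t)).comp t (hasDerivAt_neg t)
      have h1 : HasDerivAt (fun t : ℝ => 2 + t) 1 t := by
        simpa using (hasDerivAt_id t).const_add 2
      have h2 : HasDerivAt (fun t : ℝ => 2 - t) (-1) t := by
        exact (hasDerivAt_id' t).const_sub 2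
      exact (h1.mul hexp).sub h2
    apply monotoneOn_of_deriv_nonneg (convex_Ici 0)
    · exact (Continuous.continuousOn (by continuity))
    · intro t ht
      exact (hd t).differentiableAt.differentiableWithinAt
    · intro t ht
      rw [(hd t).deriv]
      have ht0 : 0 < t := by simpa using ht
      have : (1 + t) * Real.exp (-t) ≤ 1 := by
        have := Real.add_one_le_exp t
        have h2 : Real.exp (-t) * Real.exp t = 1 := by rw [← Real.exp_add]; simp
        nlinarith [Real.exp_pos (-t)]
      nlinarith [Real.exp_pos (-t)]
  have h0 : (0:ℝ) ≤ (2 + s) * Real.exp (-s) - (2 - s) := by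
    have := key (Set.self_mem_Ici) (by exact hs : s ∈ Set.Ici 0) hs
    simpa using this
  have h2 : Real.exp (-s) * Real.exp s = 1 := by rw [← Real.exp_add]; simp
  nlinarith [Real.exp_pos (-s), Real.exp_pos s]

lemma aux_sqrt {m X x : ℝ} (hm : 0 ≤ m) (hx : 0 ≤ x)
    (h : m ≤ X + Real.sqrt (2*m*x)) : Real.sqrt (2*m*x) ≤ Real.sqrt (2*X*x) + 2*x := by
  set a := Real.sqrt (2*m*x) with ha
  have ha0 : 0 ≤ a := Real.sqrt_nonneg _
  have ha2 : a^2 = 2*m*x := Real.sq_sqrt (by positivity)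
  rcases le_or_gt 0 (2*X*x) with hX | hX
  · set b := Real.sqrt (2*X*x) with hb
    have hb0 : 0 ≤ b := Real.sqrt_nonneg _
    have hb2 : b^2 = 2*X*x := Real.sq_sqrt hX
    -- a^2 = 2mx ≤ 2(X+a)x = b^2 + 2ax
    have key : a^2 ≤ b^2 + 2*x*a := by nlinarith
    nlinarith [sq_nonneg (a - b - 2*x), mul_nonneg hb0 hx, mul_nonneg ha0 hx]
  · have hxpos : 0 < x := by
      rcases hx.eq_or_lt with h0 | h0
      · exfalso; nlinarith
      · exact h0
    have hXneg : X < 0 := by nlinarith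
    have hsqrt0 : Real.sqrt (2*X*x) = 0 := Real.sqrt_eq_zero_of_nonpos (by nlinarith)
    rw [hsqrt0]
    -- m ≤ X + a < a, so a^2 = 2mx < 2ax, a < 2x (or a = 0)
    rcases ha0.eq_or_lt with h0 | h0
    · nlinarith
    · nlinarith

set_option maxHeartbeats 1000000 in
/-- For independent [0,1]-valued random variables X_1, …, X_n, with probability
at least 1 − 3e^{−x}, |X − E[X]| ≤ √(2 X x) + 4x, where X = Σ X_i is the random sum itself. -/
theorem empirical_bernstein {Ω : Type*} [MeasurableSpace Ω] (P : Measure Ω)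
    [IsProbabilityMeasure P]
    (x : ℝ) (hx : 0 ≤ x) (n : ℕ)
    (X : Fin n → Ω → ℝ) (hmeas : ∀ i, Measurable (X i))
    (hrange : ∀ i, ∀ᵐ ω ∂P, X i ω ∈ Set.Icc (0 : ℝ) 1)
    (hindep : ProbabilityTheory.iIndepFun X P) :
    ENNReal.ofReal (1 - 3 * Real.exp (-x)) ≤
      P {ω | |(∑ i, X i ω) - ∫ ω', ∑ i, X i ω' ∂P| ≤
              Real.sqrt (2 * (∑ i, X i ω) * x) + 4 * x} := by
  by_cases htriv : 1 - 3 * Real.exp (-x) ≤ 0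
  · rw [ENNReal.ofReal_eq_zero.2 htriv]; exact zero_le
  push_neg at htriv
  -- basic integrability
  have hXint : ∀ i, Integrable (X i) P := by
    intro i
    refine (integrable_const (1:ℝ)).mono' (hmeas i).aestronglyMeasurable ?_
    filter_upwards [hrange i] with ω hω
    rw [Real.norm_eq_abs, abs_of_nonneg hω.1]; exact hω.2
  set F : Ω → ℝ := fun ω => ∑ i, X i ω with hF
  have hFmeas : Measurable F := by
    apply Finset.measurable_sum
    intro i _; exact hmeas i
  have hFint : Integrable F P := integrable_finset_sum _ (fun i _ => hXint i)
  set μ : ℝ := ∫ ω', F ω' ∂P with hμdef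
  have hμ_eq : μ = ∑ i, ∫ ω, X i ω ∂P := integral_finset_sum univ (fun i _ => hXint i)
  have hp : ∀ i, 0 ≤ ∫ ω, X i ω ∂P := fun i =>
    integral_nonneg_of_ae ((hrange i).mono fun ω h => h.1)
  have hμ0 : 0 ≤ μ := hμ_eq ▸ Finset.sum_nonneg fun i _ => hp i
  -- per-variable mgf bound
  have hmgf_i : ∀ i (u : ℝ), mgf (X i) P u ≤ Real.exp ((Real.exp u - 1) * ∫ ω, X i ω ∂P) := by
    intro i u
    have hpt : ∀ᵐ ω ∂P, Real.exp (u * X i ω) ≤ 1 + (Real.exp u - 1) * X i ω := by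
      filter_upwards [hrange i] with ω hω
      have hy := hω.1; have hy1 := hω.2
      have hconv := convexOn_exp.2 (Set.mem_univ u) (Set.mem_univ (0:ℝ)) hy
        (by linarith : (0:ℝ) ≤ 1 - X i ω) (by ring)
      simp only [smul_eq_mul, mul_zero, add_zero, Real.exp_zero, mul_one] at hconv
      calc Real.exp (u * X i ω) = Real.exp (X i ω * u) := by rw [mul_comm]
        _ ≤ X i ω * Real.exp u + (1 - X i ω) := hconv
        _ = 1 + (Real.exp u - 1) * X i ω := by ring
    have hint1 : Integrable (fun ω => Real.exp (u * X i ω)) P := by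
      refine (integrable_const (Real.exp |u|)).mono'
        ((hmeas i).const_mul u).exp.aestronglyMeasurable ?_
      filter_upwards [hrange i] with ω hω
      rw [Real.norm_eq_abs, abs_of_pos (Real.exp_pos _)]
      apply Real.exp_le_exp.2
      calc u * X i ω ≤ |u * X i ω| := le_abs_self _
        _ = |u| * |X i ω| := abs_mul _ _
        _ ≤ |u| * 1 := by
            apply mul_le_mul_of_nonneg_left _ (abs_nonneg u)
            rw [abs_of_nonneg hω.1]; exact hω.2
        _ = |u| := mul_one _
    have hint2 : Integrable (fun ω => 1 + (Real.exp u - 1) * X i ω) P :=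
      (integrable_const 1).add ((hXint i).const_mul _)
    calc mgf (X i) P u = ∫ ω, Real.exp (u * X i ω) ∂P := rfl
      _ ≤ ∫ ω, (1 + (Real.exp u - 1) * X i ω) ∂P := integral_mono_ae hint1 hint2 hpt
      _ = 1 + (Real.exp u - 1) * ∫ ω, X i ω ∂P := by
          rw [integral_add (integrable_const 1) ((hXint i).const_mul _),
            integral_const, integral_const_mul]
          simp
      _ ≤ Real.exp ((Real.exp u - 1) * ∫ ω, X i ω ∂P) := by
          rw [add_comm]; exact Real.add_one_le_exp _
  -- mgf of the sum
  have hmgfF : ∀ u : ℝ, mgf F P u ≤ Real.exp ((Real.exp u - 1) * μ) := by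
    intro u
    have hFsum : F = ∑ i, X i := by funext ω; rw [hF]; simp
    calc mgf F P u = ∏ i, mgf (X i) P u := by rw [hFsum]; exact hindep.mgf_sum hmeas univ
      _ ≤ ∏ i : Fin n, Real.exp ((Real.exp u - 1) * ∫ ω, X i ω ∂P) :=
          Finset.prod_le_prod (fun i _ => mgf_nonneg) (fun i _ => hmgf_i i u)
      _ = Real.exp (∑ i, (Real.exp u - 1) * ∫ ω, X i ω ∂P) := (Real.exp_sum _ _).symm
      _ = Real.exp ((Real.exp u - 1) * μ) := by rw [← Finset.mul_sum, ← hμ_eq]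
  -- integrability of exp(u * F)
  have hintF : ∀ u : ℝ, Integrable (fun ω => Real.exp (u * F ω)) P := by
    intro u
    refine (integrable_const (Real.exp (|u| * n))).mono'
      (hFmeas.const_mul u).exp.aestronglyMeasurable ?_
    have hall : ∀ᵐ ω ∂P, ∀ i, X i ω ∈ Set.Icc (0:ℝ) 1 := ae_all_iff.2 hrange
    filter_upwards [hall] with ω hω
    rw [Real.norm_eq_abs, abs_of_pos (Real.exp_pos _)]
    apply Real.exp_le_exp.2
    have hF0 : 0 ≤ F ω := Finset.sum_nonneg fun i _ => (hω i).1
    have hFn : F ω ≤ n := by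
      calc F ω ≤ ∑ _i : Fin n, (1:ℝ) := Finset.sum_le_sum fun i _ => (hω i).2
        _ = n := by simp
    calc u * F ω ≤ |u * F ω| := le_abs_self _
      _ = |u| * F ω := by rw [abs_mul, abs_of_nonneg hF0]
      _ ≤ |u| * n := mul_le_mul_of_nonneg_left hFn (abs_nonneg u)
  -- the mean
  rcases hμ0.eq_or_lt with hμz | hμpos
  · -- μ = 0 : all X i are a.e. zero
    have hFz : ∀ᵐ ω ∂P, F ω = 0 := by
      have hzero : ∀ i : Fin n, ∀ᵐ ω ∂P, X i ω = 0 := by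
        intro i
        have hpi : ∫ ω, X i ω ∂P = 0 := by
          have hsum0 : ∑ i : Fin n, ∫ ω, X i ω ∂P = 0 := by rw [← hμ_eq]; exact hμz.symm
          have := (Finset.sum_eq_zero_iff_of_nonneg (fun i _ => hp i)).1 hsum0
          exact this i (mem_univ i)
        have h0 := (integral_eq_zero_iff_of_nonneg_ae
          ((hrange i).mono fun ω h => h.1) (hXint i)).1 hpi
        filter_upwards [h0] with ω hω using hω
      have hall : ∀ᵐ ω ∂P, ∀ i, X i ω = 0 := ae_all_iff.2 hzero
      filter_upwards [hall] with ω hω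
      rw [hF]; exact Finset.sum_eq_zero fun i _ => hω i
    have hae_mem : ∀ᵐ ω ∂P, ω ∈ {ω | |(∑ i, X i ω) - μ| ≤
        Real.sqrt (2 * (∑ i, X i ω) * x) + 4 * x} := by
      filter_upwards [hFz] with ω hω
      have hFω : (∑ i, X i ω) = F ω := rfl
      rw [hFω, hω, ← hμz]
      simp only [sub_zero, abs_zero]
      positivity
    calc ENNReal.ofReal (1 - 3 * Real.exp (-x)) ≤ 1 :=
          ENNReal.ofReal_le_one.2 (by nlinarith [Real.exp_pos (-x)])
      _ = P Set.univ := measure_univ.symm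
      _ ≤ _ := measure_mono_ae (by filter_upwards [hae_mem] with ω hω _ using hω)
  · -- μ > 0 : the main case
    set t₀ : ℝ := Real.sqrt (2*μ*x) with ht₀def
    have ht₀0 : 0 ≤ t₀ := Real.sqrt_nonneg _
    have ht₀2 : t₀^2 = 2*μ*x := Real.sq_sqrt (by positivity)
    set t₁ : ℝ := t₀ + 2*x with ht₁def
    have ht₁0 : 0 ≤ t₁ := by linarith
    set A := {ω | μ + t₁ ≤ F ω} with hAdef
    set B := {ω | t₀ - μ ≤ -F ω} with hBdef
    have hAmeas : MeasurableSet A := measurableSet_le measurable_const hFmeas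
    have hBmeas : MeasurableSet B := measurableSet_le measurable_const hFmeas.neg
    have hD : (0:ℝ) < 2*μ + t₁ := by linarith
    have hfin : x * (2*μ + t₁) ≤ t₁^2 := by
      nlinarith [mul_nonneg hx ht₀0, sq_nonneg x]
    -- upper tail
    have hAbound : (P A).toReal ≤ Real.exp (-x) := by
      set s : ℝ := 2*t₁/(2*μ + t₁) with hsdef
      have hs0 : 0 ≤ s := by positivity
      have hs2 : s < 2 := by rw [hsdef, div_lt_iff₀ hD]; linarith
      have h2s : (0:ℝ) < 2 - s := by linarith
      have hch := measure_ge_le_exp_mul_mgf (μ := P) (X := F) (μ + t₁) hs0 (hintF s)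
      calc (P A).toReal ≤ Real.exp (-s*(μ+t₁)) * mgf F P s := hch
        _ ≤ Real.exp (-s*(μ+t₁)) * Real.exp ((Real.exp s - 1)*μ) :=
            mul_le_mul_of_nonneg_left (hmgfF s) (le_of_lt (Real.exp_pos _))
        _ = Real.exp ((Real.exp s - 1 - s)*μ - s*t₁) := by rw [← Real.exp_add]; ring_nf
        _ ≤ Real.exp (-x) := by
            apply Real.exp_le_exp.2
            have hexps : Real.exp s - 1 - s ≤ s^2/(2-s) := by
              have h := aux_two_sub_exp hs0
              rw [le_div_iff₀ h2s]
              nlinarith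
            have step1 : (Real.exp s - 1 - s)*μ - s*t₁ ≤ s^2/(2-s)*μ - s*t₁ := by
              have := mul_le_mul_of_nonneg_right hexps hμ0
              linarith
            have h2s_eq : 2 - s = 4*μ/(2*μ + t₁) := by
              rw [hsdef]; field_simp; ring
            have heq : s^2/(2-s)*μ - s*t₁ = -(t₁^2/(2*μ + t₁)) := by
              rw [h2s_eq, hsdef]
              field_simp
              ring
            have hle : x ≤ t₁^2/(2*μ + t₁) := (le_div_iff₀ hD).2 hfin
            calc (Real.exp s - 1 - s)*μ - s*t₁ ≤ s^2/(2-s)*μ - s*t₁ := step1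
              _ = -(t₁^2/(2*μ + t₁)) := heq
              _ ≤ -x := neg_le_neg hle
    -- lower tail
    have hBbound : (P B).toReal ≤ Real.exp (-x) := by
      set s : ℝ := t₀/μ with hsdef
      have hs0 : 0 ≤ s := div_nonneg ht₀0 hμ0
      have hintneg : Integrable (fun ω => Real.exp (s * (-F) ω)) P := by
        have := hintF (-s)
        simpa [neg_mul, mul_neg] using this
      have hch := measure_ge_le_exp_mul_mgf (μ := P) (X := -F) (t₀ - μ) hs0 hintneg
      have hBeq : B = {ω | t₀ - μ ≤ (-F) ω} := rfl
      have hsμ : s * μ = t₀ := by rw [hsdef]; field_simp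
      have hst : s * t₀ = 2*x := by
        rw [hsdef, div_mul_eq_mul_div, div_eq_iff hμpos.ne']
        nlinarith [ht₀2]
      calc (P B).toReal = (P {ω | t₀ - μ ≤ (-F) ω}).toReal := by rw [← hBeq]
        _ ≤ Real.exp (-s*(t₀-μ)) * mgf (-F) P s := hch
        _ = Real.exp (-s*(t₀-μ)) * mgf F P (-s) := by rw [mgf_neg]
        _ ≤ Real.exp (-s*(t₀-μ)) * Real.exp ((Real.exp (-s) - 1)*μ) :=
            mul_le_mul_of_nonneg_left (hmgfF (-s)) (le_of_lt (Real.exp_pos _))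
        _ = Real.exp (-s*(t₀-μ) + (Real.exp (-s) - 1)*μ) := by rw [← Real.exp_add]
        _ ≤ Real.exp (-x) := by
            apply Real.exp_le_exp.2
            have hq := aux_exp_neg_quad hs0
            have h1 : (Real.exp (-s) - 1)*μ ≤ (-s + s^2/2)*μ := by
              apply mul_le_mul_of_nonneg_right _ hμ0
              linarith
            have h2 : -s*(t₀-μ) + (-s + s^2/2)*μ = -(s*t₀) + s*(s*μ)/2 := by ring
            rw [hsμ] at h2
            have h3 : -s*(t₀-μ) + (-s + s^2/2)*μ = -(s*t₀)/2 := by rw [h2]; ring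
            have h4 : -(s*t₀)/2 = -x := by rw [hst]; ring
            linarith
    -- combine
    have hAP : P A ≤ ENNReal.ofReal (Real.exp (-x)) := by
      rw [← ENNReal.ofReal_toReal (measure_ne_top P A)]
      exact ENNReal.ofReal_le_ofReal hAbound
    have hBP : P B ≤ ENNReal.ofReal (Real.exp (-x)) := by
      rw [← ENNReal.ofReal_toReal (measure_ne_top P B)]
      exact ENNReal.ofReal_le_ofReal hBbound
    have hUnion : P (A ∪ B) ≤ ENNReal.ofReal (2 * Real.exp (-x)) := by
      calc P (A ∪ B) ≤ P A + P B := measure_union_le A B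
        _ ≤ ENNReal.ofReal (Real.exp (-x)) + ENNReal.ofReal (Real.exp (-x)) :=
            add_le_add hAP hBP
        _ = ENNReal.ofReal (2 * Real.exp (-x)) := by
            rw [← ENNReal.ofReal_add (le_of_lt (Real.exp_pos _)) (le_of_lt (Real.exp_pos _))]
            norm_num
            ring_nf
            rw [ENNReal.ofReal_mul (Real.exp_pos _).le]; simp
    have hsub : (A ∪ B)ᶜ ⊆ {ω | |(∑ i, X i ω) - μ| ≤
        Real.sqrt (2 * (∑ i, X i ω) * x) + 4 * x} := by
      intro ω hω
      simp only [Set.mem_compl_iff, Set.mem_union, not_or, hAdef, hBdef,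
        Set.mem_setOf_eq, not_le] at hω
      obtain ⟨h1, h2⟩ := hω
      have hFω : (∑ i, X i ω) = F ω := rfl
      rw [Set.mem_setOf_eq, hFω]
      have hkey : Real.sqrt (2*μ*x) ≤ Real.sqrt (2*(F ω)*x) + 2*x := by
        apply aux_sqrt hμ0 hx
        rw [← ht₀def]
        linarith
      rw [← ht₀def] at hkey
      have hsq : 2*(F ω)*x = 2*F ω*x := by ring
      rw [abs_le]
      constructor
      · nlinarith [Real.sqrt_nonneg (2*F ω*x)]
      · nlinarith [Real.sqrt_nonneg (2*F ω*x)]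
    calc ENNReal.ofReal (1 - 3*Real.exp (-x))
        ≤ ENNReal.ofReal (1 - 2*Real.exp (-x)) :=
          ENNReal.ofReal_le_ofReal (by nlinarith [Real.exp_pos (-x)])
      _ = ENNReal.ofReal 1 - ENNReal.ofReal (2*Real.exp (-x)) :=
          ENNReal.ofReal_sub _ (by positivity)
      _ ≤ P Set.univ - P (A ∪ B) := by
          rw [ENNReal.ofReal_one, measure_univ]
          exact tsub_le_tsub_left hUnion 1
      _ = P ((A ∪ B)ᶜ) := (measure_compl (hAmeas.union hBmeas) (measure_ne_top _ _)).symm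
      _ ≤ _ := measure_mono hsub
end

section
/- There exists a universal constant C > 0 with the following property: for every integer n ≥ 1, every δ ∈ (0,1), every filtration (F_i)_{i=0}^n on a probability space, and every sequence of random variables X_1, …, X_n with values in [0,1] such that X_i is F_i-measurable for each i, setting M_i = E[X_i | F_{i−1}] and M = Σ_{i=1}^n M_i, with probability at least 1 − 2nδ one has |Σ_{i=1}^n (X_i − M_i)| ≤ C(√(M log(1/δ)) + log(1/δ)). -/
open MeasureTheory Finset

open scoped ENNReal

lemma det_bound (n : ℕ) (hn : 1 ≤ n) (m L s : ℝ) (hm0 : 0 ≤ m) (hmn : m ≤ n)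
    (hL : Real.log 2 ≤ L)
    (h : ∀ j < n, |s| ≤ L * 2 ^ j + (2:ℝ)⁻¹ ^ j * m) :
    |s| ≤ 4 * (Real.sqrt (m * L) + L) := by
  have hL0 : 0 < L := lt_of_lt_of_le (Real.log_pos (by norm_num)) hL
  have hsq : 0 ≤ Real.sqrt (m * L) := Real.sqrt_nonneg _
  rcases le_or_gt m L with hml | hml
  · have h0 := h 0 hn
    simp only [pow_zero, mul_one, one_mul] at h0
    linarith
  · -- L < m
    have hm0' : 0 < m := lt_trans hL0 hml
    set r : ℝ := Real.sqrt (m / L) with hr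
    have hr0 : 0 < r := Real.sqrt_pos.2 (div_pos hm0' hL0)
    have hr1 : 1 < r := by
      rw [hr, show (1:ℝ) = Real.sqrt 1 by simp]
      exact Real.sqrt_lt_sqrt (by norm_num) ((one_lt_div hL0).2 hml)
    have hr2 : r ^ 2 = m / L := Real.sq_sqrt (div_pos hm0' hL0).le
    have hLr2 : L * r ^ 2 = m := by rw [hr2]; field_simp
    have hLr : L * r = Real.sqrt (m * L) := by
      rw [show m * L = (L * r) ^ 2 by nlinarith, Real.sqrt_sq (by positivity)]
    have hmr : m / r = L * r := by
      field_simp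
      nlinarith
    -- r ≤ 2^n
    have h2n : (n:ℝ) ≤ 2 ^ n := by exact_mod_cast (Nat.lt_two_pow_self (n := n)).le
    have hlog2 : (0.6:ℝ) ≤ Real.log 2 := by nlinarith [Real.log_two_gt_d9]
    have h2 : (2:ℝ) ≤ 2 ^ n := by
      calc (2:ℝ) = 2 ^ 1 := by norm_num
      _ ≤ 2 ^ n := pow_le_pow_right₀ (by norm_num) hn
    have hrn : r ≤ 2 ^ n := by
      rw [hr, show (2:ℝ)^n = Real.sqrt ((2^n)^2) by rw [Real.sqrt_sq (by positivity)]]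
      apply Real.sqrt_le_sqrt
      rw [div_le_iff₀ hL0]
      nlinarith
    -- choose j
    set j0 : ℕ := ⌈Real.logb 2 r⌉₊ with hj0
    have hlogb_pos : 0 < Real.logb 2 r := Real.logb_pos (by norm_num) hr1
    have hj01 : 1 ≤ j0 := Nat.one_le_ceil_iff.2 hlogb_pos
    have hrj0 : r ≤ 2 ^ j0 := by
      calc r = (2:ℝ) ^ (Real.logb 2 r) := (Real.rpow_logb (by norm_num) (by norm_num) hr0).symm
      _ ≤ (2:ℝ) ^ (j0:ℝ) := by
          apply Real.rpow_le_rpow_of_exponent_le (by norm_num) (Nat.le_ceil _)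
      _ = 2 ^ j0 := by rw [Real.rpow_natCast]
    have hrj0' : (2:ℝ) ^ (j0 - 1) < r := by
      have hlt : ((j0 - 1 : ℕ) : ℝ) < Real.logb 2 r := by
        rw [← Nat.lt_ceil]
        omega
      calc (2:ℝ) ^ (j0 - 1) = (2:ℝ) ^ ((j0 - 1 : ℕ) : ℝ) := by rw [Real.rpow_natCast]
      _ < (2:ℝ) ^ (Real.logb 2 r) := Real.rpow_lt_rpow_of_exponent_lt (by norm_num) hlt
      _ = r := Real.rpow_logb (by norm_num) (by norm_num) hr0
    rcases le_or_gt j0 (n - 1) with hc | hc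
    · -- use j = j0
      have hj0n : j0 < n := by omega
      have hb := h j0 hj0n
      have ht1 : L * 2 ^ j0 ≤ 2 * Real.sqrt (m * L) := by
        have : (2:ℝ) ^ j0 = 2 * 2 ^ (j0 - 1) := by
          rw [← pow_succ']
          congr 1
          omega
        rw [this, ← hLr]
        nlinarith
      have ht2 : (2:ℝ)⁻¹ ^ j0 * m ≤ Real.sqrt (m * L) := by
        rw [inv_pow, ← hLr, inv_mul_le_iff₀ (by positivity)]
        nlinarith [mul_le_mul_of_nonneg_left hrj0 (mul_pos hL0 hr0).le]
      linarith
    · -- use j = n - 1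
      have hb := h (n - 1) (by omega)
      have h2n1 : (2:ℝ) ^ (n-1) ≤ 2 ^ (j0 - 1) := by
        apply pow_le_pow_right₀ (by norm_num)
        omega
      have hup : (2:ℝ) ^ (n - 1) < r := lt_of_le_of_lt h2n1 hrj0'
      have ht1 : L * 2 ^ (n-1) ≤ Real.sqrt (m * L) := by
        rw [← hLr]
        exact mul_le_mul_of_nonneg_left hup.le hL0.le
      have ht2 : (2:ℝ)⁻¹ ^ (n-1) * m ≤ 2 * Real.sqrt (m * L) := by
        have hhalf : r / 2 ≤ 2 ^ (n - 1) := by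
          have : (2:ℝ) ^ n = 2 * 2 ^ (n - 1) := by
            rw [← pow_succ']
            congr 1
            omega
          rw [this] at hrn
          linarith
        rw [inv_pow, ← hLr, inv_mul_le_iff₀ (by positivity)]
        linarith [mul_le_mul_of_nonneg_left hhalf (mul_pos hL0 hr0).le, hLr2, sq_nonneg r]
      linarith

lemma tail_one {Ω : Type} {m0 : MeasurableSpace Ω} (P : Measure Ω) [IsProbabilityMeasure P]
    (F : Filtration ℕ m0) (X : ℕ → Ω → ℝ) (n : ℕ)
    (hX : ∀ i ∈ Finset.Icc 1 n, StronglyMeasurable[F i] (X i))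
    (hb : ∀ i ∈ Finset.Icc 1 n, ∀ᵐ ω ∂P, X i ω ∈ Set.Icc (0:ℝ) 1)
    (l : ℝ) {δ : ℝ} (hδ : 0 < δ) :
    P {ω | Real.log (1/δ) ≤ ∑ i ∈ Finset.Icc 1 n,
        (l * X i ω - (Real.exp l - 1) * (P[X i|F (i-1)]) ω)} ≤ ENNReal.ofReal δ := by
  set c : ℝ := Real.exp l - 1 with hc
  -- integrability of X i
  have hXint : ∀ i ∈ Finset.Icc 1 n, Integrable (X i) P := by
    intro i hi
    refine Integrable.mono' (integrable_const 1) (((hX i hi).mono (F.le i)).aestronglyMeasurable) ?_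
    filter_upwards [hb i hi] with ω hω
    rw [Real.norm_eq_abs, abs_le]
    exact ⟨by linarith [hω.1], hω.2⟩
  -- bounds on condexp
  have hM01 : ∀ i ∈ Finset.Icc 1 n, ∀ᵐ ω ∂P, (P[X i|F (i-1)]) ω ∈ Set.Icc (0:ℝ) 1 := by
    intro i hi
    have h0 : 0 ≤ᵐ[P] P[X i|F (i-1)] :=
      condExp_nonneg ((hb i hi).mono fun ω hω => hω.1)
    have h1 : P[X i|F (i-1)] ≤ᵐ[P] P[(fun _ => (1:ℝ))|F (i-1)] :=
      condExp_mono (hXint i hi) (integrable_const 1) ((hb i hi).mono fun ω hω => hω.2)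
    rw [condExp_const (F.le (i-1))] at h1
    filter_upwards [h0, h1] with ω hω0 hω1
    exact ⟨hω0, hω1⟩
  -- combined a.e. bound
  have hbdd : ∀ᵐ ω ∂P, ∀ i ∈ Finset.Icc 1 n,
      X i ω ∈ Set.Icc (0:ℝ) 1 ∧ (P[X i|F (i-1)]) ω ∈ Set.Icc (0:ℝ) 1 := by
    rw [Filter.eventually_all_finset]
    intro i hi
    filter_upwards [hb i hi, hM01 i hi] with ω h1 h2
    exact ⟨h1, h2⟩
  -- strong measurability of partial exponentials
  have hsum_sm : ∀ k ≤ n, StronglyMeasurable[F k]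
      (fun ω => ∑ i ∈ Finset.Icc 1 k, (l * X i ω - c * (P[X i|F (i-1)]) ω)) := by
    intro k hk
    apply Finset.stronglyMeasurable_fun_sum
    intro i hi
    rw [Finset.mem_Icc] at hi
    have hin : i ∈ Finset.Icc 1 n := Finset.mem_Icc.2 ⟨hi.1, le_trans hi.2 hk⟩
    exact ((stronglyMeasurable_const.mul ((hX i hin).mono (F.mono hi.2))).sub
      (stronglyMeasurable_const.mul (stronglyMeasurable_condExp.mono
        (F.mono (le_trans (Nat.sub_le i 1) hi.2)))))
  have hG_sm : ∀ k ≤ n, StronglyMeasurable[F k]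
      (fun ω => Real.exp (∑ i ∈ Finset.Icc 1 k, (l * X i ω - c * (P[X i|F (i-1)]) ω))) := by
    intro k hk
    exact Real.continuous_exp.comp_stronglyMeasurable (hsum_sm k hk)
  -- integrability of partial exponentials
  have hG_int : ∀ k ≤ n, Integrable
      (fun ω => Real.exp (∑ i ∈ Finset.Icc 1 k, (l * X i ω - c * (P[X i|F (i-1)]) ω))) P := by
    intro k hk
    refine Integrable.mono' (integrable_const (Real.exp (n * (|l| + |c|))))
      (((hG_sm k hk).mono (F.le k)).aestronglyMeasurable) ?_
    filter_upwards [hbdd] with ω hω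
    rw [Real.norm_eq_abs, Real.abs_exp, Real.exp_le_exp]
    calc ∑ i ∈ Finset.Icc 1 k, (l * X i ω - c * (P[X i|F (i-1)]) ω)
        ≤ ∑ i ∈ Finset.Icc 1 k, (|l| + |c|) := by
          apply Finset.sum_le_sum
          intro i hi
          rw [Finset.mem_Icc] at hi
          have hin : i ∈ Finset.Icc 1 n := Finset.mem_Icc.2 ⟨hi.1, le_trans hi.2 hk⟩
          obtain ⟨hx, hm⟩ := hω i hin
          have h1 : l * X i ω ≤ |l| := by
            calc l * X i ω ≤ |l * X i ω| := le_abs_self _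
            _ = |l| * |X i ω| := abs_mul _ _
            _ ≤ |l| * 1 := by
                apply mul_le_mul_of_nonneg_left _ (abs_nonneg l)
                rw [abs_le]; exact ⟨by linarith [hx.1], hx.2⟩
            _ = |l| := mul_one _
          have h2 : -(c * (P[X i|F (i-1)]) ω) ≤ |c| := by
            calc -(c * (P[X i|F (i-1)]) ω) ≤ |c * (P[X i|F (i-1)]) ω| := neg_le_abs _
            _ = |c| * |(P[X i|F (i-1)]) ω| := abs_mul _ _
            _ ≤ |c| * 1 := by
                apply mul_le_mul_of_nonneg_left _ (abs_nonneg c)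
                rw [abs_le]; exact ⟨by linarith [hm.1], hm.2⟩
            _ = |c| := mul_one _
          linarith
    _ = k * (|l| + |c|) := by rw [Finset.sum_const, Nat.card_Icc]; push_cast; ring_nf
    _ ≤ n * (|l| + |c|) := by
          apply mul_le_mul_of_nonneg_right _ (by positivity)
          exact_mod_cast hk
  -- convexity inequality
  have hconv : ∀ x ∈ Set.Icc (0:ℝ) 1, Real.exp (l * x) ≤ 1 + c * x := by
    intro x hx
    have h := convexOn_exp.2 (Set.mem_univ (0:ℝ)) (Set.mem_univ l)
      (by linarith [hx.2] : (0:ℝ) ≤ 1 - x) hx.1 (by ring)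
    simp only [smul_eq_mul, mul_zero, zero_add, Real.exp_zero, mul_one] at h
    rw [mul_comm]
    rw [hc]
    linarith
  -- supermartingale property
  have key : ∀ k, k ≤ n → (∫ ω, Real.exp (∑ i ∈ Finset.Icc 1 k,
      (l * X i ω - c * (P[X i|F (i-1)]) ω)) ∂P) ≤ 1 := by
    intro k
    induction k with
    | zero => intro _; simp
    | succ k ih =>
      intro hk1
      have hk : k ≤ n := Nat.le_of_succ_le hk1
      have hmem : k + 1 ∈ Finset.Icc 1 n := Finset.mem_Icc.2 ⟨Nat.le_add_left 1 k, hk1⟩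
      set G : Ω → ℝ := fun ω => Real.exp (∑ i ∈ Finset.Icc 1 k,
        (l * X i ω - c * (P[X i|F (i-1)]) ω)) with hGdef
      set H : Ω → ℝ := fun ω => G ω * Real.exp (-(c * (P[X (k+1)|F k]) ω)) with hHdef
      set E : Ω → ℝ := fun ω => Real.exp (l * X (k+1) ω) with hEdef
      have hsplit : (fun ω => Real.exp (∑ i ∈ Finset.Icc 1 (k+1),
          (l * X i ω - c * (P[X i|F (i-1)]) ω))) = fun ω => H ω * E ω := by
        funext ω
        rw [Finset.sum_Icc_succ_top (Nat.le_add_left 1 k)]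
        simp only [hHdef, hEdef, hGdef, Nat.add_sub_cancel]
        rw [Real.exp_add, show l * X (k+1) ω - c * (P[X (k+1)|F k]) ω
          = -(c * (P[X (k+1)|F k]) ω) + l * X (k+1) ω by ring, Real.exp_add]
        ring
      have hHsm : StronglyMeasurable[F k] H := by
        apply (hG_sm k hk).mul
        exact Real.continuous_exp.comp_stronglyMeasurable
          ((stronglyMeasurable_const.mul stronglyMeasurable_condExp).neg)
      have hEint : Integrable E P := by
        refine Integrable.mono' (integrable_const (Real.exp |l|))
          ((Real.continuous_exp.comp_stronglyMeasurable
            (stronglyMeasurable_const.mul ((hX (k+1) hmem).mono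
              (F.le (k+1))))).aestronglyMeasurable) ?_
        filter_upwards [hb (k+1) hmem] with ω hω
        rw [Real.norm_eq_abs, Real.abs_exp, Real.exp_le_exp]
        calc l * X (k+1) ω ≤ |l * X (k+1) ω| := le_abs_self _
        _ = |l| * |X (k+1) ω| := abs_mul _ _
        _ ≤ |l| * 1 := by
            apply mul_le_mul_of_nonneg_left _ (abs_nonneg l)
            rw [abs_le]; exact ⟨by linarith [hω.1], hω.2⟩
        _ = |l| := mul_one _
      have hHEint : Integrable (H * E) P := by
        have := hG_int (k+1) hk1
        rw [hsplit] at this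
        exact this
      have hpull : P[H * E|F k] =ᵐ[P] H * P[E|F k] :=
        condExp_mul_of_stronglyMeasurable_left hHsm hHEint hEint
      have hcond_le : P[E|F k] ≤ᵐ[P] fun ω => 1 + c * (P[X (k+1)|F k]) ω := by
        have hle : E ≤ᵐ[P] fun ω => 1 + c * X (k+1) ω := by
          filter_upwards [hb (k+1) hmem] with ω hω
          exact hconv _ hω
        have hint2 : Integrable (fun ω => 1 + c * X (k+1) ω) P :=
          (integrable_const 1).add ((hXint (k+1) hmem).const_mul c)
        have h1 := condExp_mono (m := F k) hEint hint2 hle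
        refine h1.trans (Filter.EventuallyEq.le ?_)
        have heq : (fun ω => 1 + c * X (k+1) ω) = (fun _ => (1:ℝ)) + c • (X (k+1)) := rfl
        rw [heq]
        calc P[(fun _ => (1:ℝ)) + c • (X (k+1))|F k]
            =ᵐ[P] P[(fun _ => (1:ℝ))|F k] + P[c • X (k+1)|F k] :=
              condExp_add (integrable_const 1) ((hXint (k+1) hmem).smul c) (F k)
        _ =ᵐ[P] fun ω => 1 + c * (P[X (k+1)|F k]) ω := by
            rw [condExp_const (F.le k)]
            filter_upwards [condExp_smul (μ := P) (m := F k) c (X (k+1))] with ω hω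
            simp only [Pi.add_apply, Pi.smul_apply, smul_eq_mul] at hω ⊢
            rw [hω]
      have hH0 : ∀ ω, 0 ≤ H ω := by
        intro ω
        simp only [hHdef, hGdef]
        positivity
      have hfinal : H * P[E|F k] ≤ᵐ[P] G := by
        filter_upwards [hcond_le] with ω hω
        simp only [Pi.mul_apply]
        calc H ω * (P[E|F k]) ω ≤ H ω * (1 + c * (P[X (k+1)|F k]) ω) :=
              mul_le_mul_of_nonneg_left hω (hH0 ω)
        _ ≤ H ω * Real.exp (c * (P[X (k+1)|F k]) ω) := by
              apply mul_le_mul_of_nonneg_left _ (hH0 ω)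
              linarith [Real.add_one_le_exp (c * (P[X (k+1)|F k]) ω)]
        _ = G ω := by
              simp only [hHdef]
              rw [mul_assoc, ← Real.exp_add, neg_add_cancel, Real.exp_zero, mul_one]
      have hHEcond_int : Integrable (H * P[E|F k]) P :=
        (integrable_condExp (m := F k) (f := H * E)).congr hpull
      calc ∫ ω, Real.exp (∑ i ∈ Finset.Icc 1 (k+1),
            (l * X i ω - c * (P[X i|F (i-1)]) ω)) ∂P
          = ∫ ω, H ω * E ω ∂P := by rw [hsplit]
      _ = ∫ ω, (P[H * E|F k]) ω ∂P := (integral_condExp (F.le k)).symm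
      _ = ∫ ω, (H * P[E|F k]) ω ∂P := integral_congr_ae hpull
      _ ≤ ∫ ω, G ω ∂P := integral_mono_ae hHEcond_int (hG_int k hk) hfinal
      _ ≤ 1 := ih hk
  -- Markov
  have hGn_int := hG_int n le_rfl
  have hGn_nonneg : 0 ≤ᵐ[P] fun ω => Real.exp (∑ i ∈ Finset.Icc 1 n,
      (l * X i ω - c * (P[X i|F (i-1)]) ω)) :=
    Filter.Eventually.of_forall fun ω => (Real.exp_pos _).le
  have hmarkov := mul_meas_ge_le_integral_of_nonneg hGn_nonneg hGn_int (1/δ)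
  have hsetEq : {ω | Real.log (1/δ) ≤ ∑ i ∈ Finset.Icc 1 n,
      (l * X i ω - c * (P[X i|F (i-1)]) ω)} =
      {ω | 1/δ ≤ Real.exp (∑ i ∈ Finset.Icc 1 n,
        (l * X i ω - c * (P[X i|F (i-1)]) ω))} := by
    ext ω
    simp only [Set.mem_setOf_eq]
    rw [← Real.exp_log (show (0:ℝ) < 1/δ by positivity), Real.exp_le_exp,
      Real.log_exp]
  rw [hsetEq]
  have hle1 : (1/δ) * (P {ω | 1/δ ≤ Real.exp (∑ i ∈ Finset.Icc 1 n,
      (l * X i ω - c * (P[X i|F (i-1)]) ω))}).toReal ≤ 1 :=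
    le_trans hmarkov (key n le_rfl)
  set A := {ω | 1/δ ≤ Real.exp (∑ i ∈ Finset.Icc 1 n,
      (l * X i ω - c * (P[X i|F (i-1)]) ω))}
  have hA_ne_top : P A ≠ ⊤ := (measure_lt_top P A).ne
  have htoReal : (P A).toReal ≤ δ := by
    rw [div_mul_eq_mul_div, one_mul, div_le_iff₀ hδ] at hle1
    linarith
  calc P A = ENNReal.ofReal ((P A).toReal) := (ENNReal.ofReal_toReal hA_ne_top).symm
  _ ≤ ENNReal.ofReal δ := ENNReal.ofReal_le_ofReal htoReal

/-- There is a universal constant C > 0 such that for any filtration and any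
[0,1]-valued adapted sequence X_1, …, X_n, setting M_i = E[X_i | F_{i−1}] and
M = Σ M_i, with probability at least 1 − 2nδ,
|Σ (X_i − M_i)| ≤ C(√(M log(1/δ)) + log(1/δ)). -/
theorem martingale_sum_bound :
    ∃ C : ℝ, 0 < C ∧
      ∀ (n : ℕ), 1 ≤ n → ∀ (δ : ℝ), δ ∈ Set.Ioo (0 : ℝ) 1 →
      ∀ (Ω : Type) (m0 : MeasurableSpace Ω) (P : Measure Ω), IsProbabilityMeasure P →
      ∀ (F : Filtration ℕ m0) (X : ℕ → Ω → ℝ),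
      (∀ i ∈ Finset.Icc 1 n, StronglyMeasurable[F i] (X i)) →
      (∀ i ∈ Finset.Icc 1 n, ∀ᵐ ω ∂P, X i ω ∈ Set.Icc (0 : ℝ) 1) →
      ENNReal.ofReal (1 - 2 * n * δ) ≤
        P {ω | |∑ i ∈ Finset.Icc 1 n, (X i ω - (P[X i|F (i - 1)]) ω)| ≤
                C * (Real.sqrt ((∑ i ∈ Finset.Icc 1 n, (P[X i|F (i - 1)]) ω) *
                      Real.log (1 / δ)) + Real.log (1 / δ))} := by
  refine ⟨4, by norm_num, ?_⟩
  intro n hn δ hδ Ω m0 P hP F X hX hb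
  haveI := hP
  rcases le_or_gt (1 - 2 * n * δ) 0 with h1 | h1
  · rw [ENNReal.ofReal_of_nonpos h1]
    exact zero_le
  have hδ0 : 0 < δ := hδ.1
  have h2nδ : 2 * n * δ < 1 := by linarith
  set L : ℝ := Real.log (1 / δ) with hLdef
  have hδhalf : 2 * δ ≤ 1 := by
    have : (1:ℝ) ≤ n := by exact_mod_cast hn
    nlinarith
  have hL2 : Real.log 2 ≤ L := by
    apply Real.log_le_log (by norm_num)
    rw [le_div_iff₀ hδ0]
    linarith
  have hL0 : 0 < L := lt_of_lt_of_le (Real.log_pos (by norm_num)) hL2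
  -- integrability and condexp bounds (as in tail_one)
  have hXint : ∀ i ∈ Finset.Icc 1 n, Integrable (X i) P := by
    intro i hi
    refine Integrable.mono' (integrable_const 1) (((hX i hi).mono (F.le i)).aestronglyMeasurable) ?_
    filter_upwards [hb i hi] with ω hω
    rw [Real.norm_eq_abs, abs_le]
    exact ⟨by linarith [hω.1], hω.2⟩
  have hM01 : ∀ i ∈ Finset.Icc 1 n, ∀ᵐ ω ∂P, (P[X i|F (i-1)]) ω ∈ Set.Icc (0:ℝ) 1 := by
    intro i hi
    have h0 : 0 ≤ᵐ[P] P[X i|F (i-1)] :=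
      condExp_nonneg ((hb i hi).mono fun ω hω => hω.1)
    have h1' : P[X i|F (i-1)] ≤ᵐ[P] P[(fun _ => (1:ℝ))|F (i-1)] :=
      condExp_mono (hXint i hi) (integrable_const 1) ((hb i hi).mono fun ω hω => hω.2)
    rw [condExp_const (F.le (i-1))] at h1'
    filter_upwards [h0, h1'] with ω hω0 hω1
    exact ⟨hω0, hω1⟩
  -- good event from condexp bounds
  set Egood : Set Ω := {ω | ∀ i ∈ Finset.Icc 1 n, (P[X i|F (i-1)]) ω ∈ Set.Icc (0:ℝ) 1}
    with hEgooddef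
  have hEgood0 : P Egoodᶜ = 0 := by
    have hae : ∀ᵐ ω ∂P, ω ∈ Egood := by
      rw [hEgooddef]
      have : ∀ᵐ ω ∂P, ∀ i ∈ Finset.Icc 1 n, (P[X i|F (i-1)]) ω ∈ Set.Icc (0:ℝ) 1 := by
        rw [Filter.eventually_all_finset]
        exact hM01
      exact this
    rw [Set.compl_def]
    exact ae_iff.mp hae
  -- bad events
  set bad : ℝ → Set Ω := fun l => {ω | L ≤ ∑ i ∈ Finset.Icc 1 n,
      (l * X i ω - (Real.exp l - 1) * (P[X i|F (i-1)]) ω)} with hbaddef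
  have htail : ∀ l : ℝ, P (bad l) ≤ ENNReal.ofReal δ := fun l =>
    tail_one P F X n hX hb l hδ0
  set badset : Set Ω := ⋃ j ∈ Finset.range n,
      (bad ((2:ℝ)⁻¹ ^ j) ∪ bad (-((2:ℝ)⁻¹ ^ j))) with hbadsetdef
  have hbadset : P badset ≤ ENNReal.ofReal (2 * n * δ) := by
    calc P badset ≤ ∑ j ∈ Finset.range n, P (bad ((2:ℝ)⁻¹ ^ j) ∪ bad (-((2:ℝ)⁻¹ ^ j))) :=
          measure_biUnion_finset_le _ _
    _ ≤ ∑ _j ∈ Finset.range n, (ENNReal.ofReal δ + ENNReal.ofReal δ) :=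
          Finset.sum_le_sum fun j _ => le_trans (measure_union_le _ _)
            (add_le_add (htail _) (htail _))
    _ = (n : ℝ≥0∞) * (ENNReal.ofReal δ + ENNReal.ofReal δ) := by
          rw [Finset.sum_const, Finset.card_range, nsmul_eq_mul]
    _ = ENNReal.ofReal (2 * n * δ) := by
          rw [← ENNReal.ofReal_add hδ0.le hδ0.le, ← ENNReal.ofReal_natCast n,
            ← ENNReal.ofReal_mul (Nat.cast_nonneg n)]
          congr 1
          ring
  -- the inclusion
  have hsub : Egood ∩ badsetᶜ ⊆ {ω | |∑ i ∈ Finset.Icc 1 n, (X i ω - (P[X i|F (i - 1)]) ω)| ≤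
      4 * (Real.sqrt ((∑ i ∈ Finset.Icc 1 n, (P[X i|F (i - 1)]) ω) * L) + L)} := by
    rintro ω ⟨hωE, hωB⟩
    rw [hEgooddef, Set.mem_setOf_eq] at hωE
    rw [hbadsetdef] at hωB
    simp only [Set.mem_compl_iff, Set.mem_iUnion, Set.mem_union, not_or, not_exists] at hωB
    set T : ℝ := ∑ i ∈ Finset.Icc 1 n, (P[X i|F (i - 1)]) ω with hTdef
    set S : ℝ := ∑ i ∈ Finset.Icc 1 n, (X i ω - (P[X i|F (i - 1)]) ω) with hSdef
    have hT0 : 0 ≤ T := Finset.sum_nonneg fun i hi => (hωE i hi).1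
    have hTn : T ≤ n := by
      calc T ≤ ∑ i ∈ Finset.Icc 1 n, (1:ℝ) :=
            Finset.sum_le_sum fun i hi => (hωE i hi).2
      _ = n := by rw [Finset.sum_const, Nat.card_Icc]; simp
    have hid : ∀ l : ℝ, (∑ i ∈ Finset.Icc 1 n,
        (l * X i ω - (Real.exp l - 1) * (P[X i|F (i-1)]) ω))
        = l * S - (Real.exp l - 1 - l) * T := by
      intro l
      rw [hSdef, hTdef, Finset.mul_sum, Finset.mul_sum, ← Finset.sum_sub_distrib]
      exact Finset.sum_congr rfl fun i _ => by ring
    have hdetj : ∀ j < n, |S| ≤ L * 2 ^ j + (2:ℝ)⁻¹ ^ j * T := by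
      intro j hj
      have hωBj := hωB j (Finset.mem_range.2 hj)
      set t : ℝ := (2:ℝ)⁻¹ ^ j with htdef
      have ht0 : 0 < t := by positivity
      have ht1 : t ≤ 1 := pow_le_one₀ (by norm_num) (by norm_num)
      have hφp : Real.exp t - 1 - t ≤ t ^ 2 := by
        have := Real.abs_exp_sub_one_sub_id_le (x := t) (by rw [abs_of_pos ht0]; exact ht1)
        calc Real.exp t - 1 - t ≤ |Real.exp t - 1 - t| := le_abs_self _
        _ ≤ t ^ 2 := this
      have hφm : Real.exp (-t) - 1 - (-t) ≤ t ^ 2 := by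
        have := Real.abs_exp_sub_one_sub_id_le (x := -t) (by rw [abs_neg, abs_of_pos ht0]; exact ht1)
        calc Real.exp (-t) - 1 - (-t) ≤ |Real.exp (-t) - 1 - (-t)| := le_abs_self _
        _ ≤ (-t) ^ 2 := this
        _ = t ^ 2 := by ring
      have hb1 : t * S - (Real.exp t - 1 - t) * T < L := by
        have := hωBj.1
        rw [hbaddef, Set.mem_setOf_eq, not_le, hid t] at this
        exact this
      have hb2 : (-t) * S - (Real.exp (-t) - 1 - (-t)) * T < L := by
        have := hωBj.2
        rw [hbaddef, Set.mem_setOf_eq, not_le, hid (-t)] at this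
        exact this
      have hkey : t * |S| ≤ L + t ^ 2 * T := by
        have hp1 : t * S ≤ L + t ^ 2 * T := by
          nlinarith [mul_le_mul_of_nonneg_right hφp hT0]
        have hp2 : -(t * S) ≤ L + t ^ 2 * T := by
          nlinarith [mul_le_mul_of_nonneg_right hφm hT0]
        rcases abs_cases S with ⟨he, _⟩ | ⟨he, _⟩ <;> rw [he] <;> nlinarith
      have hpow : t * 2 ^ j = 1 := by
        rw [htdef, ← mul_pow]
        norm_num
      have h2j0 : (0:ℝ) < 2 ^ j := by positivity
      nlinarith [mul_le_mul_of_nonneg_left hkey h2j0.le, hpow, abs_nonneg S]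
    have := det_bound n hn T L S hT0 hTn hL2 hdetj
    rw [Set.mem_setOf_eq]
    exact this
  -- final measure computation
  calc ENNReal.ofReal (1 - 2 * n * δ)
      = 1 - ENNReal.ofReal (2 * n * δ) := by
        rw [ENNReal.ofReal_sub 1 (by positivity), ENNReal.ofReal_one]
  _ ≤ 1 - P (Egoodᶜ ∪ badset) := by
        apply tsub_le_tsub_left
        calc P (Egoodᶜ ∪ badset) ≤ P Egoodᶜ + P badset := measure_union_le _ _
        _ = P badset := by rw [hEgood0, zero_add]
        _ ≤ ENNReal.ofReal (2 * n * δ) := hbadset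
  _ ≤ P (Egood ∩ badsetᶜ) := by
        rw [tsub_le_iff_right]
        have huniv : (Set.univ : Set Ω) = (Egood ∩ badsetᶜ) ∪ (Egoodᶜ ∪ badset) := by
          ext x
          simp only [Set.mem_univ, Set.mem_union, Set.mem_inter_iff, Set.mem_compl_iff, true_iff]
          tauto
        calc (1 : ℝ≥0∞) = P Set.univ := (measure_univ).symm
        _ = P ((Egood ∩ badsetᶜ) ∪ (Egoodᶜ ∪ badset)) := by rw [← huniv]
        _ ≤ P (Egood ∩ badsetᶜ) + P (Egoodᶜ ∪ badset) := measure_union_le _ _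
  _ ≤ _ := measure_mono hsub
end

section
/- Let b, c ≥ 0 be real numbers, let T ≥ 1, let a_1, …, a_T be nonnegative real numbers, and let δ_0, δ_1, …, δ_T be nonnegative real numbers with δ_0 = 0 such that for every t ∈ {1, …, T}: δ_t ≤ δ_{t−1} + b a_t and δ_{t−1}(δ_t − δ_{t−1}) ≤ c a_t² (equivalently, δ_t ≤ δ_{t−1} + min{b a_t, c a_t²/δ_{t−1}} with the convention that the second term is +∞ when δ_{t−1} = 0). Then δ_T ≤ √((b² + 2c) Σ_{t=1}^T a_t²). -/
open Finset

/-!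
Along the recursion the squares `δ_t²` grow by at most `(b² + 2c) a_t²` per step:
`δ_t² = δ_{t-1}² + 2 δ_{t-1} (δ_t - δ_{t-1}) + (δ_t - δ_{t-1})²`, where the middle term is at most
`2c a_t²` and, when `δ` increases, the last one is at most `b² a_t²`; when `δ` decreases the square
does not grow at all. Summing from `δ_0 = 0` gives `δ_T² ≤ (b² + 2c) ∑ a_t²`.
-/

theorem sq_le_sq_add_of_le_add_of_mul_sub_le {x y a b c : ℝ} (hc : 0 ≤ c) (hy : 0 ≤ y)
    (h1 : y ≤ x + b * a) (h2 : x * (y - x) ≤ c * a ^ 2) :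
    y ^ 2 ≤ x ^ 2 + (b ^ 2 + 2 * c) * a ^ 2 := by
  rcases le_or_gt y x with hdec | hinc
  · have : y ^ 2 ≤ x ^ 2 := pow_le_pow_left₀ hy hdec 2
    nlinarith [sq_nonneg (b * a)]
  · have hjump : (y - x) ^ 2 ≤ (b * a) ^ 2 := pow_le_pow_left₀ (by linarith) (by linarith) 2
    calc y ^ 2 = x ^ 2 + 2 * (x * (y - x)) + (y - x) ^ 2 := by ring
      _ ≤ x ^ 2 + 2 * (c * a ^ 2) + (b * a) ^ 2 := by gcongr
      _ = x ^ 2 + (b ^ 2 + 2 * c) * a ^ 2 := by ring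

theorem sq_le_mul_sum_sq_of_recursion {b c : ℝ} (hc : 0 ≤ c) {T : ℕ} {a δ : ℕ → ℝ}
    (hδ0 : δ 0 = 0) (hδnn : ∀ t ≤ T, 0 ≤ δ t)
    (h1 : ∀ t ∈ Icc 1 T, δ t ≤ δ (t - 1) + b * a t)
    (h2 : ∀ t ∈ Icc 1 T, δ (t - 1) * (δ t - δ (t - 1)) ≤ c * a t ^ 2) :
    ∀ t ≤ T, δ t ^ 2 ≤ (b ^ 2 + 2 * c) * ∑ s ∈ Icc 1 t, a s ^ 2
  | 0, _ => by simp [hδ0]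
  | t + 1, ht => by
    have hmem : t + 1 ∈ Icc 1 T := mem_Icc.2 ⟨by omega, ht⟩
    have hstep := sq_le_sq_add_of_le_add_of_mul_sub_le hc (hδnn _ ht) (h1 _ hmem) (h2 _ hmem)
    have ih := sq_le_mul_sum_sq_of_recursion hc hδ0 hδnn h1 h2 t (by omega)
    rw [sum_Icc_succ_top (by omega), mul_add]
    simp only [Nat.add_sub_cancel] at hstep
    linarith

theorem recursion_bound_general (b c : ℝ) (hc : 0 ≤ c) (T : ℕ)
    (a : ℕ → ℝ)
    (δ : ℕ → ℝ) (hδ0 : δ 0 = 0) (hδnn : ∀ t ≤ T, 0 ≤ δ t)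
    (h1 : ∀ t ∈ Finset.Icc 1 T, δ t ≤ δ (t - 1) + b * a t)
    (h2 : ∀ t ∈ Finset.Icc 1 T, δ (t - 1) * (δ t - δ (t - 1)) ≤ c * a t ^ 2) :
    δ T ≤ Real.sqrt ((b ^ 2 + 2 * c) * ∑ t ∈ Finset.Icc 1 T, a t ^ 2) :=
  (le_abs_self _).trans <|
    Real.abs_le_sqrt (sq_le_mul_sum_sq_of_recursion hc hδ0 hδnn h1 h2 T le_rfl)

/-- If δ_0 = 0 and for every t ∈ {1, …, T}, δ_t ≤ δ_{t−1} + b a_t and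
δ_{t−1}(δ_t − δ_{t−1}) ≤ c a_t², with all quantities nonnegative, then
δ_T ≤ √((b² + 2c) Σ_{t=1}^T a_t²). -/
theorem recursion_bound (b c : ℝ) (hb : 0 ≤ b) (hc : 0 ≤ c) (T : ℕ) (hT : 1 ≤ T)
    (a : ℕ → ℝ) (ha : ∀ t ∈ Finset.Icc 1 T, 0 ≤ a t)
    (δ : ℕ → ℝ) (hδ0 : δ 0 = 0) (hδnn : ∀ t ≤ T, 0 ≤ δ t)
    (h1 : ∀ t ∈ Finset.Icc 1 T, δ t ≤ δ (t - 1) + b * a t)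
    (h2 : ∀ t ∈ Finset.Icc 1 T, δ (t - 1) * (δ t - δ (t - 1)) ≤ c * a t ^ 2) :
    δ T ≤ Real.sqrt ((b ^ 2 + 2 * c) * ∑ t ∈ Finset.Icc 1 T, a t ^ 2) :=
  recursion_bound_general b c hc T a δ hδ0 hδnn h1 h2
end

section
/- Let d ≥ 1 be an integer, let η > 0, let g ∈ ℝ^d, and let x be any vector in the probability simplex Δ_d. Then 0 ≤ η log(Σ_{j=1}^d x_j exp(−g_j/η)) + Σ_{j=1}^d g_j x_j ≤ min{2‖g‖_∞, ‖g‖_∞²/(2η)}, where ‖g‖_∞ = max_{j} |g_j|. -/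
open Finset Real

private lemma Npos {p q : ℝ} (hp : 0 ≤ p) (hq : 0 ≤ q) (hpq : p + q = 1) (s : ℝ) :
    0 < p * Real.exp s + q * Real.exp (-s) := by
  rcases eq_or_lt_of_le hp with h | h
  · have hq1 : q = 1 := by linarith
    simp [← h, hq1, Real.exp_pos]
  · have h1 : 0 < p * Real.exp s := mul_pos h (Real.exp_pos s)
    have h2 : 0 ≤ q * Real.exp (-s) := mul_nonneg hq (Real.exp_pos (-s)).le
    linarith

private lemma hoeff_two_point {p q : ℝ} (hp : 0 ≤ p) (hq : 0 ≤ q) (hpq : p + q = 1)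
    {L : ℝ} (hL : 0 ≤ L) :
    Real.log (p * Real.exp L + q * Real.exp (-L)) ≤ (p - q) * L + L ^ 2 / 2 := by
  set N : ℝ → ℝ := fun s => p * Real.exp s + q * Real.exp (-s) with hN
  set N' : ℝ → ℝ := fun s => p * Real.exp s - q * Real.exp (-s) with hN'
  have hNpos : ∀ s, 0 < N s := fun s => Npos hp hq hpq s
  have hDN : ∀ s, HasDerivAt N (N' s) s := by
    intro s
    have h1 : HasDerivAt (fun s : ℝ => Real.exp s) (Real.exp s) s := Real.hasDerivAt_exp s
    have h2 : HasDerivAt (fun s : ℝ => Real.exp (-s)) (-Real.exp (-s)) s := by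
      simpa [Function.comp_def] using (Real.hasDerivAt_exp (-s)).comp s (hasDerivAt_neg s)
    have := (h1.const_mul p).add (h2.const_mul q)
    simpa [hN, hN', mul_comm, sub_eq_add_neg, Pi.add_def] using this
  have hDN' : ∀ s, HasDerivAt N' (N s) s := by
    intro s
    have h1 : HasDerivAt (fun s : ℝ => Real.exp s) (Real.exp s) s := Real.hasDerivAt_exp s
    have h2 : HasDerivAt (fun s : ℝ => Real.exp (-s)) (-Real.exp (-s)) s := by
      simpa [Function.comp_def] using (Real.hasDerivAt_exp (-s)).comp s (hasDerivAt_neg s)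
    have := (h1.const_mul p).sub (h2.const_mul q)
    simpa [hN, hN', mul_comm, Pi.sub_def] using this
  -- g is the derivative of f
  set g : ℝ → ℝ := fun s => N' s / N s - (p - q) - s with hg
  set f : ℝ → ℝ := fun s => Real.log (N s) - (p - q) * s - s ^ 2 / 2 with hf
  have hDf : ∀ s, HasDerivAt f (g s) s := by
    intro s
    have hlog : HasDerivAt (fun s => Real.log (N s)) (N' s / N s) s :=
      (hDN s).log (hNpos s).ne'
    have := (hlog.sub ((hasDerivAt_id s).const_mul (p - q))).sub
      (((hasDerivAt_id s).pow 2).div_const 2)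
    simpa [hf, hg, mul_comm, Pi.sub_def] using this
  have hDg : ∀ s, HasDerivAt g ((N s * N s - N' s * N' s) / (N s) ^ 2 - 1) s := by
    intro s
    have hdiv : HasDerivAt (fun s => N' s / N s) ((N s * N s - N' s * N' s) / (N s) ^ 2) s :=
      (hDN' s).div (hDN s) (hNpos s).ne'
    have := (hdiv.sub_const (p - q)).sub (hasDerivAt_id s)
    simpa [hg, sub_sub, Pi.sub_def] using this
  -- g is antitone
  have hganti : Antitone g := by
    apply antitone_of_deriv_nonpos (fun s => (hDg s).differentiableAt)
    intro s
    rw [(hDg s).deriv]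
    have h1 : (N s * N s - N' s * N' s) / (N s) ^ 2 ≤ 1 := by
      rw [div_le_one (pow_pos (hNpos s) 2)]
      nlinarith [sq_nonneg (N' s)]
    linarith
  have hg0 : g 0 = 0 := by
    simp [hg, hN, hN', hpq]
  have hgnonpos : ∀ s, 0 ≤ s → g s ≤ 0 := fun s hs => hg0 ▸ hganti hs
  have hfanti : AntitoneOn f (Set.Ici 0) := by
    apply antitoneOn_of_deriv_nonpos (convex_Ici 0)
    · exact fun s _ => ((hDf s).differentiableAt).continuousAt.continuousWithinAt
    · exact fun s _ => ((hDf s).differentiableAt).differentiableWithinAt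
    · intro s hs
      rw [(hDf s).deriv]
      exact hgnonpos s (le_of_lt (by simpa using hs))
  have hf0 : f 0 = 0 := by simp [hf, hN, hpq]
  have := hfanti (Set.self_mem_Ici) (Set.mem_Ici.mpr hL) hL
  rw [hf0] at this
  simp only [hf] at this
  linarith
/-- For any x in the probability simplex Δ_d,
0 ≤ η log(Σ_j x_j exp(−g_j/η)) + Σ_j g_j x_j ≤ min{2‖g‖_∞, ‖g‖_∞²/(2η)},
where ‖g‖_∞ = max_j |g_j|. -/
theorem mix_loss_bounds (d : ℕ) (hd : 1 ≤ d) (η : ℝ) (hη : 0 < η) (g : Fin d → ℝ)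
    (x : Fin d → ℝ) (hx : ∀ j, 0 ≤ x j ∧ x j ≤ 1) (hxsum : ∑ j, x j = 1) :
    0 ≤ η * Real.log (∑ j, x j * Real.exp (-g j / η)) + ∑ j, g j * x j ∧
    η * Real.log (∑ j, x j * Real.exp (-g j / η)) + ∑ j, g j * x j ≤
      min (2 * Finset.univ.sup' (Finset.univ_nonempty_iff.mpr ⟨⟨0, hd⟩⟩) (fun j => |g j|))
        ((Finset.univ.sup' (Finset.univ_nonempty_iff.mpr ⟨⟨0, hd⟩⟩) (fun j => |g j|)) ^ 2 /
          (2 * η)) := by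
  set M : ℝ := Finset.univ.sup' (Finset.univ_nonempty_iff.mpr ⟨⟨0, hd⟩⟩) (fun j => |g j|)
    with hMdef
  have hgM : ∀ j, |g j| ≤ M := fun j => by
    rw [hMdef]; exact Finset.le_sup' (fun k => |g k|) (mem_univ j)
  have hM0 : 0 ≤ M := (abs_nonneg _).trans (hgM ⟨0, hd⟩)
  set S : ℝ := ∑ j, x j * Real.exp (-g j / η) with hSdef
  set μ : ℝ := ∑ j, x j * (-g j / η) with hμdef
  -- Jensen lower bound : exp μ ≤ S
  have hJensen : Real.exp μ ≤ S := by
    have h := convexOn_exp.map_sum_le (t := Finset.univ) (w := x) (p := fun j => -g j / η)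
      (fun j _ => (hx j).1) hxsum (fun j _ => Set.mem_univ _)
    simp only [smul_eq_mul] at h
    rw [hSdef, hμdef]
    exact h
  have hSpos : 0 < S := lt_of_lt_of_le (Real.exp_pos μ) hJensen
  have hμlog : μ ≤ Real.log S := (Real.le_log_iff_exp_le hSpos).mpr hJensen
  have hημ : η * μ = -∑ j, g j * x j := by
    rw [hμdef, Finset.mul_sum]
    rw [show -∑ j, g j * x j = ∑ j, -(g j * x j) by rw [Finset.sum_neg_distrib]]
    exact Finset.sum_congr rfl fun j _ => by field_simp
  have hgxM : ∑ j, g j * x j ≤ M := by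
    calc ∑ j, g j * x j ≤ ∑ j, M * x j :=
          Finset.sum_le_sum fun j _ =>
            mul_le_mul_of_nonneg_right ((le_abs_self _).trans (hgM j)) (hx j).1
      _ = M := by rw [← Finset.mul_sum, hxsum, mul_one]
  constructor
  · -- lower bound
    have h1 : η * μ ≤ η * Real.log S := mul_le_mul_of_nonneg_left hμlog hη.le
    linarith
  rcases hM0.eq_or_lt with hM | hM
  · -- M = 0 : g ≡ 0
    have hg0 : ∀ j, g j = 0 := fun j => abs_nonpos_iff.mp (hM ▸ hgM j)
    have hS1 : S = 1 := by
      rw [hSdef]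
      simp [hg0, hxsum]
    rw [hS1]
    simp [hg0, hM.symm]
  · -- M > 0
    set L : ℝ := M / η with hLdef
    have hLpos : 0 < L := div_pos hM hη
    have htub : ∀ j : Fin d, -g j / η ≤ L := fun j => by
      rw [hLdef]
      exact (div_le_div_iff_of_pos_right hη).mpr (by linarith [neg_le_abs (g j), hgM j])
    have htlb : ∀ j : Fin d, -L ≤ -g j / η := fun j => by
      rw [hLdef, ← neg_div]
      exact (div_le_div_iff_of_pos_right hη).mpr (by linarith [le_abs_self (g j), hgM j])
    -- Bound A : η log S + Σ g x ≤ 2M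
    have hboundA : η * Real.log S + ∑ j, g j * x j ≤ 2 * M := by
      have hSle : S ≤ Real.exp L := by
        calc S = ∑ j, x j * Real.exp (-g j / η) := hSdef
          _ ≤ ∑ j, x j * Real.exp L :=
            Finset.sum_le_sum fun j _ =>
              mul_le_mul_of_nonneg_left (Real.exp_le_exp.mpr (htub j)) (hx j).1
          _ = Real.exp L := by rw [← Finset.sum_mul, hxsum, one_mul]
      have hlogA : Real.log S ≤ L := (Real.log_le_iff_le_exp hSpos).mpr hSle
      have h1 : η * Real.log S ≤ η * L := mul_le_mul_of_nonneg_left hlogA hη.le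
      have h2 : η * L = M := by rw [hLdef]; field_simp
      linarith
    -- Bound B : η log S + Σ g x ≤ M²/(2η)
    have hboundB : η * Real.log S + ∑ j, g j * x j ≤ M ^ 2 / (2 * η) := by
      set p : ℝ := (L + μ) / (2 * L) with hpdef
      set q : ℝ := (L - μ) / (2 * L) with hqdef
      have hμub : μ ≤ L := by
        calc μ = ∑ j, x j * (-g j / η) := hμdef
          _ ≤ ∑ j, x j * L :=
            Finset.sum_le_sum fun j _ => mul_le_mul_of_nonneg_left (htub j) (hx j).1
          _ = L := by rw [← Finset.sum_mul, hxsum, one_mul]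
      have hμlb : -L ≤ μ := by
        have : ∑ j, x j * (-L) ≤ μ := by
          rw [hμdef]
          exact Finset.sum_le_sum fun j _ => mul_le_mul_of_nonneg_left (htlb j) (hx j).1
        rw [← Finset.sum_mul, hxsum, one_mul] at this
        exact this
      have hp : 0 ≤ p := div_nonneg (by linarith) (by linarith)
      have hq : 0 ≤ q := div_nonneg (by linarith) (by linarith)
      have hpq : p + q = 1 := by
        rw [hpdef, hqdef]
        field_simp
        ring
      have hchord : S ≤ p * Real.exp L + q * Real.exp (-L) := by
        have hstep : ∀ j : Fin d, x j * Real.exp (-g j / η) ≤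
            x j * (((L + -g j / η) / (2 * L)) * Real.exp L +
              ((L - -g j / η) / (2 * L)) * Real.exp (-L)) := by
          intro j
          apply mul_le_mul_of_nonneg_left _ (hx j).1
          have ha : (0:ℝ) ≤ (L - -g j / η) / (2 * L) :=
            div_nonneg (by linarith [htub j]) (by linarith)
          have hb : (0:ℝ) ≤ (L + -g j / η) / (2 * L) :=
            div_nonneg (by linarith [htlb j]) (by linarith)
          have hab : (L - -g j / η) / (2 * L) + (L + -g j / η) / (2 * L) = 1 := by
            field_simp
            ring
          have h := convexOn_exp.2 (Set.mem_univ (-L)) (Set.mem_univ L) ha hb hab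
          simp only [smul_eq_mul] at h
          have hpt : (L - -g j / η) / (2 * L) * (-L) + (L + -g j / η) / (2 * L) * L
              = -g j / η := by field_simp; ring
          rw [hpt] at h
          linarith
        have hsum : ∑ j, x j * (((L + -g j / η) / (2 * L)) * Real.exp L +
            ((L - -g j / η) / (2 * L)) * Real.exp (-L)) =
            p * Real.exp L + q * Real.exp (-L) := by
          have hexp : ∀ j : Fin d, x j * (((L + -g j / η) / (2 * L)) * Real.exp L +
              ((L - -g j / η) / (2 * L)) * Real.exp (-L)) =
              (x j * L + x j * (-g j / η)) / (2 * L) * Real.exp L +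
              (x j * L - x j * (-g j / η)) / (2 * L) * Real.exp (-L) := by
            intro j
            field_simp
          rw [Finset.sum_congr rfl fun j _ => hexp j, Finset.sum_add_distrib,
            ← Finset.sum_mul, ← Finset.sum_mul, ← Finset.sum_div, ← Finset.sum_div,
            Finset.sum_add_distrib, Finset.sum_sub_distrib,
            ← Finset.sum_mul, hxsum, one_mul, ← hμdef, hpdef, hqdef]
        calc S ≤ ∑ j, x j * (((L + -g j / η) / (2 * L)) * Real.exp L +
              ((L - -g j / η) / (2 * L)) * Real.exp (-L)) :=
            Finset.sum_le_sum fun j _ => hstep j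
          _ = p * Real.exp L + q * Real.exp (-L) := hsum
      have hlogB : Real.log S ≤ (p - q) * L + L ^ 2 / 2 :=
        (Real.log_le_log hSpos hchord).trans (hoeff_two_point hp hq hpq hLpos.le)
      have hpqL : (p - q) * L = μ := by
        rw [hpdef, hqdef]
        field_simp
        ring
      have h1 : η * Real.log S ≤ η * (μ + L ^ 2 / 2) :=
        mul_le_mul_of_nonneg_left (by rw [← hpqL]; linarith) hη.le
      have h2 : η * (μ + L ^ 2 / 2) = η * μ + M ^ 2 / (2 * η) := by
        rw [hLdef]
        field_simp
      linarith
    exact le_min hboundA hboundB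
end

section
/- Let d ≥ 2 be an integer, set κ = √(log d), and let (g_t)_{t≥1} be a sequence of vectors in ℝ^d such that g_1 is not a constant vector (max_j g_{1,j} > min_j g_{1,j}). Define sequences x_t ∈ Δ_d, θ_t ∈ ℝ^d, η_t ∈ ℝ, ρ_t ∈ ℝ by: x_1 = (1/d, …, 1/d), θ_1 = 0, η_1 = 0; ρ_1 = ⟨g_1, x_1⟩ − min_j g_{1,j}, and for t ≥ 2, ρ_t = η_t log(Σ_{j=1}^d x_{t,j} exp(−g_{t,j}/η_t)) + ⟨g_t, x_t⟩; and for all t ≥ 1, θ_{t+1} = θ_t − g_t, η_{t+1} = η_t + ρ_t/κ², and x_{t+1,j} = exp(θ_{t+1,j}/η_{t+1}) / Σ_{i=1}^d exp(θ_{t+1,i}/η_{t+1}) for j ∈ {1,…,d}. Then for every T ≥ 1 and every u ∈ Δ_d: Σ_{t=1}^T ⟨g_t, x_t⟩ − Σ_{t=1}^T ⟨g_t, u⟩ ≤ 2 √((4 + log d) Σ_{t=1}^T ‖g_t‖_∞²). -/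
open Finset
set_option maxHeartbeats 1000000


lemma core_scalar {p : ℝ} (hp0 : 0 ≤ p) (hp1 : p ≤ 1) (h : ℝ) :
    Real.log (1 - p + p * Real.exp h) ≤ p * h + h ^ 2 / 8 := by
  have hD : ∀ y : ℝ, 0 < 1 - p + p * Real.exp y := by
    intro y
    rcases eq_or_lt_of_le hp1 with rfl | h1
    · simpa using Real.exp_pos y
    · have := Real.exp_pos y; nlinarith
  set F : ℝ → ℝ := fun y => Real.log (1 - p + p * Real.exp y) - (p * y + y ^ 2 / 8) with hF
  set G : ℝ → ℝ := fun y => p * Real.exp y / (1 - p + p * Real.exp y) - (p + y / 4) with hG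
  have hDd : ∀ y : ℝ, HasDerivAt (fun y => 1 - p + p * Real.exp y) (p * Real.exp y) y :=
    fun y => ((Real.hasDerivAt_exp y).const_mul p).const_add (1 - p)
  have hFd : ∀ y : ℝ, HasDerivAt F (G y) y := by
    intro y
    have h1 := (hDd y).log (hD y).ne'
    have h2 : HasDerivAt (fun y : ℝ => p * y + y ^ 2 / 8) (p + y / 4) y := by
      have := ((hasDerivAt_id y).const_mul p).add ((hasDerivAt_pow 2 y).div_const 8)
      exact this.congr_deriv (by push_cast; ring)
    exact h1.sub h2
  have hGd : ∀ y : ℝ, HasDerivAt G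
      ((p * Real.exp y * (1 - p + p * Real.exp y) - p * Real.exp y * (p * Real.exp y)) /
        (1 - p + p * Real.exp y) ^ 2 - 1 / 4) y := by
    intro y
    have h1 := ((Real.hasDerivAt_exp y).const_mul p).div (hDd y) (hD y).ne'
    exact h1.sub (((hasDerivAt_id y).div_const 4).const_add p)
  have hGanti : Antitone G := by
    apply antitone_of_hasDerivAt_nonpos hGd
    intro y
    have key : ∀ A D : ℝ, 0 < D → (A * D - A * A) / D ^ 2 ≤ 1 / 4 := by
      intro A D hDpos
      rw [div_le_iff₀ (by positivity)]
      nlinarith [sq_nonneg (2 * A - D)]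
    have := key (p * Real.exp y) (1 - p + p * Real.exp y) (hD y)
    simp only [Pi.zero_apply]
    linarith
  have hG0 : G 0 = 0 := by
    simp [hG]
  -- show F h ≤ F 0
  have hF0 : F 0 = 0 := by
    simp [hF]
  have key : F h ≤ F 0 := by
    rcases le_total h 0 with hy | hy
    · have mono : MonotoneOn F (Set.Iic 0) := by
        apply monotoneOn_of_hasDerivWithinAt_nonneg (convex_Iic 0)
          (fun y _ => (hFd y).continuousAt.continuousWithinAt)
          (fun y _ => (hFd y).hasDerivWithinAt)
        intro y hy'
        rw [interior_Iic] at hy'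
        rw [← hG0]
        exact hGanti hy'.le
      exact mono hy Set.self_mem_Iic hy
    · have anti : AntitoneOn F (Set.Ici 0) := by
        apply antitoneOn_of_hasDerivWithinAt_nonpos (convex_Ici 0)
          (fun y _ => (hFd y).continuousAt.continuousWithinAt)
          (fun y _ => (hFd y).hasDerivWithinAt)
        intro y hy'
        rw [interior_Ici] at hy'
        rw [← hG0]
        exact hGanti hy'.le
      exact anti Set.self_mem_Ici hy hy
  rw [hF0] at key
  simp only [hF] at key
  linarith

lemma convex_pos {p : ℝ} (hp0 : 0 ≤ p) (hp1 : p ≤ 1) (h : ℝ) :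
    0 < 1 - p + p * Real.exp h := by
  rcases eq_or_lt_of_le hp1 with rfl | h1
  · simpa using Real.exp_pos h
  · have := Real.exp_pos h; nlinarith

lemma hoeffding_fin {ι : Type*} [Fintype ι] [Nonempty ι] (w Y : ι → ℝ)
    (hw : ∀ i, 0 ≤ w i) (hw1 : ∑ i, w i = 1) {a b : ℝ} (hab : a ≤ b)
    (hYa : ∀ i, a ≤ Y i) (hYb : ∀ i, Y i ≤ b) (c : ℝ) :
    Real.log (∑ i, w i * Real.exp (c * Y i)) ≤
      c * (∑ i, w i * Y i) + c ^ 2 * (b - a) ^ 2 / 8 := by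
  have hpos : 0 < ∑ i, w i * Real.exp (c * Y i) := by
    have hex : ∃ i, 0 < w i := by
      by_contra hcon
      push_neg at hcon
      have : (∑ i, w i) ≤ 0 := Finset.sum_nonpos fun i _ => hcon i
      rw [hw1] at this; linarith
    obtain ⟨i, hi⟩ := hex
    exact Finset.sum_pos' (fun i _ => mul_nonneg (hw i) (Real.exp_pos _).le)
      ⟨i, Finset.mem_univ i, mul_pos hi (Real.exp_pos _)⟩
  rcases eq_or_lt_of_le hab with rfl | hlt
  · have hYeq : ∀ i, Y i = a := fun i => le_antisymm (hYb i) (hYa i)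
    have h1 : (∑ i, w i * Real.exp (c * Y i)) = Real.exp (c * a) := by
      simp only [hYeq]
      rw [← Finset.sum_mul, hw1, one_mul]
    have h2 : (∑ i, w i * Y i) = a := by
      simp only [hYeq]
      rw [← Finset.sum_mul, hw1, one_mul]
    rw [h1, h2, Real.log_exp]
    nlinarith [sq_nonneg c]
  · have hba : (0:ℝ) < b - a := sub_pos.2 hlt
    set μ := ∑ i, w i * Y i with hμ
    set p := (μ - a) / (b - a) with hp
    have hμa : a ≤ μ := by
      have : (∑ i, w i * a) ≤ μ :=
        Finset.sum_le_sum fun i _ => mul_le_mul_of_nonneg_left (hYa i) (hw i)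
      rwa [← Finset.sum_mul, hw1, one_mul] at this
    have hμb : μ ≤ b := by
      have : μ ≤ (∑ i, w i * b) :=
        Finset.sum_le_sum fun i _ => mul_le_mul_of_nonneg_left (hYb i) (hw i)
      rwa [← Finset.sum_mul, hw1, one_mul] at this
    have hp0 : 0 ≤ p := div_nonneg (by linarith) hba.le
    have hp1 : p ≤ 1 := (div_le_one hba).2 (by linarith)
    -- pointwise convexity bound
    have pointwise : ∀ i, (b - a) * Real.exp (c * Y i) ≤
        (b - Y i) * Real.exp (c * a) + (Y i - a) * Real.exp (c * b) := by
      intro i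
      have ht0 : 0 ≤ (Y i - a) / (b - a) := div_nonneg (by linarith [hYa i]) hba.le
      have ht1 : 0 ≤ (b - Y i) / (b - a) := div_nonneg (by linarith [hYb i]) hba.le
      have hts : (b - Y i) / (b - a) + (Y i - a) / (b - a) = 1 := by
        field_simp
        ring
      have hc := convexOn_exp.2 (Set.mem_univ (c * a)) (Set.mem_univ (c * b)) ht1 ht0 hts
      simp only [smul_eq_mul] at hc
      have harg : (b - Y i) / (b - a) * (c * a) + (Y i - a) / (b - a) * (c * b) = c * Y i := by
        field_simp
        try ring
      rw [harg] at hc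
      have := mul_le_mul_of_nonneg_left hc hba.le
      calc (b - a) * Real.exp (c * Y i)
          ≤ (b - a) * ((b - Y i) / (b - a) * Real.exp (c * a)
              + (Y i - a) / (b - a) * Real.exp (c * b)) := this
        _ = (b - Y i) * Real.exp (c * a) + (Y i - a) * Real.exp (c * b) := by
            field_simp
            try ring
    -- summed bound
    have step : ∑ i, w i * Real.exp (c * Y i) ≤
        (1 - p) * Real.exp (c * a) + p * Real.exp (c * b) := by
      have hsum : (b - a) * ∑ i, w i * Real.exp (c * Y i) ≤
          (b - μ) * Real.exp (c * a) + (μ - a) * Real.exp (c * b) := by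
        have e1 : ∑ i, w i * (b - Y i) = b - μ := by
          simp only [mul_sub]
          rw [Finset.sum_sub_distrib, ← Finset.sum_mul, hw1, one_mul]
        have e2 : ∑ i, w i * (Y i - a) = μ - a := by
          simp only [mul_sub]
          rw [Finset.sum_sub_distrib, ← Finset.sum_mul, hw1, one_mul]
        calc (b - a) * ∑ i, w i * Real.exp (c * Y i)
            = ∑ i, w i * ((b - a) * Real.exp (c * Y i)) := by
              rw [Finset.mul_sum]; exact Finset.sum_congr rfl fun i _ => by ring
          _ ≤ ∑ i, w i * ((b - Y i) * Real.exp (c * a) + (Y i - a) * Real.exp (c * b)) :=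
              Finset.sum_le_sum fun i _ => mul_le_mul_of_nonneg_left (pointwise i) (hw i)
          _ = (∑ i, w i * (b - Y i)) * Real.exp (c * a)
              + (∑ i, w i * (Y i - a)) * Real.exp (c * b) := by
              rw [Finset.sum_mul, Finset.sum_mul, ← Finset.sum_add_distrib]
              exact Finset.sum_congr rfl fun i _ => by ring
          _ = (b - μ) * Real.exp (c * a) + (μ - a) * Real.exp (c * b) := by rw [e1, e2]
      have h1p : 1 - p = (b - μ) / (b - a) := by
        rw [hp]; field_simp; ring
      rw [h1p, hp]
      rw [div_mul_eq_mul_div, div_mul_eq_mul_div, ← add_div, le_div_iff₀ hba]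
      linarith [hsum]
    have hZpos := convex_pos hp0 hp1 (c * (b - a))
    have split : (1 - p) * Real.exp (c * a) + p * Real.exp (c * b) =
        Real.exp (c * a) * (1 - p + p * Real.exp (c * (b - a))) := by
      have : c * b = c * a + c * (b - a) := by ring
      rw [this, Real.exp_add]; ring
    have hlog := Real.log_le_log hpos step
    rw [split, Real.log_mul (Real.exp_pos _).ne' hZpos.ne', Real.log_exp] at hlog
    have hcore := core_scalar hp0 hp1 (c * (b - a))
    have hpb : p * (b - a) = μ - a := by
      rw [hp]; field_simp
    calc Real.log (∑ i, w i * Real.exp (c * Y i))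
        ≤ c * a + (p * (c * (b - a)) + (c * (b - a)) ^ 2 / 8) := by linarith
      _ = c * a + c * (p * (b - a)) + c ^ 2 * (b - a) ^ 2 / 8 := by ring
      _ = c * μ + c ^ 2 * (b - a) ^ 2 / 8 := by rw [hpb]; ring

lemma jensen_exp_lower {ι : Type*} [Fintype ι] (w z : ι → ℝ)
    (hw : ∀ i, 0 ≤ w i) (hw1 : ∑ i, w i = 1) :
    ∑ i, w i * z i ≤ Real.log (∑ i, w i * Real.exp (z i)) := by
  have h := convexOn_exp.map_sum_le (t := Finset.univ) (fun i _ => hw i) hw1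
    (fun i _ => Set.mem_univ (z i))
  simp only [smul_eq_mul] at h
  calc ∑ i, w i * z i = Real.log (Real.exp (∑ i, w i * z i)) := (Real.log_exp _).symm
    _ ≤ Real.log (∑ i, w i * Real.exp (z i)) := Real.log_le_log (Real.exp_pos _) h

lemma wsum_exp_pos {ι : Type*} [Fintype ι] (w z : ι → ℝ)
    (hw : ∀ i, 0 ≤ w i) (hw1 : ∑ i, w i = 1) :
    0 < ∑ i, w i * Real.exp (z i) := by
  have hex : ∃ i, 0 < w i := by
    by_contra hcon
    push_neg at hcon
    have : (∑ i, w i) ≤ 0 := Finset.sum_nonpos fun i _ => hcon i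
    rw [hw1] at this; linarith
  obtain ⟨i, hi⟩ := hex
  exact Finset.sum_pos' (fun i _ => mul_nonneg (hw i) (Real.exp_pos _).le)
    ⟨i, Finset.mem_univ i, mul_pos hi (Real.exp_pos _)⟩

lemma lse_mono {ι : Type*} [Fintype ι] [Nonempty ι] (w aa : ι → ℝ)
    (hw : ∀ i, 0 ≤ w i) (hw1 : ∑ i, w i = 1) {e e' : ℝ} (he : 0 < e) (hee : e ≤ e') :
    e' * Real.log (∑ i, w i * Real.exp (aa i / e')) ≤
      e * Real.log (∑ i, w i * Real.exp (aa i / e)) := by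
  have he' : 0 < e' := lt_of_lt_of_le he hee
  have hp : 1 ≤ e' / e := (one_le_div he).2 hee
  have key := Real.arith_mean_le_rpow_mean Finset.univ w (fun i => Real.exp (aa i / e'))
    (fun i _ => hw i) hw1 (fun i _ => (Real.exp_pos _).le) hp
  have hz : ∀ i : ι, Real.exp (aa i / e') ^ (e' / e) = Real.exp (aa i / e) := by
    intro i
    rw [Real.rpow_def_of_pos (Real.exp_pos _), Real.log_exp]
    congr 1
    field_simp
  simp only [hz] at key
  have hdiv : 1 / (e' / e) = e / e' := one_div_div e' e
  rw [hdiv] at key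
  have hpos1 : 0 < ∑ i, w i * Real.exp (aa i / e') := wsum_exp_pos w _ hw hw1
  have hpos2 : 0 < ∑ i, w i * Real.exp (aa i / e) := wsum_exp_pos w _ hw hw1
  have hlog := Real.log_le_log hpos1 key
  rw [Real.log_rpow hpos2] at hlog
  have := mul_le_mul_of_nonneg_left hlog he'.le
  calc e' * Real.log (∑ i, w i * Real.exp (aa i / e'))
      ≤ e' * (e / e' * Real.log (∑ i, w i * Real.exp (aa i / e))) := this
    _ = e * Real.log (∑ i, w i * Real.exp (aa i / e)) := by
        rw [← mul_assoc]
        congr 1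
        field_simp


section Helpers

variable {d : ℕ}

-- monotonicity of e ↦ e log d - e log Σ exp(θ/e)
lemma L_mono_aux (hd : 2 ≤ d) (th : Fin d → ℝ) {e e' : ℝ} (he : 0 < e) (hee : e ≤ e') :
    e * Real.log d - e * Real.log (∑ j, Real.exp (th j / e)) ≤
      e' * Real.log d - e' * Real.log (∑ j, Real.exp (th j / e')) := by
  haveI : Nonempty (Fin d) := ⟨⟨0, by omega⟩⟩
  have hd0 : (0:ℝ) < d := by positivity
  have hw : ∀ i : Fin d, 0 ≤ (fun _ : Fin d => 1 / (d:ℝ)) i := fun i => by positivity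
  have hw1 : ∑ _i : Fin d, (1 / (d:ℝ)) = 1 := by
    rw [Finset.sum_const, Finset.card_univ, Fintype.card_fin, nsmul_eq_mul]
    field_simp
  have key := lse_mono (fun _ : Fin d => 1 / (d:ℝ)) th hw hw1 he hee
  have hrw : ∀ ee : ℝ, (∑ i, (1 / (d:ℝ)) * Real.exp (th i / ee)) =
      (∑ i, Real.exp (th i / ee)) / d := by
    intro ee
    rw [Finset.sum_div]
    exact Finset.sum_congr rfl fun i _ => (one_div_mul_eq_div _ _)
  simp only [hrw] at key
  have hZ : ∀ ee : ℝ, (0:ℝ) < ∑ i, Real.exp (th i / ee) := fun ee =>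
    Finset.sum_pos (fun i _ => Real.exp_pos _) Finset.univ_nonempty
  rw [Real.log_div (hZ e).ne' hd0.ne', Real.log_div (hZ e').ne' hd0.ne'] at key
  have h1 : e' * (Real.log (∑ i, Real.exp (th i / e')) - Real.log d) ≤
      e * (Real.log (∑ i, Real.exp (th i / e)) - Real.log d) := key
  nlinarith [h1]

end Helpers
/-- Regret guarantee for AdaHedge on linear losses f_t(x) = ⟨g_t, x⟩:
if the sequences x_t, θ_t, η_t, ρ_t satisfy the AdaHedge recursions (with κ = √(log d)
and g_1 not a constant vector), then for every T ≥ 1 and every u ∈ Δ_d,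
Σ_{t=1}^T ⟨g_t, x_t⟩ − Σ_{t=1}^T ⟨g_t, u⟩ ≤ 2 √((4 + log d) Σ_{t=1}^T ‖g_t‖_∞²). -/
theorem adahedge_regret (d : ℕ) (hd : 2 ≤ d) (κ : ℝ) (hκ : κ = Real.sqrt (Real.log d))
    (g : ℕ → Fin d → ℝ)
    (hg1 : Finset.univ.inf' (Finset.univ_nonempty_iff.mpr ⟨⟨0, by omega⟩⟩) (g 1) <
           Finset.univ.sup' (Finset.univ_nonempty_iff.mpr ⟨⟨0, by omega⟩⟩) (g 1))
    (x : ℕ → Fin d → ℝ) (θ : ℕ → Fin d → ℝ) (η ρ : ℕ → ℝ)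
    (hx1 : ∀ j, x 1 j = 1 / d) (hθ1 : θ 1 = 0) (hη1 : η 1 = 0)
    (hρ1 : ρ 1 = (∑ j, g 1 j * x 1 j) -
            Finset.univ.inf' (Finset.univ_nonempty_iff.mpr ⟨⟨0, by omega⟩⟩) (g 1))
    (hρ : ∀ t, 2 ≤ t →
      ρ t = η t * Real.log (∑ j, x t j * Real.exp (-g t j / η t)) + ∑ j, g t j * x t j)
    (hθ : ∀ t, 1 ≤ t → θ (t + 1) = θ t - g t)
    (hη : ∀ t, 1 ≤ t → η (t + 1) = η t + ρ t / κ ^ 2)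
    (hx : ∀ t, 1 ≤ t → ∀ j,
      x (t + 1) j = Real.exp (θ (t + 1) j / η (t + 1)) / ∑ i, Real.exp (θ (t + 1) i / η (t + 1)))
    (T : ℕ) (hT : 1 ≤ T)
    (u : Fin d → ℝ) (hu : ∀ j, 0 ≤ u j ∧ u j ≤ 1) (husum : ∑ j, u j = 1) :
    (∑ t ∈ Finset.Icc 1 T, ∑ j, g t j * x t j) - ∑ t ∈ Finset.Icc 1 T, ∑ j, g t j * u j ≤
      2 * Real.sqrt ((4 + Real.log d) *
        ∑ t ∈ Finset.Icc 1 T,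
          (Finset.univ.sup' (Finset.univ_nonempty_iff.mpr ⟨⟨0, by omega⟩⟩)
            (fun j => |g t j|)) ^ 2) := by
  haveI hne : Nonempty (Fin d) := ⟨⟨0, by omega⟩⟩
  have hne' : (Finset.univ : Finset (Fin d)).Nonempty := Finset.univ_nonempty
  have hd1 : (1:ℝ) < d := by exact_mod_cast (by omega : 1 < d)
  have hd0 : (0:ℝ) < d := by positivity
  set n : ℝ := Real.log d with hn
  have hnpos : 0 < n := Real.log_pos hd1
  have hκ2 : κ ^ 2 = n := by rw [hκ]; exact Real.sq_sqrt (Real.log_nonneg hd1.le)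
  -- abbreviations
  set a : ℕ → ℝ := fun t => Finset.univ.inf' hne' (g t) with ha
  set b : ℕ → ℝ := fun t => Finset.univ.sup' hne' (g t) with hb
  set sN : ℕ → ℝ := fun t => Finset.univ.sup' hne' (fun j => |g t j|) with hsN
  set S : ℕ → ℝ := fun t => ∑ j, g t j * x t j with hS
  set Z : ℕ → ℝ → ℝ := fun t e => ∑ j, Real.exp (θ t j / e) with hZdef
  set L : ℕ → ℝ → ℝ := fun t e => e * n - e * Real.log (Z t e) with hLdef
  -- basic bounds on g
  have hag : ∀ t j, a t ≤ g t j := fun t j => by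
    simp only [ha]; exact Finset.inf'_le _ (Finset.mem_univ j)
  have hgb : ∀ t j, g t j ≤ b t := fun t j => by
    simp only [hb]; exact Finset.le_sup' _ (Finset.mem_univ j)
  have hgs : ∀ t j, |g t j| ≤ sN t := fun t j => by
    simp only [hsN]; exact Finset.le_sup' (fun j => |g t j|) (Finset.mem_univ j)
  have hsN0 : ∀ t, 0 ≤ sN t := fun t => le_trans (abs_nonneg _) (hgs t ⟨0, by omega⟩)
  have hba2s : ∀ t, b t - a t ≤ 2 * sN t := by
    intro t
    obtain ⟨j1, _, hj1⟩ := Finset.exists_mem_eq_sup' hne' (g t)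
    obtain ⟨j2, _, hj2⟩ := Finset.exists_mem_eq_inf' hne' (g t)
    have h1 : b t = g t j1 := by simp only [hb]; exact hj1
    have h2 : a t = g t j2 := by simp only [ha]; exact hj2
    rw [h1, h2]
    linarith [(abs_le.mp (hgs t j1)).2, (abs_le.mp (hgs t j2)).1]
  have hab : ∀ t, a t ≤ b t := fun t =>
    le_trans (hag t ⟨0, by omega⟩) (hgb t ⟨0, by omega⟩)
  -- simplex facts
  have hZpos : ∀ t e, 0 < Z t e := fun t e =>
    Finset.sum_pos (fun i _ => Real.exp_pos _) hne'
  have hxsum : ∀ t, 1 ≤ t → ∑ j, x t j = 1 := by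
    intro t ht
    rcases Nat.lt_or_ge t 2 with h2 | h2
    · have ht1 : t = 1 := by omega
      subst ht1
      simp only [hx1]
      rw [Finset.sum_const, Finset.card_univ, Fintype.card_fin, nsmul_eq_mul]
      field_simp
    · obtain ⟨k, rfl⟩ : ∃ k, t = k + 1 := ⟨t - 1, by omega⟩
      have hk : 1 ≤ k := by omega
      simp only [hx k hk]
      rw [← Finset.sum_div, div_self (Finset.sum_pos (fun i _ => Real.exp_pos _) hne').ne']
  have hxpos : ∀ t, 1 ≤ t → ∀ j, 0 ≤ x t j := by
    intro t ht j
    rcases Nat.lt_or_ge t 2 with h2 | h2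
    · have ht1 : t = 1 := by omega
      subst ht1
      rw [hx1 j]
      positivity
    · obtain ⟨k, rfl⟩ : ∃ k, t = k + 1 := ⟨t - 1, by omega⟩
      have hk : 1 ≤ k := by omega
      rw [hx k hk j]
      have := Finset.sum_pos (fun i (_ : i ∈ Finset.univ) =>
        Real.exp_pos (θ (k+1) i / η (k+1))) hne'
      positivity
  -- weighted average bounds
  have hSa : ∀ t, 1 ≤ t → a t ≤ S t := by
    intro t ht
    have h1 : ∑ j, a t * x t j ≤ ∑ j, g t j * x t j :=
      Finset.sum_le_sum fun j _ => mul_le_mul_of_nonneg_right (hag t j) (hxpos t ht j)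
    have h2 : ∑ j, a t * x t j = a t := by
      rw [← Finset.mul_sum, hxsum t ht, mul_one]
    simp only [hS]
    linarith
  have hSb : ∀ t, 1 ≤ t → S t ≤ b t := by
    intro t ht
    have h1 : ∑ j, g t j * x t j ≤ ∑ j, b t * x t j :=
      Finset.sum_le_sum fun j _ => mul_le_mul_of_nonneg_right (hgb t j) (hxpos t ht j)
    have h2 : ∑ j, b t * x t j = b t := by
      rw [← Finset.mul_sum, hxsum t ht, mul_one]
    simp only [hS]
    linarith
  -- eta recursion with n
  have hηn : ∀ t, 1 ≤ t → η (t + 1) = η t + ρ t / n := by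
    intro t ht; rw [hη t ht, hκ2]
  -- positivity chain
  have hρ1pos : 0 < ρ 1 := by
    have hab1 : a 1 < b 1 := hg1
    obtain ⟨j1, _, hj1⟩ := Finset.exists_mem_eq_sup' hne' (g 1)
    have hbj : b 1 = g 1 j1 := by simp only [hb]; exact hj1
    have hxj : ∀ j : Fin d, (0:ℝ) < x 1 j := fun j => by rw [hx1 j]; positivity
    have hlt : ∑ j, a 1 * x 1 j < ∑ j, g 1 j * x 1 j := by
      apply Finset.sum_lt_sum
      · intro j _
        exact mul_le_mul_of_nonneg_right (hag 1 j) (hxj j).le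
      · exact ⟨j1, Finset.mem_univ j1,
          mul_lt_mul_of_pos_right (by rw [← hbj]; exact hab1) (hxj j1)⟩
    have hsum : ∑ j, a 1 * x 1 j = a 1 := by
      rw [← Finset.mul_sum, hxsum 1 le_rfl, mul_one]
    rw [hρ1]
    show 0 < (∑ j, g 1 j * x 1 j) - a 1
    linarith
  have hρpos2 : ∀ t, 2 ≤ t → 0 < η t → 0 ≤ ρ t := by
    intro t ht hηt
    rw [hρ t ht]
    have hj := jensen_exp_lower (fun j => x t j) (fun j => -g t j / η t)
      (fun j => hxpos t (by omega) j) (hxsum t (by omega))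
    have hrw : ∀ j : Fin d, x t j * (-g t j / η t) = -(g t j * x t j) / η t :=
      fun j => by ring
    simp only [hrw] at hj
    rw [← Finset.sum_div, Finset.sum_neg_distrib] at hj
    have h3 := mul_le_mul_of_nonneg_left hj hηt.le
    have h4 : η t * (-(∑ j, g t j * x t j) / η t) = -(∑ j, g t j * x t j) := by
      field_simp
    linarith
  have hηpos : ∀ t, 2 ≤ t → 0 < η t := by
    intro t ht
    induction t, ht using Nat.le_induction with
    | base =>
      rw [hηn 1 le_rfl, hη1]
      have := hρ1pos
      positivity
    | succ t ht ih =>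
      rw [hηn t (by omega)]
      have h1 := hρpos2 t ht ih
      have h2 : 0 ≤ ρ t / n := div_nonneg h1 hnpos.le
      linarith
  have hρ0 : ∀ t, 1 ≤ t → 0 ≤ ρ t := by
    intro t ht
    rcases Nat.lt_or_ge t 2 with h2 | h2
    · have ht1 : t = 1 := by omega
      subst ht1
      exact hρ1pos.le
    · exact hρpos2 t h2 (hηpos t h2)
  have hηmono : ∀ t, 1 ≤ t → η t ≤ η (t + 1) := by
    intro t ht
    rw [hηn t ht]
    have : 0 ≤ ρ t / n := div_nonneg (hρ0 t ht) hnpos.le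
    linarith
  -- rho upper bounds
  have hρδ : ∀ t, 1 ≤ t → ρ t ≤ b t - a t := by
    intro t ht
    rcases Nat.lt_or_ge t 2 with h2 | h2
    · have ht1 : t = 1 := by omega
      subst ht1
      rw [hρ1]
      show (∑ j, g 1 j * x 1 j) - a 1 ≤ b 1 - a 1
      have := hSb 1 le_rfl
      simp only [hS] at this
      linarith
    · have hηt := hηpos t h2
      rw [hρ t h2]
      have hpos := wsum_exp_pos (fun j => x t j) (fun j => -g t j / η t)
        (fun j => hxpos t ht j) (hxsum t ht)
      have h1 : (∑ j, x t j * Real.exp (-g t j / η t)) ≤ Real.exp (-a t / η t) := by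
        calc (∑ j, x t j * Real.exp (-g t j / η t))
            ≤ ∑ j, x t j * Real.exp (-a t / η t) :=
              Finset.sum_le_sum fun j _ => mul_le_mul_of_nonneg_left
                (Real.exp_le_exp.2 ((div_le_div_iff_of_pos_right hηt).2 (neg_le_neg (hag t j))))
                (hxpos t ht j)
          _ = Real.exp (-a t / η t) := by
              rw [← Finset.sum_mul, hxsum t ht, one_mul]
      have h2 := Real.log_le_log hpos h1
      rw [Real.log_exp] at h2
      have h3 := mul_le_mul_of_nonneg_left h2 hηt.le
      have h4 : η t * (-a t / η t) = -a t := by field_simp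
      have h5 := hSb t ht
      simp only [hS] at h5
      linarith
  have hρhoeff : ∀ t, 2 ≤ t → ρ t * (8 * η t) ≤ (b t - a t) ^ 2 := by
    intro t ht
    have hηt := hηpos t ht
    have ht1 : 1 ≤ t := by omega
    have hh := hoeffding_fin (fun j => x t j) (g t)
      (fun j => hxpos t ht1 j) (hxsum t ht1) (hab t) (hag t) (hgb t) (-(1 / η t))
    have hrwe : ∀ j : Fin d, -g t j / η t = -(1 / η t) * g t j := fun j => by ring
    have hSxg : (∑ j, x t j * g t j) = ∑ j, g t j * x t j :=
      Finset.sum_congr rfl fun j _ => mul_comm _ _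
    rw [hSxg] at hh
    rw [hρ t ht]
    simp only [hrwe]
    set Lg := Real.log (∑ j, x t j * Real.exp (-(1 / η t) * g t j)) with hLg
    set M := ∑ j, g t j * x t j with hM
    set D := b t - a t with hD
    have key : ∀ e : ℝ, 0 < e → Lg ≤ -(1/e) * M + (-(1/e))^2 * D^2 / 8 →
        (e * Lg + M) * (8 * e) ≤ D^2 := by
      intro e he h
      have h8 : (0:ℝ) < 8 * e^2 := by positivity
      have hmul := mul_le_mul_of_nonneg_left h h8.le
      have heq : 8 * e^2 * (-(1/e) * M + (-(1/e))^2 * D^2 / 8) = -(8*e*M) + D^2 := by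
        field_simp
      rw [heq] at hmul
      nlinarith [hmul]
    exact key (η t) hηt hh
  -- theta sum
  have hθsum : ∀ T', 1 ≤ T' → ∀ j, θ (T' + 1) j = -∑ t ∈ Finset.Icc 1 T', g t j := by
    intro T' hT'
    induction T', hT' using Nat.le_induction with
    | base =>
      intro j
      rw [hθ 1 le_rfl, hθ1]
      simp
    | succ T' hT' ih =>
      intro j
      rw [hθ (T' + 1) (by omega)]
      simp only [Pi.sub_apply]
      rw [ih j, Finset.sum_Icc_succ_top (by omega : 1 ≤ T' + 1)]
      ring
  -- mix loss identity
  have hmix : ∀ t, 2 ≤ t → S t - ρ t = L (t + 1) (η t) - L t (η t) := by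
    intro t ht
    obtain ⟨k, rfl⟩ : ∃ k, t = k + 1 := ⟨t - 1, by omega⟩
    have hk : 1 ≤ k := by omega
    have hid : (∑ j, x (k+1) j * Real.exp (-g (k+1) j / η (k+1))) =
        Z (k+1+1) (η (k+1)) / Z (k+1) (η (k+1)) := by
      simp only [hZdef]
      rw [Finset.sum_div]
      refine Finset.sum_congr rfl fun j _ => ?_
      rw [hx k hk j, hθ (k+1) (by omega)]
      simp only [Pi.sub_apply]
      rw [div_mul_eq_mul_div, ← Real.exp_add]
      congr 1
      ring
    simp only [hS, hLdef]
    rw [hρ (k+1) ht, hid, Real.log_div (hZpos _ _).ne' (hZpos _ _).ne']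
    ring
  -- L two lower bound
  have hL2 : ∀ e : ℝ, 0 < e → a 1 ≤ L 2 e := by
    intro e he
    have hθ2 : θ 2 = -g 1 := by rw [hθ 1 le_rfl, hθ1]; simp
    simp only [hLdef, hZdef, hθ2, Pi.neg_apply]
    have hspos : (0:ℝ) < ∑ j, Real.exp (-g 1 j / e) :=
      Finset.sum_pos (fun i _ => Real.exp_pos _) hne'
    have h1 : (∑ j, Real.exp (-g 1 j / e)) ≤ d * Real.exp (-a 1 / e) := by
      calc (∑ j, Real.exp (-g 1 j / e))
          ≤ ∑ _j : Fin d, Real.exp (-a 1 / e) :=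
            Finset.sum_le_sum fun j _ =>
              Real.exp_le_exp.2 ((div_le_div_iff_of_pos_right he).2 (neg_le_neg (hag 1 j)))
        _ = d * Real.exp (-a 1 / e) := by
            rw [Finset.sum_const, Finset.card_univ, Fintype.card_fin, nsmul_eq_mul]
    have h2 := Real.log_le_log hspos h1
    rw [Real.log_mul hd0.ne' (Real.exp_pos _).ne', Real.log_exp] at h2
    have h3 := mul_le_mul_of_nonneg_left h2 he.le
    have h4 : e * (Real.log d + -a 1 / e) = e * n - a 1 := by
      rw [hn]
      field_simp
      ring
    rw [h4] at h3
    linarith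
  -- L monotone
  have hLmono : ∀ t : ℕ, ∀ e e' : ℝ, 0 < e → e ≤ e' → L t e ≤ L t e' := by
    intro t e e' he hee
    simp only [hLdef, hZdef, hn]
    exact L_mono_aux hd (θ t) he hee
  -- telescoping
  have htel : ∀ T', 1 ≤ T' →
      (∑ t ∈ Finset.Icc 1 T', (S t - ρ t)) ≤ L (T' + 1) (η (T' + 1)) := by
    intro T' hT'
    induction T', hT' using Nat.le_induction with
    | base =>
      rw [Finset.Icc_self, Finset.sum_singleton]
      have h1 : S 1 - ρ 1 = a 1 := by
        simp only [hS]
        rw [hρ1]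
        show (∑ j, g 1 j * x 1 j) - ((∑ j, g 1 j * x 1 j) - a 1) = a 1
        ring
      rw [h1]
      exact hL2 (η 2) (hηpos 2 le_rfl)
    | succ T' hT' ih =>
      rw [Finset.sum_Icc_succ_top (by omega : 1 ≤ T' + 1)]
      have hm := hmix (T' + 1) (by omega)
      have h1 : L (T' + 1 + 1) (η (T' + 1)) ≤ L (T' + 1 + 1) (η (T' + 1 + 1)) :=
        hLmono _ _ _ (hηpos (T' + 1) (by omega)) (hηmono (T' + 1) (by omega))
      linarith
  -- final mix bound
  have hfinal : L (T + 1) (η (T + 1)) ≤ η (T + 1) * n + ∑ t ∈ Finset.Icc 1 T, ∑ j, g t j * u j := by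
    have hη' := hηpos (T + 1) (by omega)
    have hLj : ∀ j : Fin d, L (T + 1) (η (T + 1)) ≤ η (T + 1) * n + ∑ t ∈ Finset.Icc 1 T, g t j := by
      intro j
      simp only [hLdef, hZdef]
      have h1 : Real.exp (θ (T+1) j / η (T+1)) ≤ ∑ i, Real.exp (θ (T+1) i / η (T+1)) :=
        Finset.single_le_sum (f := fun i => Real.exp (θ (T+1) i / η (T+1)))
          (fun i _ => (Real.exp_pos _).le) (Finset.mem_univ j)
      have h2 := Real.log_le_log (Real.exp_pos _) h1
      rw [Real.log_exp] at h2
      have h3 := mul_le_mul_of_nonneg_left h2 hη'.le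
      have h4 : η (T+1) * (θ (T+1) j / η (T+1)) = θ (T+1) j := by field_simp
      have h5 := hθsum T hT j
      rw [h4, h5] at h3
      linarith
    calc L (T + 1) (η (T + 1)) = ∑ j, u j * L (T + 1) (η (T + 1)) := by
          rw [← Finset.sum_mul, husum, one_mul]
      _ ≤ ∑ j, u j * (η (T + 1) * n + ∑ t ∈ Finset.Icc 1 T, g t j) :=
          Finset.sum_le_sum fun j _ => mul_le_mul_of_nonneg_left (hLj j) (hu j).1
      _ = η (T + 1) * n + ∑ t ∈ Finset.Icc 1 T, ∑ j, g t j * u j := by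
          simp only [mul_add]
          rw [Finset.sum_add_distrib, ← Finset.sum_mul, husum, one_mul]
          congr 1
          simp only [Finset.mul_sum]
          rw [Finset.sum_comm]
          exact Finset.sum_congr rfl fun t _ => Finset.sum_congr rfl fun j _ => mul_comm _ _
  -- sum of rho telescope
  have hsumρ : ∀ T', 1 ≤ T' → ∑ t ∈ Finset.Icc 1 T', ρ t = n * η (T' + 1) := by
    intro T' hT'
    induction T', hT' using Nat.le_induction with
    | base =>
      rw [Finset.Icc_self, Finset.sum_singleton, hηn 1 le_rfl, hη1]
      field_simp
      ring
    | succ T' hT' ih =>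
      rw [Finset.sum_Icc_succ_top (by omega : 1 ≤ T' + 1), ih, hηn (T' + 1) (by omega)]
      field_simp
  -- main quadratic claim
  have hclaimC : ∀ T', 1 ≤ T' →
      (n * η (T' + 1)) ^ 2 ≤ (4 + n) * ∑ t ∈ Finset.Icc 1 T', sN t ^ 2 := by
    intro T' hT'
    induction T', hT' using Nat.le_induction with
    | base =>
      rw [Finset.Icc_self, Finset.sum_singleton]
      have he : n * η 2 = ρ 1 := by
        rw [hηn 1 le_rfl, hη1]
        field_simp
        ring
      rw [he]
      have h2s : ρ 1 ≤ 2 * sN 1 := le_trans (hρδ 1 le_rfl) (hba2s 1)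
      have hsq : ρ 1 * ρ 1 ≤ (2 * sN 1) * (2 * sN 1) :=
        mul_self_le_mul_self hρ1pos.le h2s
      nlinarith [hsq, mul_nonneg hnpos.le (mul_self_nonneg (sN 1))]
    | succ T' hT' ih =>
      rw [Finset.sum_Icc_succ_top (by omega : 1 ≤ T' + 1)]
      have he2 : n * η (T' + 1 + 1) = n * η (T' + 1) + ρ (T' + 1) := by
        rw [hηn (T' + 1) (by omega)]
        field_simp
      rw [he2]
      have hη' := hηpos (T' + 1) (by omega)
      have hρ' := hρ0 (T' + 1) (by omega)
      have hδ' := hρδ (T' + 1) (by omega)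
      have h8 := hρhoeff (T' + 1) (by omega)
      have h2s := hba2s (T' + 1)
      have hD0 : 0 ≤ b (T' + 1) - a (T' + 1) := sub_nonneg.2 (hab (T' + 1))
      have hs0 := hsN0 (T' + 1)
      have hDs : (b (T' + 1) - a (T' + 1))^2 ≤ 4 * sN (T' + 1)^2 := by nlinarith
      have hcross : 2 * ρ (T' + 1) * (n * η (T' + 1)) ≤ n * sN (T' + 1)^2 := by
        have h1 := mul_le_mul_of_nonneg_left h8 (by positivity : (0:ℝ) ≤ n/4)
        have h2 := mul_le_mul_of_nonneg_left hDs (by positivity : (0:ℝ) ≤ n/4)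
        nlinarith [h1, h2]
      have hρsq : ρ (T' + 1)^2 ≤ 4 * sN (T' + 1)^2 := by nlinarith
      nlinarith [ih, hcross, hρsq]
  -- assembly
  have hMT : (∑ t ∈ Finset.Icc 1 T, S t) - ∑ t ∈ Finset.Icc 1 T, ρ t ≤
      η (T + 1) * n + ∑ t ∈ Finset.Icc 1 T, ∑ j, g t j * u j := by
    rw [← Finset.sum_sub_distrib]
    exact le_trans (htel T hT) hfinal
  have hreg : (∑ t ∈ Finset.Icc 1 T, S t) - (∑ t ∈ Finset.Icc 1 T, ∑ j, g t j * u j) ≤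
      2 * (n * η (T + 1)) := by
    have := hsumρ T hT
    linarith [hMT, this.ge, this.le]
  have hηT1 : 0 < η (T + 1) := hηpos (T + 1) (by omega)
  have hnηpos : 0 ≤ n * η (T + 1) := by positivity
  have hfin : 2 * (n * η (T + 1)) ≤
      2 * Real.sqrt ((4 + n) * ∑ t ∈ Finset.Icc 1 T, sN t ^ 2) := by
    have h1 : n * η (T + 1) = Real.sqrt ((n * η (T + 1)) ^ 2) :=
      (Real.sqrt_sq hnηpos).symm
    rw [h1]
    have := Real.sqrt_le_sqrt (hclaimC T hT)
    linarith
  calc (∑ t ∈ Finset.Icc 1 T, S t) - ∑ t ∈ Finset.Icc 1 T, ∑ j, g t j * u j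
      ≤ 2 * (n * η (T + 1)) := hreg
    _ ≤ 2 * Real.sqrt ((4 + n) * ∑ t ∈ Finset.Icc 1 T, sN t ^ 2) := hfin
end

section
/- Let n ≥ 1 be an integer and let w_1, …, w_n be real numbers with 0 ≤ w_i ≤ 1 for all i. Then Σ_{i=1}^n w_i/√i ≤ 2 √(Σ_{i=1}^n w_i). -/
open Finset

/-! Induct on `n`. Writing `S` for the sum of the first `n` weights, adding the
weight `v ≤ 1` at index `n + 1 ≥ S + v` costs `v / √(n + 1)` on the left and gains
`2 (√(S + v) - √S)` on the right, and the latter dominates by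
`v = (√(S + v) - √S) (√(S + v) + √S) ≤ (√(S + v) - √S) · 2 √(n + 1)`. -/

theorem div_sqrt_le_two_mul_sqrt_add_sub_sqrt {s v m : ℝ} (hs : 0 ≤ s) (hv : 0 ≤ v)
    (hm : 0 < m) (hsvm : s + v ≤ m) :
    v / √m ≤ 2 * (√(s + v) - √s) := by
  have hgap : 0 ≤ √(s + v) - √s := sub_nonneg.2 (Real.sqrt_le_sqrt (by linarith))
  have hsum : √(s + v) + √s ≤ 2 * √m := by
    linarith [Real.sqrt_le_sqrt hsvm, Real.sqrt_le_sqrt (by linarith : s ≤ m)]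
  rw [div_le_iff₀ (Real.sqrt_pos.2 hm)]
  calc v = (√(s + v) - √s) * (√(s + v) + √s) := by
        linear_combination Real.sq_sqrt hs - Real.sq_sqrt (add_nonneg hs hv)
    _ ≤ (√(s + v) - √s) * (2 * √m) := mul_le_mul_of_nonneg_left hsum hgap
    _ = 2 * (√(s + v) - √s) * √m := by ring

theorem weighted_sqrt_sum_general (n : ℕ) (w : ℕ → ℝ)
    (hw : ∀ i ∈ Finset.Icc 1 n, 0 ≤ w i ∧ w i ≤ 1) :
    ∑ i ∈ Finset.Icc 1 n, w i / Real.sqrt i ≤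
      2 * Real.sqrt (∑ i ∈ Finset.Icc 1 n, w i) := by
  induction n with
  | zero => simp
  | succ n ih =>
    have hw' : ∀ i ∈ Icc 1 n, 0 ≤ w i ∧ w i ≤ 1 := fun i hi =>
      hw i (Icc_subset_Icc_right n.le_succ hi)
    obtain ⟨hv, hv1⟩ := hw (n + 1) (by simp)
    have hS : 0 ≤ ∑ i ∈ Icc 1 n, w i := sum_nonneg fun i hi => (hw' i hi).1
    have hSn : ∑ i ∈ Icc 1 n, w i ≤ n := by
      simpa using sum_le_card_nsmul _ _ 1 fun i hi => (hw' i hi).2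
    have hstep := div_sqrt_le_two_mul_sqrt_add_sub_sqrt hS hv
      (by positivity : (0 : ℝ) < (n + 1 : ℕ)) (by push_cast; linarith)
    rw [sum_Icc_succ_top (by omega), sum_Icc_succ_top (by omega)]
    linarith [ih hw']

/-- For weights w_i ∈ [0,1], Σ_{i=1}^n w_i/√i ≤ 2 √(Σ_{i=1}^n w_i). -/
theorem weighted_sqrt_sum (n : ℕ) (hn : 1 ≤ n) (w : ℕ → ℝ)
    (hw : ∀ i ∈ Finset.Icc 1 n, 0 ≤ w i ∧ w i ≤ 1) :
    ∑ i ∈ Finset.Icc 1 n, w i / Real.sqrt i ≤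
      2 * Real.sqrt (∑ i ∈ Finset.Icc 1 n, w i) :=
  weighted_sqrt_sum_general n w hw
end

section
/- There exists a universal constant C > 0 with the following property. Let T ≥ 4 be an integer, let M > 0, α > M, β > 0, δ ∈ (0,1), and let ξ_1, …, ξ_T be independent random variables with E[ξ_t] = 0 and |ξ_t| ≤ M almost surely. Define q_t = α + β t + ξ_t and Q = Σ_{t=1}^T q_t. For each t with 4 ≤ t ≤ T define the least-squares estimators β̂_t = [(t−1) Σ_{s=1}^{t−1} s q_s − (Σ_{s=1}^{t−1} s)(Σ_{s=1}^{t−1} q_s)] / [(t−1) Σ_{s=1}^{t−1} s² − (Σ_{s=1}^{t−1} s)²] and α̂_t = (Σ_{s=1}^{t−1} q_s − β̂_t Σ_{s=1}^{t−1} s)/(t−1), and the prediction Q̂_t = Σ_{s=1}^{t−1} q_s + Σ_{s=t}^T (α̂_t + β̂_t s). Then with probability at least 1 − Tδ, for every t with 4 ≤ t ≤ T: |Q − Q̂_t| ≤ C M T² √(log(1/δ)) (t−1)^{−3/2}. -/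
open MeasureTheory Finset

open Real ProbabilityTheory

variable {Ω : Type*} [MeasurableSpace Ω] {P : Measure Ω}

/-- Integrability of a.e.-bounded measurable functions on a probability space. -/
lemma integrable_of_ae_bound [IsProbabilityMeasure P] {f : Ω → ℝ} (hf : Measurable f)
    {c : ℝ} (h : ∀ᵐ ω ∂P, |f ω| ≤ c) : Integrable f P :=
  (integrable_const c).mono' hf.aestronglyMeasurable (by simpa [Real.norm_eq_abs] using h)

/-- Hoeffding's lemma: mgf bound for a centered bounded random variable. -/
lemma hoeffding_mgf [IsProbabilityMeasure P] {X : Ω → ℝ} (hX : Measurable X)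
    {B : ℝ} (hB : 0 ≤ B) (hbd : ∀ᵐ ω ∂P, |X ω| ≤ B) (hmean : ∫ ω, X ω ∂P = 0) (l : ℝ) :
    mgf X P l ≤ Real.exp (l ^ 2 * B ^ 2 / 2) := by
  rcases hB.eq_or_lt with h0 | hBpos
  · have hX0 : ∀ᵐ ω ∂P, X ω = 0 := by
      filter_upwards [hbd] with ω hω
      have := abs_nonneg (X ω); nlinarith [abs_le.1 (by rw [← h0] at hω; exact hω)]
    have : mgf X P l = 1 := by
      rw [mgf]
      rw [integral_congr_ae (g := fun _ => (1:ℝ)) ?_]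
      · simp
      · filter_upwards [hX0] with ω hω; simp [hω]
    rw [this]; exact Real.one_le_exp (by positivity)
  · -- pointwise convexity bound
    have hXint : Integrable X P := integrable_of_ae_bound hX hbd
    have key : ∀ᵐ ω ∂P, Real.exp (l * X ω) ≤
        Real.cosh (l * B) + (X ω / B) * Real.sinh (l * B) := by
      filter_upwards [hbd] with ω hω
      set x := X ω
      have hax := abs_le.1 hω
      have ha : 0 ≤ (B - x) / (2 * B) := div_nonneg (by linarith) (by linarith)
      have hb : 0 ≤ (B + x) / (2 * B) := div_nonneg (by linarith) (by linarith)
      have hab : (B - x) / (2 * B) + (B + x) / (2 * B) = 1 := by field_simp; ring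
      have := convexOn_exp.2 (Set.mem_univ (-(l * B))) (Set.mem_univ (l * B)) ha hb hab
      have harg : ((B - x) / (2 * B)) • (-(l * B)) + ((B + x) / (2 * B)) • (l * B) = l * x := by
        simp only [smul_eq_mul]; field_simp; ring
      rw [harg] at this
      refine this.trans_eq ?_
      rw [Real.cosh_eq, Real.sinh_eq, smul_eq_mul, smul_eq_mul]
      field_simp
      ring
    have hintL : Integrable (fun ω => Real.exp (l * X ω)) P := by
      refine integrable_of_ae_bound (by fun_prop) (c := Real.exp (|l| * B)) ?_
      filter_upwards [hbd] with ω hω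
      rw [abs_of_nonneg (Real.exp_nonneg _), Real.exp_le_exp]
      calc l * X ω ≤ |l * X ω| := le_abs_self _
        _ = |l| * |X ω| := abs_mul _ _
        _ ≤ |l| * B := by gcongr
    have hintR : Integrable (fun ω => Real.cosh (l * B) + (X ω / B) * Real.sinh (l * B)) P := by
      exact (integrable_const _).add ((hXint.div_const B).mul_const _)
    calc mgf X P l ≤ ∫ ω, (Real.cosh (l * B) + (X ω / B) * Real.sinh (l * B)) ∂P :=
          integral_mono_ae hintL hintR key
      _ = Real.cosh (l * B) := by
          rw [integral_add (integrable_const _) ((hXint.div_const B).mul_const _),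
            integral_const, integral_mul_const, integral_div, hmean]
          simp
      _ ≤ Real.exp ((l * B) ^ 2 / 2) := Real.cosh_le_exp_half_sq _
      _ = Real.exp (l ^ 2 * B ^ 2 / 2) := by ring_nf

lemma chernoff_one_sided {ι : Type*} [IsProbabilityMeasure P] (Y : ι → Ω → ℝ)
    (hmeas : ∀ i, Measurable (Y i))
    (hindep : iIndepFun Y P)
    (B : ι → ℝ) (hB : ∀ i, 0 ≤ B i)
    (hbd : ∀ i, ∀ᵐ ω ∂P, |Y i ω| ≤ B i) (hmean : ∀ i, ∫ ω, Y i ω ∂P = 0)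
    (J : Finset ι) (ε : ℝ) (hε : 0 < ε) (hσ : 0 < ∑ i ∈ J, (B i) ^ 2) :
    P {ω | ε ≤ ∑ i ∈ J, Y i ω} ≤
      ENNReal.ofReal (Real.exp (-(ε ^ 2 / (2 * ∑ i ∈ J, (B i) ^ 2)))) := by
  set σ2 := ∑ i ∈ J, (B i) ^ 2 with hσ2
  set l := ε / σ2 with hl
  have hlpos : 0 < l := div_pos hε hσ
  have hbdJ : ∀ᵐ ω ∂P, ∀ i ∈ J, |Y i ω| ≤ B i :=
    (ae_ball_iff J.countable_toSet).2 fun i _ => hbd i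
  have h_int : Integrable (fun ω => Real.exp (l * ∑ i ∈ J, Y i ω)) P := by
    refine integrable_of_ae_bound (by fun_prop) (c := Real.exp (l * ∑ i ∈ J, B i)) ?_
    filter_upwards [hbdJ] with ω hω
    rw [abs_of_nonneg (Real.exp_nonneg _), Real.exp_le_exp]
    have h1 : ∑ i ∈ J, Y i ω ≤ ∑ i ∈ J, B i :=
      Finset.sum_le_sum fun i hi => (le_abs_self _).trans (hω i hi)
    exact mul_le_mul_of_nonneg_left h1 hlpos.le
  have hmgf : mgf (∑ i ∈ J, Y i) P l ≤ Real.exp (l ^ 2 * σ2 / 2) := by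
    rw [hindep.mgf_sum hmeas J]
    calc ∏ i ∈ J, mgf (Y i) P l ≤ ∏ i ∈ J, Real.exp (l ^ 2 * (B i) ^ 2 / 2) := by
          refine Finset.prod_le_prod (fun i _ => mgf_nonneg) ?_
          exact fun i _ => hoeffding_mgf (hmeas i) (hB i) (hbd i) (hmean i) l
      _ = Real.exp (l ^ 2 * σ2 / 2) := by
          rw [← Real.exp_sum]
          congr 1
          rw [hσ2, Finset.mul_sum, Finset.sum_div]
  have key := ProbabilityTheory.measure_ge_le_exp_mul_mgf (μ := P)
    (X := fun ω => ∑ i ∈ J, Y i ω) ε hlpos.le (by simpa using h_int)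
  have hS : (fun ω => ∑ i ∈ J, Y i ω) = ∑ i ∈ J, Y i := by
    ext ω; simp
  rw [hS] at key
  have h2 : Real.exp (-l * ε) * mgf (∑ i ∈ J, Y i) P l ≤
      Real.exp (-(ε ^ 2 / (2 * σ2))) := by
    calc Real.exp (-l * ε) * mgf (∑ i ∈ J, Y i) P l
        ≤ Real.exp (-l * ε) * Real.exp (l ^ 2 * σ2 / 2) := by
          exact mul_le_mul_of_nonneg_left hmgf (Real.exp_nonneg _)
      _ = Real.exp (-l * ε + l ^ 2 * σ2 / 2) := (Real.exp_add _ _).symm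
      _ = Real.exp (-(ε ^ 2 / (2 * σ2))) := by
          congr 1
          rw [hl]
          field_simp
          ring
  have h3 : (P {ω | ε ≤ ∑ i ∈ J, Y i ω}).toReal ≤ Real.exp (-(ε ^ 2 / (2 * σ2))) := by
    refine le_trans ?_ h2
    exact key
  calc P {ω | ε ≤ ∑ i ∈ J, Y i ω}
      = ENNReal.ofReal ((P {ω | ε ≤ ∑ i ∈ J, Y i ω}).toReal) :=
        (ENNReal.ofReal_toReal (measure_ne_top _ _)).symm
    _ ≤ ENNReal.ofReal (Real.exp (-(ε ^ 2 / (2 * σ2)))) := ENNReal.ofReal_le_ofReal h3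

lemma chernoff_two_sided {ι : Type*} [IsProbabilityMeasure P] (Y : ι → Ω → ℝ)
    (hmeas : ∀ i, Measurable (Y i))
    (hindep : iIndepFun Y P)
    (B : ι → ℝ) (hB : ∀ i, 0 ≤ B i)
    (hbd : ∀ i, ∀ᵐ ω ∂P, |Y i ω| ≤ B i) (hmean : ∀ i, ∫ ω, Y i ω ∂P = 0)
    (J : Finset ι) (ε : ℝ) (hε : 0 < ε) :
    P {ω | ε < |∑ i ∈ J, Y i ω|} ≤
      ENNReal.ofReal (2 * Real.exp (-(ε ^ 2 / (2 * ∑ i ∈ J, (B i) ^ 2)))) := by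
  set σ2 := ∑ i ∈ J, (B i) ^ 2 with hσ2
  have hσnn : 0 ≤ σ2 := Finset.sum_nonneg fun i _ => sq_nonneg _
  rcases hσnn.eq_or_lt with h0 | hσ
  · refine le_trans prob_le_one ?_
    rw [← h0]
    norm_num
  · set Z : ι → Ω → ℝ := fun i ω => -(Y i ω) with hZ
    have hmeasZ : ∀ i, Measurable (Z i) := fun i => (hmeas i).neg
    have hindepZ : iIndepFun Z P :=
      hindep.comp (fun _ => Neg.neg) (fun _ => measurable_neg)
    have hbdZ : ∀ i, ∀ᵐ ω ∂P, |Z i ω| ≤ B i := by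
      intro i; filter_upwards [hbd i] with ω hω; simpa [hZ] using hω
    have hmeanZ : ∀ i, ∫ ω, Z i ω ∂P = 0 := by
      intro i; simp [hZ, integral_neg, hmean i]
    have h1 := chernoff_one_sided Y hmeas hindep B hB hbd hmean J ε hε hσ
    have h2 := chernoff_one_sided Z hmeasZ hindepZ B hB hbdZ hmeanZ J ε hε hσ
    have hsub : {ω | ε < |∑ i ∈ J, Y i ω|} ⊆
        {ω | ε ≤ ∑ i ∈ J, Y i ω} ∪ {ω | ε ≤ ∑ i ∈ J, Z i ω} := by
      intro ω hω
      simp only [Set.mem_setOf_eq] at hω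
      rcases abs_cases (∑ i ∈ J, Y i ω) with ⟨h, _⟩ | ⟨h, _⟩
      · left; exact le_of_lt (h ▸ hω)
      · right
        simp only [Set.mem_setOf_eq, hZ, Finset.sum_neg_distrib]
        rw [h] at hω
        exact le_of_lt hω
    calc P {ω | ε < |∑ i ∈ J, Y i ω|}
        ≤ P ({ω | ε ≤ ∑ i ∈ J, Y i ω} ∪ {ω | ε ≤ ∑ i ∈ J, Z i ω}) := measure_mono hsub
      _ ≤ P {ω | ε ≤ ∑ i ∈ J, Y i ω} + P {ω | ε ≤ ∑ i ∈ J, Z i ω} := measure_union_le _ _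
      _ ≤ ENNReal.ofReal (Real.exp (-(ε ^ 2 / (2 * σ2)))) +
            ENNReal.ofReal (Real.exp (-(ε ^ 2 / (2 * σ2)))) := add_le_add h1 h2
      _ = ENNReal.ofReal (2 * Real.exp (-(ε ^ 2 / (2 * σ2)))) := by
          rw [← ENNReal.ofReal_add (Real.exp_nonneg _) (Real.exp_nonneg _)]
          ring_nf

lemma chernoff_nat [IsProbabilityMeasure P] (T : ℕ)
    (ξ : ℕ → Ω → ℝ) (hmeas : ∀ t, Measurable (ξ t)) {M : ℝ} (hM : 0 < M)
    (hmean : ∀ t ∈ Finset.Icc 1 T, ∫ ω, ξ t ω ∂P = 0)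
    (hbd : ∀ t ∈ Finset.Icc 1 T, ∀ᵐ ω ∂P, |ξ t ω| ≤ M)
    (hindep : ProbabilityTheory.iIndepFun
      (fun i : (Finset.Icc 1 T : Finset ℕ) => ξ i) P)
    (a : ℕ → ℝ) (J : Finset ℕ) (hJ : J ⊆ Finset.Icc 1 T) (ε : ℝ) (hε : 0 < ε) :
    P {ω | ε < |∑ s ∈ J, a s * ξ s ω|} ≤
      ENNReal.ofReal (2 * Real.exp (-(ε ^ 2 / (2 * ∑ s ∈ J, (a s * M) ^ 2)))) := by
  classical
  set Y : (Finset.Icc 1 T : Finset ℕ) → Ω → ℝ := fun i ω => a i.1 * ξ i.1 ω with hY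
  set B : (Finset.Icc 1 T : Finset ℕ) → ℝ := fun i => |a i.1| * M with hB'
  have hmeasY : ∀ i, Measurable (Y i) := fun i => (hmeas i.1).const_mul _
  have hindepY : iIndepFun Y P :=
    hindep.comp (fun i => fun x => a i.1 * x) (fun i => measurable_id.const_mul _)
  have hBnn : ∀ i, 0 ≤ B i := fun i => mul_nonneg (abs_nonneg _) hM.le
  have hbdY : ∀ i, ∀ᵐ ω ∂P, |Y i ω| ≤ B i := by
    intro i
    filter_upwards [hbd i.1 i.2] with ω hω
    rw [hY, hB']
    simp only [abs_mul]
    exact mul_le_mul_of_nonneg_left hω (abs_nonneg _)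
  have hmeanY : ∀ i, ∫ ω, Y i ω ∂P = 0 := by
    intro i
    rw [hY]
    simp only
    rw [integral_const_mul, hmean i.1 i.2, mul_zero]
  have key := chernoff_two_sided Y hmeasY hindepY B hBnn hbdY hmeanY
    (J.subtype (· ∈ Finset.Icc 1 T)) ε hε
  have hs1 : ∀ ω, ∑ i ∈ J.subtype (· ∈ Finset.Icc 1 T), Y i ω = ∑ s ∈ J, a s * ξ s ω := by
    intro ω
    exact Finset.sum_subtype_of_mem (fun s => a s * ξ s ω) (fun x hx => hJ hx)
  have hs2 : ∑ i ∈ J.subtype (· ∈ Finset.Icc 1 T), (B i) ^ 2 = ∑ s ∈ J, (a s * M) ^ 2 := by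
    rw [Finset.sum_subtype_of_mem (fun s => (|a s| * M) ^ 2) (fun x hx => hJ hx)]
    exact Finset.sum_congr rfl fun s _ => by rw [mul_pow, mul_pow, sq_abs]
  have hset : {ω | ε < |∑ i ∈ J.subtype (· ∈ Finset.Icc 1 T), Y i ω|} =
      {ω | ε < |∑ s ∈ J, a s * ξ s ω|} := by
    ext ω; simp [hs1 ω]
  rw [hset, hs2] at key
  exact key

/-- Least-squares slope estimator computed from observations q_1, …, q_{t−1}. -/
noncomputable def lsBeta (t : ℕ) (q : ℕ → ℝ) : ℝ :=
  (((t : ℝ) - 1) * ∑ s ∈ Finset.Icc 1 (t - 1), (s : ℝ) * q s -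
      (∑ s ∈ Finset.Icc 1 (t - 1), (s : ℝ)) * ∑ s ∈ Finset.Icc 1 (t - 1), q s) /
    (((t : ℝ) - 1) * ∑ s ∈ Finset.Icc 1 (t - 1), (s : ℝ) ^ 2 -
      (∑ s ∈ Finset.Icc 1 (t - 1), (s : ℝ)) ^ 2)

/-- Least-squares intercept estimator computed from observations q_1, …, q_{t−1}. -/
noncomputable def lsAlpha (t : ℕ) (q : ℕ → ℝ) : ℝ :=
  ((∑ s ∈ Finset.Icc 1 (t - 1), q s) - lsBeta t q * ∑ s ∈ Finset.Icc 1 (t - 1), (s : ℝ)) /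
    ((t : ℝ) - 1)

/-- Least-squares-based prediction at time t of the total demand Q = Σ_{s=1}^T q_s. -/
noncomputable def lsPred (T t : ℕ) (q : ℕ → ℝ) : ℝ :=
  (∑ s ∈ Finset.Icc 1 (t - 1), q s) +
    ∑ s ∈ Finset.Icc t T, (lsAlpha t q + lsBeta t q * s)

lemma sum_Icc_id_real (n : ℕ) : ∑ s ∈ Finset.Icc 1 n, (s : ℝ) = n * (n + 1) / 2 := by
  induction n with
  | zero => simp
  | succ n ih =>
    rw [Finset.sum_Icc_succ_top (by omega), ih]
    push_cast; ring

lemma sum_Icc_sq_real (n : ℕ) :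
    ∑ s ∈ Finset.Icc 1 n, (s : ℝ) ^ 2 = n * (n + 1) * (2 * n + 1) / 6 := by
  induction n with
  | zero => simp
  | succ n ih =>
    rw [Finset.sum_Icc_succ_top (by omega), ih]
    push_cast; ring

set_option maxHeartbeats 2000000 in
lemma det_bound_s16 (T t : ℕ) (ht4 : 4 ≤ t) (htT : t ≤ T) (M L : ℝ) {α β : ℝ}
    (hM : 0 < M) (hL : 0 < L) (ξr : ℕ → ℝ) (q : ℕ → ℝ)
    (hq : ∀ s ∈ Finset.Icc 1 T, q s = α + β * s + ξr s)
    (hU : |∑ s ∈ Finset.Icc 1 (t - 1), (s : ℝ) * ξr s| ≤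
      3 * M * (((t - 1 : ℕ) : ℝ) * Real.sqrt ((t - 1 : ℕ) : ℝ)) * Real.sqrt L)
    (hV : |∑ s ∈ Finset.Icc 1 (t - 1), ξr s| ≤
      3 * M * Real.sqrt ((t - 1 : ℕ) : ℝ) * Real.sqrt L)
    (hN : |∑ s ∈ Finset.Icc t T, ξr s| ≤ 3 * M * Real.sqrt T * Real.sqrt L) :
    |(∑ s ∈ Finset.Icc 1 T, q s) - lsPred T t q| ≤
      200 * M * (T : ℝ) ^ 2 * Real.sqrt L * ((t : ℝ) - 1) ^ (-(3 : ℝ) / 2) := by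
  have hn3 : 3 ≤ t - 1 := by omega
  set n := t - 1 with hn
  have htn : t = n + 1 := by omega
  have hcast : (t : ℝ) - 1 = (n : ℝ) := by rw [htn]; push_cast; ring
  set nr := (n : ℝ) with hnr
  have hnr3 : (3 : ℝ) ≤ nr := by rw [hnr]; exact_mod_cast hn3
  have hnr0 : (0 : ℝ) < nr := by linarith
  have hnrT : nr ≤ (T : ℝ) - 1 := by
    rw [hnr]; have : n ≤ T - 1 := by omega
    have hT1 : (1:ℕ) ≤ T := by omega
    calc (n:ℝ) ≤ ((T - 1 : ℕ) : ℝ) := by exact_mod_cast this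
      _ = (T:ℝ) - 1 := by push_cast [hT1]; ring
  have hT0 : (0:ℝ) < T := by exact_mod_cast (show 0 < T by omega)
  set S1 := ∑ s ∈ Finset.Icc 1 n, (s : ℝ) with hS1def
  set S2 := ∑ s ∈ Finset.Icc 1 n, (s : ℝ) ^ 2 with hS2def
  have hS1 : S1 = nr * (nr + 1) / 2 := by rw [hS1def, sum_Icc_id_real]
  have hS2 : S2 = nr * (nr + 1) * (2 * nr + 1) / 6 := by rw [hS2def, sum_Icc_sq_real]
  set D := nr * S2 - S1 ^ 2 with hDdef
  have hD : D = nr ^ 2 * (nr ^ 2 - 1) / 12 := by rw [hDdef, hS1, hS2]; ring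
  have h9 : 9 ≤ nr ^ 2 := by nlinarith only [hnr3]
  have hDpos : 0 < D := by rw [hD]; nlinarith only [h9, sq_nonneg (nr ^ 2 - 9)]
  set U := ∑ s ∈ Finset.Icc 1 n, (s : ℝ) * ξr s with hUdef
  set V := ∑ s ∈ Finset.Icc 1 n, ξr s with hVdef
  set N := ∑ s ∈ Finset.Icc t T, ξr s with hNdef
  set Bd := (nr * U - S1 * V) / D with hBddef
  have hq' : ∀ s ∈ Finset.Icc 1 n, q s = α + β * s + ξr s := by
    intro s hs
    refine hq s ?_
    simp only [Finset.mem_Icc] at hs ⊢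
    omega
  have hsumq : ∑ s ∈ Finset.Icc 1 n, q s = nr * α + β * S1 + V := by
    rw [Finset.sum_congr rfl hq', Finset.sum_add_distrib, Finset.sum_add_distrib,
      Finset.sum_const, ← Finset.mul_sum, Nat.card_Icc]
    simp only [nsmul_eq_mul]
    push_cast
    rw [← hS1def, ← hVdef, hnr]
  have hsumsq : ∑ s ∈ Finset.Icc 1 n, (s : ℝ) * q s = α * S1 + β * S2 + U := by
    have h1 : ∀ s ∈ Finset.Icc 1 n, (s : ℝ) * q s =
        α * (s : ℝ) + β * (s : ℝ) ^ 2 + (s : ℝ) * ξr s := by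
      intro s hs; rw [hq' s hs]; ring
    rw [Finset.sum_congr rfl h1, Finset.sum_add_distrib, Finset.sum_add_distrib,
      ← Finset.mul_sum, ← Finset.mul_sum, ← hS1def, ← hS2def, ← hUdef]
  have hIcc : Finset.Icc 1 (t - 1) = Finset.Icc 1 n := by rw [← hn]
  have hBeta : lsBeta t q = β + Bd := by
    rw [lsBeta, hIcc, ← hS1def, ← hS2def, hcast, hsumsq, hsumq, hBddef, ← hDdef]
    rw [div_eq_iff hDpos.ne', add_mul, div_mul_cancel₀ _ hDpos.ne', hDdef]
    ring
  have hAlpha : lsAlpha t q = α + (V - Bd * S1) / nr := by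
    rw [lsAlpha, hIcc, hcast, hsumq, hBeta]
    field_simp
    ring
  -- split the total sum
  have hsplit : ∀ f : ℕ → ℝ, ∑ s ∈ Finset.Icc 1 T, f s =
      ∑ s ∈ Finset.Icc 1 n, f s + ∑ s ∈ Finset.Icc t T, f s := by
    intro f
    rw [← Finset.sum_union ?_]
    · congr 1
      ext x
      simp only [Finset.mem_union, Finset.mem_Icc]
      omega
    · rw [Finset.disjoint_left]
      intro x hx hx'
      simp only [Finset.mem_Icc] at hx hx'
      omega
  set m := (Finset.Icc t T).card with hmdef
  set R := ∑ s ∈ Finset.Icc t T, (s : ℝ) with hRdef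
  have hqtail : ∀ s ∈ Finset.Icc t T, q s = α + β * s + ξr s := by
    intro s hs
    refine hq s ?_
    simp only [Finset.mem_Icc] at hs ⊢
    omega
  have hsumtail : ∑ s ∈ Finset.Icc t T, q s = m * α + β * R + N := by
    rw [Finset.sum_congr rfl hqtail, Finset.sum_add_distrib, Finset.sum_add_distrib,
      Finset.sum_const, ← Finset.mul_sum, ← hRdef, ← hNdef, ← hmdef]
    simp [nsmul_eq_mul]
  have hsumpred : ∑ s ∈ Finset.Icc t T, (lsAlpha t q + lsBeta t q * s) =
      m * lsAlpha t q + lsBeta t q * R := by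
    rw [Finset.sum_add_distrib, Finset.sum_const, ← Finset.mul_sum, ← hRdef, ← hmdef]
    simp [nsmul_eq_mul]
  have hdiff : (∑ s ∈ Finset.Icc 1 T, q s) - lsPred T t q =
      N - (m : ℝ) * ((V - Bd * S1) / nr) - Bd * R := by
    rw [lsPred, hIcc, hsplit q, hsumtail, hsumpred, hAlpha, hBeta]
    ring
  -- numeric bounds
  set W := M * Real.sqrt L with hWdef
  have hW0 : 0 ≤ W := by positivity
  set sq := Real.sqrt nr with hsqdef
  have hsq0 : 0 ≤ sq := Real.sqrt_nonneg _
  have hsq2 : sq ^ 2 = nr := Real.sq_sqrt hnr0.le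
  have hsqpos : 0 < sq := Real.sqrt_pos.2 hnr0
  set sT := Real.sqrt (T : ℝ) with hsTdef
  have hsT0 : 0 ≤ sT := Real.sqrt_nonneg _
  have hsT2 : sT ^ 2 = (T : ℝ) := Real.sq_sqrt hT0.le
  have hnrT' : nr ≤ (T : ℝ) := by linarith
  have hsqT : sq ≤ sT := Real.sqrt_le_sqrt hnrT'
  have hS1nn : 0 ≤ S1 := by rw [hS1]; nlinarith only [hnr3]
  have hS1b : S1 ≤ nr ^ 2 := by rw [hS1]; nlinarith only [hnr3, sq_nonneg (nr - 1)]
  have hD16 : nr ^ 4 ≤ 16 * D := by rw [hD]; nlinarith only [hnr3, sq_nonneg nr, sq_nonneg (nr^2 - 4)]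
  have hm : ((Finset.Icc t T).card : ℝ) ≤ (T : ℝ) := by
    rw [Nat.card_Icc]
    exact_mod_cast (show T + 1 - t ≤ T by omega)
  have hm0 : (0:ℝ) ≤ ((Finset.Icc t T).card : ℝ) := Nat.cast_nonneg _
  have hR0 : 0 ≤ R := by
    rw [hRdef]; exact Finset.sum_nonneg fun s _ => by positivity
  have hRb : R ≤ (T : ℝ) ^ 2 := by
    rw [hRdef]
    calc ∑ s ∈ Finset.Icc t T, (s : ℝ) ≤ ∑ s ∈ Finset.Icc t T, (T : ℝ) := by
          refine Finset.sum_le_sum fun s hs => ?_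
          simp only [Finset.mem_Icc] at hs
          exact_mod_cast hs.2
      _ = ((Finset.Icc t T).card : ℝ) * T := by rw [Finset.sum_const, nsmul_eq_mul]
      _ ≤ (T : ℝ) * T := by exact mul_le_mul_of_nonneg_right hm hT0.le
      _ = (T : ℝ) ^ 2 := by ring
  -- rewrite hypothesis bounds in terms of W, sq, sT
  have hUb : |U| ≤ 3 * W * (nr * sq) := by
    calc |U| ≤ 3 * M * (nr * sq) * Real.sqrt L := hU
      _ = 3 * W * (nr * sq) := by rw [hWdef]; ring
  have hVb : |V| ≤ 3 * W * sq := by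
    calc |V| ≤ 3 * M * sq * Real.sqrt L := hV
      _ = 3 * W * sq := by rw [hWdef]; ring
  have hNb : |N| ≤ 3 * W * sT := by
    calc |N| ≤ 3 * M * sT * Real.sqrt L := hN
      _ = 3 * W * sT := by rw [hWdef]; ring
  -- bound on |Bd| * (nr * sq)
  have habs0 : |nr * U - S1 * V| ≤ nr * |U| + S1 * |V| := by
    calc |nr * U - S1 * V| ≤ |nr * U| + |S1 * V| := abs_sub _ _
      _ = nr * |U| + S1 * |V| := by
          rw [abs_mul, abs_mul, abs_of_nonneg hnr0.le, abs_of_nonneg hS1nn]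
  have hBdn : |Bd| * (nr * sq) ≤ 96 * W := by
    rw [hBddef, abs_div, abs_of_pos hDpos, div_mul_eq_mul_div, div_le_iff₀ hDpos]
    have h1 : |nr * U - S1 * V| ≤ 6 * W * (nr ^ 2 * sq) := by
      calc |nr * U - S1 * V| ≤ nr * |U| + S1 * |V| := habs0
        _ ≤ nr * (3 * W * (nr * sq)) + nr ^ 2 * (3 * W * sq) := by
            refine add_le_add ?_ ?_
            · exact mul_le_mul_of_nonneg_left hUb hnr0.le
            · refine mul_le_mul hS1b hVb (abs_nonneg _) (by positivity)
        _ = 6 * W * (nr ^ 2 * sq) := by ring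
    calc |nr * U - S1 * V| * (nr * sq) ≤ (6 * W * (nr ^ 2 * sq)) * (nr * sq) := by
          exact mul_le_mul_of_nonneg_right h1 (by positivity)
      _ = 6 * W * nr ^ 3 * sq ^ 2 := by ring
      _ = 6 * W * nr ^ 4 := by rw [hsq2]; ring
      _ ≤ 96 * W * D := by nlinarith only [hD16, hW0]
  -- triangle inequality
  have hBd0 : 0 ≤ |Bd| := abs_nonneg _
  set mr := ((Finset.Icc t T).card : ℝ) with hmrdef
  have tri3 : ∀ a b c : ℝ, |a - b - c| ≤ |a| + |b| + |c| := by
    intro a b c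
    calc |a - b - c| ≤ |a - b| + |c| := abs_sub _ _
      _ ≤ |a| + |b| + |c| := by have := abs_sub a b; linarith
  have htri : |N - mr * ((V - Bd * S1) / nr) - Bd * R| ≤
      |N| + mr * ((|V| + |Bd| * S1) / nr) + |Bd| * R := by
    have h2 : |V - Bd * S1| ≤ |V| + |Bd| * S1 := by
      calc |V - Bd * S1| ≤ |V| + |Bd * S1| := abs_sub _ _
        _ = |V| + |Bd| * S1 := by rw [abs_mul, abs_of_nonneg hS1nn]
    have e1 : |mr * ((V - Bd * S1) / nr)| ≤ mr * ((|V| + |Bd| * S1) / nr) := by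
      rw [abs_mul, abs_div, abs_of_nonneg hm0, abs_of_pos hnr0]
      exact mul_le_mul_of_nonneg_left ((div_le_div_iff_of_pos_right hnr0).2 h2) hm0
    have e2 : |Bd * R| = |Bd| * R := by rw [abs_mul, abs_of_nonneg hR0]
    have := tri3 N (mr * ((V - Bd * S1) / nr)) (Bd * R)
    rw [e2] at this
    linarith
  -- term bounds
  have hT1b : |N| * (nr * sq) ≤ 3 * W * ((T : ℝ) ^ 2) := by
    have h1 : nr * sq ≤ (T : ℝ) * sT := mul_le_mul hnrT' hsqT hsq0 hT0.le
    calc |N| * (nr * sq) ≤ (3 * W * sT) * ((T : ℝ) * sT) :=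
          mul_le_mul hNb h1 (mul_nonneg hnr0.le hsq0)
            (mul_nonneg (mul_nonneg (by norm_num) hW0) hsT0)
      _ = 3 * W * (T : ℝ) * sT ^ 2 := by ring
      _ = 3 * W * ((T : ℝ) ^ 2) := by rw [hsT2]; ring
  have hT3b : (|Bd| * R) * (nr * sq) ≤ 96 * W * ((T : ℝ) ^ 2) := by
    calc (|Bd| * R) * (nr * sq) = (|Bd| * (nr * sq)) * R := by ring
      _ ≤ (96 * W) * ((T : ℝ) ^ 2) := mul_le_mul hBdn hRb hR0
          (mul_nonneg (by norm_num) hW0)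
      _ = 96 * W * ((T : ℝ) ^ 2) := by ring
  have hT2b : (mr * ((|V| + |Bd| * S1) / nr)) * (nr * sq) ≤ 99 * W * ((T : ℝ) ^ 2) := by
    have e : (mr * ((|V| + |Bd| * S1) / nr)) * (nr * sq) =
        mr * (|V| * sq) + mr * (|Bd| * S1 * sq) := by
      field_simp
    have h1 : mr * (|V| * sq) ≤ (T : ℝ) * (3 * W * nr) := by
      have h1a : |V| * sq ≤ (3 * W * sq) * sq := mul_le_mul_of_nonneg_right hVb hsq0
      calc mr * (|V| * sq) ≤ (T : ℝ) * ((3 * W * sq) * sq) :=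
            mul_le_mul hm h1a (mul_nonneg (abs_nonneg _) hsq0) hT0.le
        _ = (T : ℝ) * (3 * W * sq ^ 2) := by ring
        _ = (T : ℝ) * (3 * W * nr) := by rw [hsq2]
    have h2 : mr * (|Bd| * S1 * sq) ≤ (T : ℝ) * (96 * W * nr) := by
      have e2 : |Bd| * S1 * sq ≤ (|Bd| * (nr * sq)) * nr := by
        calc |Bd| * S1 * sq ≤ |Bd| * nr ^ 2 * sq :=
              mul_le_mul_of_nonneg_right (mul_le_mul_of_nonneg_left hS1b hBd0) hsq0
          _ = (|Bd| * (nr * sq)) * nr := by ring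
      have e3 : (|Bd| * (nr * sq)) * nr ≤ (96 * W) * nr :=
        mul_le_mul_of_nonneg_right hBdn hnr0.le
      calc mr * (|Bd| * S1 * sq) ≤ (T : ℝ) * ((96 * W) * nr) :=
            mul_le_mul hm (e2.trans e3)
              (mul_nonneg (mul_nonneg hBd0 hS1nn) hsq0) hT0.le
        _ = (T : ℝ) * (96 * W * nr) := by ring
    have hTn : (T : ℝ) * nr ≤ (T : ℝ) ^ 2 := by nlinarith only [hnrT', hT0]
    rw [e]
    nlinarith only [h1, h2, hTn, hW0]
  have hgoal2 : |N - mr * ((V - Bd * S1) / nr) - Bd * R| * (nr * sq) ≤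
      200 * W * ((T : ℝ) ^ 2) := by
    have hWT : 0 ≤ W * ((T : ℝ) ^ 2) := mul_nonneg hW0 (sq_nonneg _)
    calc |N - mr * ((V - Bd * S1) / nr) - Bd * R| * (nr * sq)
        ≤ (|N| + mr * ((|V| + |Bd| * S1) / nr) + |Bd| * R) * (nr * sq) :=
          mul_le_mul_of_nonneg_right htri (mul_nonneg hnr0.le hsq0)
      _ = |N| * (nr * sq) + (mr * ((|V| + |Bd| * S1) / nr)) * (nr * sq) +
            (|Bd| * R) * (nr * sq) := by ring
      _ ≤ 200 * W * ((T : ℝ) ^ 2) := by linarith only [hT1b, hT2b, hT3b, hWT]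
  have hrpow : ((t : ℝ) - 1) ^ (-(3 : ℝ) / 2) = 1 / (nr * sq) := by
    rw [hcast, show (-(3 : ℝ) / 2) = -(3 / 2) by ring, Real.rpow_neg hnr0.le,
      show (3 / 2 : ℝ) = 1 + 1 / 2 by ring, Real.rpow_add hnr0, Real.rpow_one,
      show nr ^ ((1 : ℝ) / 2) = sq by rw [hsqdef, Real.sqrt_eq_rpow], one_div]
  rw [hdiff, hrpow]
  calc |N - mr * ((V - Bd * S1) / nr) - Bd * R|
      ≤ (200 * W * ((T : ℝ) ^ 2)) / (nr * sq) := by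
        rw [le_div_iff₀ (mul_pos hnr0 hsqpos)]
        exact hgoal2
    _ = 200 * M * (T : ℝ) ^ 2 * Real.sqrt L * (1 / (nr * sq)) := by
        rw [hWdef]
        ring

/-- Accuracy of the least-squares prediction oracle for the linearly
increasing demand model q_t = α + β t + ξ_t with independent, zero-mean noise bounded
by M: with probability at least 1 − Tδ, simultaneously for all 4 ≤ t ≤ T,
|Q − Q̂ₜ| ≤ C M T² √(log(1/δ)) (t−1)^{−3/2}. -/
theorem linear_demand_prediction_accuracy :
    ∃ C : ℝ, 0 < C ∧
      ∀ (T : ℕ), 4 ≤ T → ∀ (M α β δ : ℝ), 0 < M → M < α → 0 < β →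
      δ ∈ Set.Ioo (0 : ℝ) 1 →
      ∀ (Ω : Type) (mΩ : MeasurableSpace Ω) (P : Measure Ω), IsProbabilityMeasure P →
      ∀ (ξ : ℕ → Ω → ℝ), (∀ t, Measurable (ξ t)) →
      (∀ t ∈ Finset.Icc 1 T, ∫ ω, ξ t ω ∂P = 0) →
      (∀ t ∈ Finset.Icc 1 T, ∀ᵐ ω ∂P, |ξ t ω| ≤ M) →
      ProbabilityTheory.iIndepFun
        (fun i : (Finset.Icc 1 T : Finset ℕ) => ξ i) P →
      ∀ (q : Ω → ℕ → ℝ), (∀ ω, ∀ t ∈ Finset.Icc 1 T, q ω t = α + β * t + ξ t ω) →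
      ENNReal.ofReal (1 - T * δ) ≤
        P {ω | ∀ t, 4 ≤ t → t ≤ T →
          |(∑ s ∈ Finset.Icc 1 T, q ω s) - lsPred T t (q ω)| ≤
            C * M * (T : ℝ) ^ 2 * Real.sqrt (Real.log (1 / δ)) *
              ((t : ℝ) - 1) ^ (-(3 : ℝ) / 2)} := by
  classical
  refine ⟨200, by norm_num, ?_⟩
  intro T hT4 M α β δ hM hMα hβ hδ Ω mΩ P hP ξ hmeas hmean hbd hindep q hq
  rcases le_or_gt (1 - T * δ) 0 with hTδ | hTδ
  · rw [ENNReal.ofReal_of_nonpos hTδ]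
    exact zero_le
  · have hδ0 : 0 < δ := hδ.1
    have hδ1 : δ < 1 := hδ.2
    have hT4R : (4 : ℝ) ≤ (T : ℝ) := by exact_mod_cast hT4
    have hδ4 : δ ≤ 1 / 4 := by nlinarith only [hTδ, hT4R, hδ0]
    set L := Real.log (1 / δ) with hLdef
    have hLpos : 0 < L := Real.log_pos (one_lt_one_div hδ0 hδ1)
    have hsL2 : Real.sqrt L ^ 2 = L := Real.sq_sqrt hLpos.le
    have hsL0 : 0 < Real.sqrt L := Real.sqrt_pos.2 hLpos
    -- master numeric bound
    have hED : 2 * Real.exp (-(9 * L / 2)) ≤ δ / 3 := by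
      have hlog : L = -Real.log δ := by rw [hLdef, one_div, Real.log_inv]
      have he : Real.exp (-(9 * L / 2)) = δ ^ ((9 : ℝ) / 2) := by
        rw [Real.rpow_def_of_pos hδ0, hlog]
        congr 1
        ring
      have hsplit : δ ^ ((9 : ℝ) / 2) = δ * (δ ^ (3 : ℕ) * δ ^ ((1 : ℝ) / 2)) := by
        have e1 : δ ^ ((9 : ℝ) / 2) = δ ^ (1 : ℝ) * δ ^ ((7 : ℝ) / 2) := by
          rw [← Real.rpow_add hδ0]; norm_num
        have e2 : δ ^ ((7 : ℝ) / 2) = δ ^ ((3 : ℝ)) * δ ^ ((1 : ℝ) / 2) := by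
          rw [← Real.rpow_add hδ0]; norm_num
        have e3 : δ ^ ((3 : ℝ)) = δ ^ (3 : ℕ) := by
          rw [← Real.rpow_natCast δ 3]; norm_num
        rw [e1, e2, e3, Real.rpow_one]
      have h3 : δ ^ (3 : ℕ) ≤ (1 / 4 : ℝ) ^ (3 : ℕ) := pow_le_pow_left₀ hδ0.le hδ4 3
      have hhalf : δ ^ ((1 : ℝ) / 2) ≤ 1 := Real.rpow_le_one hδ0.le hδ1.le (by norm_num)
      have hp0 : 0 < δ ^ ((1 : ℝ) / 2) := Real.rpow_pos_of_pos hδ0 _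
      have hp3 : 0 < δ ^ (3 : ℕ) := pow_pos hδ0 3
      rw [he, hsplit]
      have : δ ^ (3 : ℕ) * δ ^ ((1 : ℝ) / 2) ≤ 1 / 64 := by
        calc δ ^ (3 : ℕ) * δ ^ ((1 : ℝ) / 2) ≤ (1 / 64 : ℝ) * 1 := by
              refine mul_le_mul ?_ hhalf hp0.le (by norm_num)
              calc δ ^ (3 : ℕ) ≤ (1 / 4 : ℝ) ^ (3 : ℕ) := h3
                _ = 1 / 64 := by norm_num
          _ = 1 / 64 := by norm_num
      nlinarith only [this, hδ0, hp0, hp3]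
    -- generic event bound
    have eventBound : ∀ (J : Finset ℕ), J ⊆ Finset.Icc 1 T → ∀ (a : ℕ → ℝ) (ε : ℝ), 0 < ε →
        0 < ∑ s ∈ J, (a s * M) ^ 2 →
        9 * L / 2 * (2 * ∑ s ∈ J, (a s * M) ^ 2) ≤ ε ^ 2 →
        P {ω | ε < |∑ s ∈ J, a s * ξ s ω|} ≤ ENNReal.ofReal (δ / 3) := by
      intro J hJ a ε hε hpos hvar
      refine (chernoff_nat T ξ hmeas hM hmean hbd hindep a J hJ ε hε).trans ?_
      apply ENNReal.ofReal_le_ofReal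
      have h2pos : 0 < 2 * ∑ s ∈ J, (a s * M) ^ 2 := by linarith
      have hmono : Real.exp (-(ε ^ 2 / (2 * ∑ s ∈ J, (a s * M) ^ 2))) ≤
          Real.exp (-(9 * L / 2)) := by
        rw [Real.exp_le_exp, neg_le_neg_iff]
        rw [le_div_iff₀ h2pos]
        exact hvar
      calc 2 * Real.exp (-(ε ^ 2 / (2 * ∑ s ∈ J, (a s * M) ^ 2)))
          ≤ 2 * Real.exp (-(9 * L / 2)) := by linarith
        _ ≤ δ / 3 := hED
    -- define the bad sets
    set badU : ℕ → Set Ω := fun t => {ω | 3 * M * (((t - 1 : ℕ) : ℝ) *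
      Real.sqrt ((t - 1 : ℕ) : ℝ)) * Real.sqrt L <
      |∑ s ∈ Finset.Icc 1 (t - 1), (s : ℝ) * ξ s ω|} with hbadU
    set badV : ℕ → Set Ω := fun t => {ω | 3 * M * Real.sqrt ((t - 1 : ℕ) : ℝ) *
      Real.sqrt L < |∑ s ∈ Finset.Icc 1 (t - 1), ξ s ω|} with hbadV
    set badN : ℕ → Set Ω := fun t => {ω | 3 * M * Real.sqrt (T : ℝ) *
      Real.sqrt L < |∑ s ∈ Finset.Icc t T, ξ s ω|} with hbadN
    set bad : Set Ω := ⋃ t ∈ Finset.Icc 4 T, (badU t ∪ badV t ∪ badN t) with hbad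
    -- per-t facts
    have perT : ∀ t ∈ Finset.Icc 4 T,
        P (badU t ∪ badV t ∪ badN t) ≤ ENNReal.ofReal δ := by
      intro t ht
      simp only [Finset.mem_Icc] at ht
      obtain ⟨ht4, htT⟩ := ht
      have hn3 : 3 ≤ t - 1 := by omega
      set n := t - 1 with hn
      have hnn3 : (3 : ℝ) ≤ ((n : ℕ) : ℝ) := by exact_mod_cast hn3
      set nn := ((n : ℕ) : ℝ) with hnn
      have hnn0 : 0 < nn := by linarith
      have hsqn : Real.sqrt nn ^ 2 = nn := Real.sq_sqrt hnn0.le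
      have hsqn0 : 0 < Real.sqrt nn := Real.sqrt_pos.2 hnn0
      have hJ1 : Finset.Icc 1 n ⊆ Finset.Icc 1 T := by
        intro x hx
        simp only [Finset.mem_Icc] at hx ⊢
        omega
      have hJ2 : Finset.Icc t T ⊆ Finset.Icc 1 T := by
        intro x hx
        simp only [Finset.mem_Icc] at hx ⊢
        omega
      -- U event
      have hsumU : ∑ s ∈ Finset.Icc 1 n, ((s : ℝ) * M) ^ 2 =
          M ^ 2 * ∑ s ∈ Finset.Icc 1 n, (s : ℝ) ^ 2 := by
        rw [Finset.mul_sum]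
        exact Finset.sum_congr rfl fun s _ => by ring
      have hS2f : ∑ s ∈ Finset.Icc 1 n, (s : ℝ) ^ 2 = nn * (nn + 1) * (2 * nn + 1) / 6 :=
        sum_Icc_sq_real n
      have h0nn : (0 : ℝ) ≤ nn := by linarith
      have h3nn : (0 : ℝ) ≤ nn - 3 := by linarith
      have hS2pos : 0 < ∑ s ∈ Finset.Icc 1 n, (s : ℝ) ^ 2 := by
        rw [hS2f]
        nlinarith only [hnn3, mul_nonneg (mul_nonneg h0nn h0nn) h0nn, mul_nonneg h0nn h0nn]
      have hS2le : ∑ s ∈ Finset.Icc 1 n, (s : ℝ) ^ 2 ≤ nn ^ 3 := by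
        rw [hS2f]
        nlinarith only [hnn3, mul_nonneg (mul_nonneg h0nn h0nn) h3nn, mul_nonneg h0nn h3nn,
          mul_nonneg h0nn h0nn]
      have hPU : P (badU t) ≤ ENNReal.ofReal (δ / 3) := by
        rw [hbadU]
        refine eventBound (Finset.Icc 1 n) hJ1 (fun s => (s : ℝ))
          (3 * M * (nn * Real.sqrt nn) * Real.sqrt L) (by positivity) ?_ ?_
        · rw [hsumU]; positivity
        · rw [hsumU]
          have expand : (3 * M * (nn * Real.sqrt nn) * Real.sqrt L) ^ 2 =
              9 * M ^ 2 * nn ^ 2 * nn * L := by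
            rw [show (3 * M * (nn * Real.sqrt nn) * Real.sqrt L) ^ 2 =
              9 * M ^ 2 * nn ^ 2 * (Real.sqrt nn ^ 2) * (Real.sqrt L ^ 2) by ring,
              hsqn, hsL2]
          rw [expand]
          nlinarith only [mul_nonneg (mul_nonneg (sub_nonneg.2 hS2le) hLpos.le) (sq_nonneg M)]
      -- V event
      have hsumV : ∑ s ∈ Finset.Icc 1 n, ((1 : ℝ) * M) ^ 2 = nn * M ^ 2 := by
        rw [Finset.sum_const, Nat.card_Icc, nsmul_eq_mul]
        push_cast [hnn]
        ring
      have hPV : P (badV t) ≤ ENNReal.ofReal (δ / 3) := by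
        have hset : badV t = {ω | 3 * M * Real.sqrt nn * Real.sqrt L <
            |∑ s ∈ Finset.Icc 1 n, (1 : ℝ) * ξ s ω|} := by
          rw [hbadV]
          simp [one_mul]
          rfl
        rw [hset]
        refine eventBound (Finset.Icc 1 n) hJ1 (fun _ => (1 : ℝ))
          (3 * M * Real.sqrt nn * Real.sqrt L) (by positivity) ?_ ?_
        · rw [hsumV]; positivity
        · rw [hsumV]
          have expand : (3 * M * Real.sqrt nn * Real.sqrt L) ^ 2 =
              9 * M ^ 2 * nn * L := by
            rw [show (3 * M * Real.sqrt nn * Real.sqrt L) ^ 2 =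
              9 * M ^ 2 * (Real.sqrt nn ^ 2) * (Real.sqrt L ^ 2) by ring, hsqn, hsL2]
          rw [expand]
          nlinarith only [hLpos, sq_nonneg M, hnn3]
      -- N event
      have hTpos : (0 : ℝ) < T := by linarith
      have hsqT : Real.sqrt (T : ℝ) ^ 2 = (T : ℝ) := Real.sq_sqrt hTpos.le
      have hm1 : 1 ≤ T + 1 - t := by omega
      have hsumN : ∑ s ∈ Finset.Icc t T, ((1 : ℝ) * M) ^ 2 =
          ((T + 1 - t : ℕ) : ℝ) * M ^ 2 := by
        rw [Finset.sum_const, Nat.card_Icc, nsmul_eq_mul]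
        ring
      have hcard1 : (1 : ℝ) ≤ ((T + 1 - t : ℕ) : ℝ) := by exact_mod_cast hm1
      have hcardT : ((T + 1 - t : ℕ) : ℝ) ≤ (T : ℝ) := by
        exact_mod_cast (show T + 1 - t ≤ T by omega)
      have hPN : P (badN t) ≤ ENNReal.ofReal (δ / 3) := by
        have hset : badN t = {ω | 3 * M * Real.sqrt (T : ℝ) * Real.sqrt L <
            |∑ s ∈ Finset.Icc t T, (1 : ℝ) * ξ s ω|} := by
          rw [hbadN]
          simp [one_mul]
        rw [hset]
        refine eventBound (Finset.Icc t T) hJ2 (fun _ => (1 : ℝ))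
          (3 * M * Real.sqrt (T : ℝ) * Real.sqrt L) (by positivity) ?_ ?_
        · rw [hsumN]; positivity
        · rw [hsumN]
          have expand : (3 * M * Real.sqrt (T : ℝ) * Real.sqrt L) ^ 2 =
              9 * M ^ 2 * (T : ℝ) * L := by
            rw [show (3 * M * Real.sqrt (T : ℝ) * Real.sqrt L) ^ 2 =
              9 * M ^ 2 * (Real.sqrt (T : ℝ) ^ 2) * (Real.sqrt L ^ 2) by ring, hsqT, hsL2]
          rw [expand]
          nlinarith only [mul_nonneg (mul_nonneg (sub_nonneg.2 hcardT) hLpos.le) (sq_nonneg M)]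
      calc P (badU t ∪ badV t ∪ badN t) ≤ P (badU t ∪ badV t) + P (badN t) :=
            measure_union_le _ _
        _ ≤ P (badU t) + P (badV t) + P (badN t) :=
            add_le_add_left (measure_union_le _ _) _
        _ ≤ ENNReal.ofReal (δ / 3) + ENNReal.ofReal (δ / 3) + ENNReal.ofReal (δ / 3) :=
            add_le_add (add_le_add hPU hPV) hPN
        _ = ENNReal.ofReal δ := by
            rw [← ENNReal.ofReal_add (by positivity) (by positivity),
              ← ENNReal.ofReal_add (by positivity) (by positivity),
              show δ / 3 + δ / 3 + δ / 3 = δ by ring]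
    -- union bound
    have hPbad : P bad ≤ ENNReal.ofReal (T * δ) := by
      calc P bad ≤ ∑ t ∈ Finset.Icc 4 T, P (badU t ∪ badV t ∪ badN t) :=
            measure_biUnion_finset_le _ _
        _ ≤ ∑ t ∈ Finset.Icc 4 T, ENNReal.ofReal δ := Finset.sum_le_sum perT
        _ = ((Finset.Icc 4 T).card : ENNReal) * ENNReal.ofReal δ := by
            rw [Finset.sum_const, nsmul_eq_mul]
        _ ≤ (T : ENNReal) * ENNReal.ofReal δ := by
            refine mul_le_mul_left ?_ _
            exact_mod_cast (show (Finset.Icc 4 T).card ≤ T by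
              rw [Nat.card_Icc]; omega)
        _ = ENNReal.ofReal (T * δ) := by
            rw [ENNReal.ofReal_mul (by positivity), ENNReal.ofReal_natCast]
    -- measurability of bad
    have hbadmeas : MeasurableSet bad := by
      rw [hbad]
      refine Finset.measurableSet_biUnion _ fun t _ => ?_
      refine (MeasurableSet.union ?_ ?_).union ?_
      · exact measurableSet_lt measurable_const
          ((Finset.measurable_sum _ fun s _ => (hmeas s).const_mul _).abs)
      · exact measurableSet_lt measurable_const
          ((Finset.measurable_sum _ fun s _ => hmeas s).abs)
      · exact measurableSet_lt measurable_const
          ((Finset.measurable_sum _ fun s _ => hmeas s).abs)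
    -- good event implies the bound
    have hsubset : badᶜ ⊆ {ω | ∀ t, 4 ≤ t → t ≤ T →
        |(∑ s ∈ Finset.Icc 1 T, q ω s) - lsPred T t (q ω)| ≤
          (200 : ℝ) * M * (T : ℝ) ^ 2 * Real.sqrt (Real.log (1 / δ)) *
            ((t : ℝ) - 1) ^ (-(3 : ℝ) / 2)} := by
      intro ω hω
      intro t ht4 htT
      have htmem : t ∈ Finset.Icc 4 T := by simp only [Finset.mem_Icc]; omega
      rw [hbad] at hω
      simp only [Set.compl_iUnion, Set.mem_iInter] at hω
      have hω' := hω t htmem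
      simp only [Set.compl_union, Set.mem_inter_iff, Set.mem_compl_iff,
        Set.mem_setOf_eq, not_lt, hbadU, hbadV, hbadN] at hω'
      obtain ⟨⟨hU, hV⟩, hN⟩ := hω'
      rw [← hLdef]
      exact det_bound_s16 T t ht4 htT M L hM hLpos (fun s => ξ s ω) (q ω)
        (hq ω) hU hV hN
    -- conclude
    calc ENNReal.ofReal (1 - T * δ)
        = 1 - ENNReal.ofReal (T * δ) := by
          rw [ENNReal.ofReal_sub 1 (by positivity), ENNReal.ofReal_one]
      _ ≤ 1 - P bad := tsub_le_tsub_left hPbad 1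
      _ = P badᶜ := (prob_compl_eq_one_sub hbadmeas).symm
      _ ≤ _ := measure_mono hsubset
end
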